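/- arXiv:2511.03864 — 5 statements merged into one kernel-verified Lean document; each statement's English description precedes it below -/
import Mathlib

section
/- For every two positive integers μ and t, there is an integer K(μ,t) such that every K_{t,t}-free graph G whose induced matching treewidth is at most μ has tree-independence number strictly less than K(μ,t). -/
/-- A set of vertices is independent: pairwise nonadjacent. -/
def IsIndep {V : Type*} (G : SimpleGraph V) (s : Set V) : Prop :=
  s.Pairwise fun u v => ¬ G.Adj u v

/-- Independence number of the subgraph of `G` induced by `X`. -/
noncomputable def indepNumOn {V : Type*} (G : SimpleGraph V) (X : Set V) : ℕ :=
  sSup {k | ∃ s : Finset V, ↑s ⊆ X ∧ IsIndep G ↑s ∧ s.card = k}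

/-- `M` is a matching in `G`: adjacent endpoints, pairwise vertex-disjoint edges. -/
def IsMatching' {V : Type*} (G : SimpleGraph V) (M : Finset (V × V)) : Prop :=
  (∀ e ∈ M, G.Adj e.1 e.2) ∧
  ∀ e ∈ M, ∀ f ∈ M, e ≠ f →
    e.1 ≠ f.1 ∧ e.1 ≠ f.2 ∧ e.2 ≠ f.1 ∧ e.2 ≠ f.2

/-- `M` is an induced matching in `G`. -/
def IsInducedMatching {V : Type*} (G : SimpleGraph V) (M : Finset (V × V)) : Prop :=
  IsMatching' G M ∧
  ∀ e ∈ M, ∀ f ∈ M, e ≠ f →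
    ¬ G.Adj e.1 f.1 ∧ ¬ G.Adj e.1 f.2 ∧ ¬ G.Adj e.2 f.1 ∧ ¬ G.Adj e.2 f.2

/-- `μ(G, X)`: maximum size of an induced matching in `G` every edge of which
has an endpoint in `X`. -/
noncomputable def indMatchNumOn {V : Type*} (G : SimpleGraph V) (X : Set V) : ℕ :=
  sSup {k | ∃ M : Finset (V × V), IsInducedMatching G M ∧
    (∀ e ∈ M, e.1 ∈ X ∨ e.2 ∈ X) ∧ M.card = k}

/-- `(T, bag)` is a tree decomposition of `G`. -/
structure IsTreeDecomp {V : Type*} (G : SimpleGraph V) {ι : Type}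
    (T : SimpleGraph ι) (bag : ι → Set V) : Prop where
  isTree : T.IsTree
  edge_mem : ∀ ⦃u v : V⦄, G.Adj u v → ∃ x, u ∈ bag x ∧ v ∈ bag x
  support_connected : ∀ v : V, (T.induce {x | v ∈ bag x}).Connected

/-- A (bundled) tree decomposition of `G`. -/
structure TreeDecomp {V : Type*} (G : SimpleGraph V) where
  ι : Type
  tree : SimpleGraph ι
  bag : ι → Set V
  is_td : IsTreeDecomp G tree bag

/-- Independence number of a tree decomposition. -/
noncomputable def TreeDecomp.alpha {V : Type*} {G : SimpleGraph V} (D : TreeDecomp G) : ℕ :=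
  sSup {k | ∃ x : D.ι, k = indepNumOn G (D.bag x)}

/-- Induced matching number of a tree decomposition. -/
noncomputable def TreeDecomp.mu {V : Type*} {G : SimpleGraph V} (D : TreeDecomp G) : ℕ :=
  sSup {k | ∃ x : D.ι, k = indMatchNumOn G (D.bag x)}

/-- Tree-independence number of `G`. -/
noncomputable def treeIndepNum {V : Type*} (G : SimpleGraph V) : ℕ :=
  sInf {k | ∃ D : TreeDecomp G, D.alpha = k}

/-- Induced matching treewidth of `G`. -/
noncomputable def imTreewidth {V : Type*} (G : SimpleGraph V) : ℕ :=
  sInf {k | ∃ D : TreeDecomp G, D.mu = k}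

/-- `G` has no induced subgraph isomorphic to `K_{t,t}`. -/
def KttFree {V : Type*} (G : SimpleGraph V) (t : ℕ) : Prop :=
  IsEmpty (completeBipartiteGraph (Fin t) (Fin t) ↪g G)

/-- `G` contains `K_{t,t}` as a (not necessarily induced) subgraph. -/
def HasKttSubgraph {V : Type*} (G : SimpleGraph V) (t : ℕ) : Prop :=
  ∃ A B : Finset V, Disjoint A B ∧ A.card = t ∧ B.card = t ∧
    ∀ a ∈ A, ∀ b ∈ B, G.Adj a b

/-- `G` is bipartite: its vertex set is the union of two independent sets. -/
def IsBipartite {V : Type*} (G : SimpleGraph V) : Prop :=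
  ∃ A B : Set V, A ∪ B = Set.univ ∧ IsIndep G A ∧ IsIndep G B

/-- `N(X)`: vertices outside `X` adjacent to at least one vertex of `X`. -/
def nbhd {V : Type*} (G : SimpleGraph V) (X : Set V) : Set V :=
  {v | v ∉ X ∧ ∃ u ∈ X, G.Adj u v}


namespace Stmt1Aux
open SimpleGraph Finset
open scoped Classical
set_option linter.unusedSectionVars false
set_option linter.unnecessarySeqFocus false

/-! ### Ramsey numbers (3 colours), from scratch -/

def R3 : ℕ → ℕ → ℕ → ℕ
  | 0, _, _ => 0
  | _+1, 0, _ => 0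
  | _+1, _+1, 0 => 0
  | a+1, b+1, c+1 =>
      R3 a (b+1) (c+1) + R3 (a+1) b (c+1) + R3 (a+1) (b+1) c + 1
  termination_by a b c => a + b + c

def Mono3 {α : Type*} [LinearOrder α] (col : α → α → Fin 3) (k : Fin 3) (M : Finset α) : Prop :=
  ∀ x ∈ M, ∀ y ∈ M, x < y → col x y = k

lemma mono3_empty {α : Type*} [LinearOrder α] (col : α → α → Fin 3) (k : Fin 3) :
    Mono3 col k ∅ := by
  intro u hu
  exact absurd hu (Finset.notMem_empty u)

theorem ramsey3 {α : Type*} [LinearOrder α] (col : α → α → Fin 3) :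
    ∀ (a b c : ℕ) (S : Finset α), R3 a b c ≤ S.card →
      ∃ M ⊆ S, (M.card = a ∧ Mono3 col 0 M) ∨ (M.card = b ∧ Mono3 col 1 M) ∨
        (M.card = c ∧ Mono3 col 2 M) := by
  classical
  have key : ∀ (n a b c : ℕ), a + b + c ≤ n → ∀ S : Finset α, R3 a b c ≤ S.card →
      ∃ M ⊆ S, (M.card = a ∧ Mono3 col 0 M) ∨ (M.card = b ∧ Mono3 col 1 M) ∨
        (M.card = c ∧ Mono3 col 2 M) := by
    intro n
    induction n with
    | zero =>
      intro a b c habc S _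
      have ha : a = 0 := by omega
      exact ⟨∅, Finset.empty_subset _, Or.inl ⟨by simp [ha], mono3_empty col 0⟩⟩
    | succ n ih =>
      intro a b c habc S hS
      rcases a with _ | a
      · exact ⟨∅, Finset.empty_subset _, Or.inl ⟨by simp, mono3_empty col 0⟩⟩
      rcases b with _ | b
      · exact ⟨∅, Finset.empty_subset _, Or.inr (Or.inl ⟨by simp, mono3_empty col 1⟩)⟩
      rcases c with _ | c
      · exact ⟨∅, Finset.empty_subset _, Or.inr (Or.inr ⟨by simp, mono3_empty col 2⟩)⟩
      have hR : R3 (a+1) (b+1) (c+1) =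
          R3 a (b+1) (c+1) + R3 (a+1) b (c+1) + R3 (a+1) (b+1) c + 1 := by
        rw [R3]
      have hSpos : 0 < S.card := by omega
      have hSne : S.Nonempty := Finset.card_pos.1 hSpos
      set x := S.min' hSne with hx
      have hxS : x ∈ S := S.min'_mem hSne
      set S' := S.erase x with hS'
      have hcardS' : S'.card = S.card - 1 := Finset.card_erase_of_mem hxS
      have hxlt : ∀ u ∈ S', x < u := by
        intro u hu
        have h1 : u ∈ S := Finset.mem_of_mem_erase hu
        have h2 : u ≠ x := Finset.ne_of_mem_erase hu
        exact lt_of_le_of_ne (S.min'_le u h1) (Ne.symm h2)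
      set P0 := S'.filter (fun y => col x y = 0) with hP0
      set P1 := S'.filter (fun y => col x y = 1) with hP1
      set P2 := S'.filter (fun y => col x y = 2) with hP2
      have hfin3 : ∀ v : Fin 3, v = 0 ∨ v = 1 ∨ v = 2 := by decide
      have hsub : S' ⊆ P0 ∪ P1 ∪ P2 := by
        intro y hy
        simp only [hP0, hP1, hP2, Finset.mem_union, Finset.mem_filter]
        rcases hfin3 (col x y) with h | h | h
        · exact Or.inl (Or.inl ⟨hy, h⟩)
        · exact Or.inl (Or.inr ⟨hy, h⟩)
        · exact Or.inr ⟨hy, h⟩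
      have hcover : S'.card ≤ P0.card + P1.card + P2.card := by
        calc S'.card ≤ (P0 ∪ P1 ∪ P2).card := Finset.card_le_card hsub
          _ ≤ (P0 ∪ P1).card + P2.card := Finset.card_union_le _ _
          _ ≤ P0.card + P1.card + P2.card := by
              have := Finset.card_union_le P0 P1
              omega
      have hbig : R3 a (b+1) (c+1) ≤ P0.card ∨ R3 (a+1) b (c+1) ≤ P1.card ∨
          R3 (a+1) (b+1) c ≤ P2.card := by omega
      have hPsubS : ∀ y ∈ S', y ∈ S := fun y hy => Finset.mem_of_mem_erase hy
      rcases hbig with hb0 | hb1 | hb2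
      · obtain ⟨M, hMsub, hM⟩ := ih a (b+1) (c+1) (by omega) P0 hb0
        have hMS' : M ⊆ S' := hMsub.trans (Finset.filter_subset _ _)
        have hMS : M ⊆ S := fun y hy => hPsubS y (hMS' hy)
        rcases hM with ⟨hcard, hmono⟩ | h | h
        · have hxM : x ∉ M := fun hxm => Finset.notMem_erase x S (hMS' hxm)
          refine ⟨insert x M, Finset.insert_subset hxS hMS, Or.inl ⟨?_, ?_⟩⟩
          · rw [Finset.card_insert_of_notMem hxM, hcard]
          · intro u hu v hv huv
            rcases Finset.mem_insert.1 hu with rfl | hu' <;>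
              rcases Finset.mem_insert.1 hv with rfl | hv'
            · exact absurd huv (lt_irrefl _)
            · have := hMsub hv'
              rw [hP0, Finset.mem_filter] at this
              exact this.2
            · exact absurd huv (not_lt.2 (le_of_lt (hxlt u (hMS' hu'))))
            · exact hmono u hu' v hv' huv
        · exact ⟨M, hMS, Or.inr (Or.inl h)⟩
        · exact ⟨M, hMS, Or.inr (Or.inr h)⟩
      · obtain ⟨M, hMsub, hM⟩ := ih (a+1) b (c+1) (by omega) P1 hb1
        have hMS' : M ⊆ S' := hMsub.trans (Finset.filter_subset _ _)
        have hMS : M ⊆ S := fun y hy => hPsubS y (hMS' hy)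
        rcases hM with h | ⟨hcard, hmono⟩ | h
        · exact ⟨M, hMS, Or.inl h⟩
        · have hxM : x ∉ M := fun hxm => Finset.notMem_erase x S (hMS' hxm)
          refine ⟨insert x M, Finset.insert_subset hxS hMS, Or.inr (Or.inl ⟨?_, ?_⟩)⟩
          · rw [Finset.card_insert_of_notMem hxM, hcard]
          · intro u hu v hv huv
            rcases Finset.mem_insert.1 hu with rfl | hu' <;>
              rcases Finset.mem_insert.1 hv with rfl | hv'
            · exact absurd huv (lt_irrefl _)
            · have := hMsub hv'
              rw [hP1, Finset.mem_filter] at this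
              exact this.2
            · exact absurd huv (not_lt.2 (le_of_lt (hxlt u (hMS' hu'))))
            · exact hmono u hu' v hv' huv
        · exact ⟨M, hMS, Or.inr (Or.inr h)⟩
      · obtain ⟨M, hMsub, hM⟩ := ih (a+1) (b+1) c (by omega) P2 hb2
        have hMS' : M ⊆ S' := hMsub.trans (Finset.filter_subset _ _)
        have hMS : M ⊆ S := fun y hy => hPsubS y (hMS' hy)
        rcases hM with h | h | ⟨hcard, hmono⟩
        · exact ⟨M, hMS, Or.inl h⟩
        · exact ⟨M, hMS, Or.inr (Or.inl h)⟩
        · have hxM : x ∉ M := fun hxm => Finset.notMem_erase x S (hMS' hxm)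
          refine ⟨insert x M, Finset.insert_subset hxS hMS, Or.inr (Or.inr ⟨?_, ?_⟩)⟩
          · rw [Finset.card_insert_of_notMem hxM, hcard]
          · intro u hu v hv huv
            rcases Finset.mem_insert.1 hu with rfl | hu' <;>
              rcases Finset.mem_insert.1 hv with rfl | hv'
            · exact absurd huv (lt_irrefl _)
            · have := hMsub hv'
              rw [hP2, Finset.mem_filter] at this
              exact this.2
            · exact absurd huv (not_lt.2 (le_of_lt (hxlt u (hMS' hu'))))
            · exact hmono u hu' v hv' huv
  intro a b c S hS
  exact key (a+b+c) a b c le_rfl S hS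

/-! ### Turán-type greedy lemma -/

theorem turan_greedy {α : Type*} [DecidableEq α] (r : α → α → Prop) (d : ℕ) (P : Finset α)
    (h : ∀ i ∈ P, ((P.erase i).filter (r i)).card ≤ d) :
    ∃ Q ⊆ P, P.card ≤ (2*d+1) * Q.card ∧ ∀ i ∈ Q, ∀ j ∈ Q, i ≠ j → ¬ r i j := by
  classical
  induction P using Finset.strongInduction with
  | _ P ih =>
  rcases Finset.eq_empty_or_nonempty P with rfl | hPne
  · exact ⟨∅, Finset.Subset.refl _, by simp, fun i hi => absurd hi (Finset.notMem_empty i)⟩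
  -- double counting: some vertex has low total (in+out) degree
  have hpair : ∑ i ∈ P, ((P.erase i).filter (fun j => r j i)).card ≤ d * P.card := by
    have hrw : ∀ i : α, (P.erase i).filter (fun j => r j i)
        = P.filter (fun j => ¬(j = i) ∧ r j i) := by
      intro i
      ext j
      simp only [Finset.mem_filter, Finset.mem_erase]
      tauto
    calc ∑ i ∈ P, ((P.erase i).filter (fun j => r j i)).card
        = ∑ i ∈ P, ∑ j ∈ P, (if ¬(j = i) ∧ r j i then 1 else 0) := by
          simp only [hrw, Finset.card_filter]
      _ = ∑ j ∈ P, ∑ i ∈ P, (if ¬(j = i) ∧ r j i then 1 else 0) := Finset.sum_comm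
      _ = ∑ j ∈ P, ((P.erase j).filter (fun i => r j i)).card := by
          refine Finset.sum_congr rfl (fun j _ => ?_)
          have : (P.erase j).filter (fun i => r j i)
              = P.filter (fun i => ¬(i = j) ∧ r j i) := by
            ext i
            simp only [Finset.mem_filter, Finset.mem_erase]
            tauto
          rw [this, Finset.card_filter]
          refine Finset.sum_congr rfl (fun i _ => ?_)
          congr 1
          simp only [eq_iff_iff]
          tauto
      _ ≤ ∑ _j ∈ P, d := Finset.sum_le_sum (fun j hj => h j hj)
      _ = d * P.card := by rw [Finset.sum_const, smul_eq_mul, mul_comm]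
  have hund : ∃ i ∈ P, ((P.erase i).filter (fun j => r i j ∨ r j i)).card ≤ 2*d := by
    by_contra hc
    push_neg at hc
    have hlow : ∀ i ∈ P, ((P.erase i).filter (fun j => r i j ∨ r j i)).card
        ≤ ((P.erase i).filter (r i)).card + ((P.erase i).filter (fun j => r j i)).card := by
      intro i _
      have hsubu : (P.erase i).filter (fun j => r i j ∨ r j i) ⊆
          ((P.erase i).filter (r i)) ∪ ((P.erase i).filter (fun j => r j i)) := by
        intro j hj
        rw [Finset.mem_filter] at hj
        rcases hj.2 with hr | hr
        · exact Finset.mem_union_left _ (Finset.mem_filter.2 ⟨hj.1, hr⟩)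
        · exact Finset.mem_union_right _ (Finset.mem_filter.2 ⟨hj.1, hr⟩)
      calc _ ≤ _ := Finset.card_le_card hsubu
        _ ≤ _ := Finset.card_union_le _ _
    have hsb : ∑ i ∈ P, ((P.erase i).filter (fun j => r i j ∨ r j i)).card
        ≤ d * P.card + d * P.card := by
      calc ∑ i ∈ P, ((P.erase i).filter (fun j => r i j ∨ r j i)).card
          ≤ ∑ i ∈ P, (((P.erase i).filter (r i)).card
              + ((P.erase i).filter (fun j => r j i)).card) := Finset.sum_le_sum hlow
        _ = ∑ i ∈ P, ((P.erase i).filter (r i)).card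
            + ∑ i ∈ P, ((P.erase i).filter (fun j => r j i)).card := Finset.sum_add_distrib
        _ ≤ d * P.card + d * P.card := by
            have h1 : ∑ i ∈ P, ((P.erase i).filter (r i)).card ≤ d * P.card := by
              calc _ ≤ ∑ _i ∈ P, d := Finset.sum_le_sum h
                _ = d * P.card := by rw [Finset.sum_const, smul_eq_mul, mul_comm]
            omega
    have hsb2 : (2*d+1) * P.card
        ≤ ∑ i ∈ P, ((P.erase i).filter (fun j => r i j ∨ r j i)).card := by
      calc (2*d+1) * P.card = ∑ _i ∈ P, (2*d+1) := by
            rw [Finset.sum_const, smul_eq_mul, mul_comm]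
        _ ≤ _ := Finset.sum_le_sum (fun i hi => hc i hi)
    have hp : 0 < P.card := Finset.card_pos.2 hPne
    nlinarith [hsb, hsb2, hp]
  obtain ⟨i, hiP, hid⟩ := hund
  set U := (P.erase i).filter (fun j => r i j ∨ r j i) with hU
  set P' := (P.erase i) \ U with hP'
  have hP'ss : P' ⊂ P := by
    refine Finset.ssubset_iff_of_subset ?_ |>.2 ⟨i, hiP, ?_⟩
    · exact (Finset.sdiff_subset).trans (Finset.erase_subset _ _)
    · intro hiP'
      have := (Finset.mem_sdiff.1 hiP').1
      exact Finset.notMem_erase i P this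
  have hh' : ∀ j ∈ P', ((P'.erase j).filter (r j)).card ≤ d := by
    intro j hj
    have hjP : j ∈ P := (Finset.mem_of_mem_erase (Finset.mem_sdiff.1 hj).1)
    refine le_trans (Finset.card_le_card ?_) (h j hjP)
    intro k hk
    rw [Finset.mem_filter] at hk ⊢
    refine ⟨?_, hk.2⟩
    rcases Finset.mem_erase.1 hk.1 with ⟨hkj, hkP'⟩
    exact Finset.mem_erase.2 ⟨hkj, Finset.mem_of_mem_erase (Finset.mem_sdiff.1 hkP').1⟩
  obtain ⟨Q', hQ'sub, hQ'card, hQ'clean⟩ := ih P' hP'ss hh'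
  have hiQ' : i ∉ Q' := by
    intro hiQ'
    have := hQ'sub hiQ'
    exact Finset.notMem_erase i P (Finset.mem_sdiff.1 this).1
  refine ⟨insert i Q', ?_, ?_, ?_⟩
  · refine Finset.insert_subset hiP (hQ'sub.trans ?_)
    exact (Finset.sdiff_subset).trans (Finset.erase_subset _ _)
  · rw [Finset.card_insert_of_notMem hiQ']
    have hPsplit : P.card ≤ P'.card + (2*d) + 1 := by
      have hPsub : P ⊆ insert i (P' ∪ U) := by
        intro x hx
        by_cases hxi : x = i
        · simp [hxi]
        · have hxe : x ∈ P.erase i := Finset.mem_erase.2 ⟨hxi, hx⟩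
          by_cases hxU : x ∈ U
          · exact Finset.mem_insert_of_mem (Finset.mem_union_right _ hxU)
          · exact Finset.mem_insert_of_mem (Finset.mem_union_left _
              (Finset.mem_sdiff.2 ⟨hxe, hxU⟩))
      calc P.card ≤ (insert i (P' ∪ U)).card := Finset.card_le_card hPsub
        _ ≤ (P' ∪ U).card + 1 := Finset.card_insert_le _ _
        _ ≤ P'.card + U.card + 1 := by have := Finset.card_union_le P' U; omega
        _ ≤ P'.card + (2*d) + 1 := by omega
    nlinarith [hQ'card, hPsplit]
  · intro u hu v hv huv
    rcases Finset.mem_insert.1 hu with rfl | hu' <;>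
      rcases Finset.mem_insert.1 hv with rfl | hv'
    · exact absurd rfl huv
    · intro hr
      have hvP' := hQ'sub hv'
      have hvU : v ∈ U := by
        rw [hU, Finset.mem_filter]
        exact ⟨(Finset.mem_sdiff.1 hvP').1, Or.inl hr⟩
      exact (Finset.mem_sdiff.1 hvP').2 hvU
    · intro hr
      have huP' := hQ'sub hu'
      have huU : u ∈ U := by
        rw [hU, Finset.mem_filter]
        exact ⟨(Finset.mem_sdiff.1 huP').1, Or.inr hr⟩
      exact (Finset.mem_sdiff.1 huP').2 huU
    · exact hQ'clean u hu' v hv' huv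

lemma ordered_split {α : Type*} [LinearOrder α] :
    ∀ (t : ℕ) (M : Finset α), t ≤ M.card →
      ∃ F, F ⊆ M ∧ F.card = t ∧ ∀ x ∈ F, ∀ y ∈ M, y ∉ F → x < y := by
  intro t
  induction t with
  | zero =>
    intro M _
    exact ⟨∅, Finset.empty_subset _, by simp, fun x hx => absurd hx (Finset.notMem_empty x)⟩
  | succ t ih =>
    intro M hM
    have hMne : M.Nonempty := Finset.card_pos.1 (by omega)
    set x := M.min' hMne with hx
    have hxM : x ∈ M := M.min'_mem hMne
    have hcard : t ≤ (M.erase x).card := by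
      rw [Finset.card_erase_of_mem hxM]; omega
    obtain ⟨F', hF'sub, hF'card, hF'prop⟩ := ih (M.erase x) hcard
    have hxF' : x ∉ F' := fun hc => Finset.notMem_erase x M (hF'sub hc)
    refine ⟨insert x F', Finset.insert_subset hxM (hF'sub.trans (Finset.erase_subset _ _)),
      by rw [Finset.card_insert_of_notMem hxF', hF'card], ?_⟩
    intro a ha y hyM hyF
    rcases Finset.mem_insert.1 ha with h | ha'
    · have h1 : x ≤ y := M.min'_le y hyM
      have h2 : y ≠ x := fun hc => hyF (by rw [hc]; exact Finset.mem_insert_self _ _)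
      rw [h]
      exact lt_of_le_of_ne h1 (Ne.symm h2)
    · refine hF'prop a ha' y ?_ ?_
      · refine Finset.mem_erase.2 ⟨?_, hyM⟩
        intro hc
        exact hyF (hc ▸ Finset.mem_insert_self _ _)
      · intro hc
        exact hyF (Finset.mem_insert_of_mem hc)

/-! ### Basic graph-side notions -/

variable {V : Type} [Fintype V] (G : SimpleGraph V)

noncomputable def nbrF (v : V) : Finset V := Finset.univ.filter (fun u => G.Adj v u)

@[simp] lemma mem_nbrF {v u : V} : u ∈ nbrF G v ↔ G.Adj v u := by
  simp [nbrF]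

def FIndep (s : Finset V) : Prop := ∀ a ∈ s, ∀ b ∈ s, a ≠ b → ¬ G.Adj a b

lemma FIndep.subset {s u : Finset V} (h : FIndep G s) (hu : u ⊆ s) : FIndep G u :=
  fun a ha b hb hab => h a (hu ha) b (hu hb) hab

lemma fIndep_iff_isIndep (s : Finset V) : FIndep G s ↔ IsIndep G (↑s : Set V) := by
  constructor
  · intro h a ha b hb hab
    exact h a ha b hb hab
  · intro h a ha b hb hab
    exact h ha hb hab

/-- Finset form of being `K_{t,t}`-free. -/
def KttF (t : ℕ) : Prop :=
  ∀ A B : Finset V, FIndep G A → FIndep G B → Disjoint A B → A.card = t → B.card = t →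
    (∀ a ∈ A, ∀ b ∈ B, G.Adj a b) → False

lemma kttF_of_kttFree {t : ℕ} (h : KttFree G t) : KttF G t := by
  intro A B hA hB hdisj hAcard hBcard hadj
  apply h.false
  have fA : Fin t → V := fun i => (A.equivFin.symm (Fin.cast hAcard.symm i) : V)
  set fA : Fin t → V := fun i => (A.equivFin.symm (Fin.cast hAcard.symm i) : V) with hfA
  set fB : Fin t → V := fun i => (B.equivFin.symm (Fin.cast hBcard.symm i) : V) with hfB
  have hfAmem : ∀ i, fA i ∈ A := fun i => (A.equivFin.symm (Fin.cast hAcard.symm i)).2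
  have hfBmem : ∀ i, fB i ∈ B := fun i => (B.equivFin.symm (Fin.cast hBcard.symm i)).2
  have hfAinj : Function.Injective fA := by
    intro i j hij
    have := Subtype.val_injective hij
    have := A.equivFin.symm.injective this
    simpa [Fin.ext_iff] using congrArg Fin.val this
  have hfBinj : Function.Injective fB := by
    intro i j hij
    have := Subtype.val_injective hij
    have := B.equivFin.symm.injective this
    simpa [Fin.ext_iff] using congrArg Fin.val this
  have hAB : ∀ i j, fA i ≠ fB j := by
    intro i j hij
    exact Finset.disjoint_left.1 hdisj (hfAmem i) (hij ▸ hfBmem j)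
  refine ⟨⟨Sum.elim fA fB, ?_⟩, ?_⟩
  · rintro (i|i) (j|j) hij <;> simp only [Sum.elim_inl, Sum.elim_inr] at hij
    · exact congrArg Sum.inl (hfAinj hij)
    · exact absurd hij (hAB i j)
    · exact absurd hij.symm (hAB j i)
    · exact congrArg Sum.inr (hfBinj hij)
  · rintro (i|i) (j|j) <;>
      simp only [Function.Embedding.coeFn_mk, Sum.elim_inl, Sum.elim_inr,
        completeBipartiteGraph_adj] <;> simp
    · intro hadj'
      by_cases hij : i = j
      · subst hij; exact absurd hadj' (G.irrefl)
      · exact absurd hadj' (hA _ (hfAmem i) _ (hfAmem j) (fun he => hij (hfAinj he)))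
    · exact hadj _ (hfAmem i) _ (hfBmem j)
    · exact (hadj _ (hfAmem j) _ (hfBmem i)).symm
    · intro hadj'
      by_cases hij : i = j
      · subst hij; exact absurd hadj' (G.irrefl)
      · exact absurd hadj' (hB _ (hfBmem i) _ (hfBmem j) (fun he => hij (hfBinj he)))

/-! ### `indMatchNumOn` and `indepNumOn` interfaces -/

lemma inducedMatching_card_le {M : Finset (V × V)} (h : IsInducedMatching G M) :
    M.card ≤ Fintype.card V := by
  have hinj : Set.InjOn (fun e : V × V => e.1) ↑M := by
    intro e he f hf h1
    by_contra hne
    exact (h.1.2 e he f hf hne).1 h1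
  calc M.card = (M.image (fun e => e.1)).card := (Finset.card_image_of_injOn hinj).symm
    _ ≤ Fintype.card V := Finset.card_le_univ _

lemma emptyIM : IsInducedMatching G (∅ : Finset (V × V)) := by
  refine ⟨⟨?_, ?_⟩, ?_⟩ <;> simp

lemma indMatchNumOn_le_card (X : Set V) : indMatchNumOn G X ≤ Fintype.card V := by
  apply csSup_le
  · exact ⟨0, ⟨∅, emptyIM G, by simp, by simp⟩⟩
  · rintro k ⟨M, hM, _, rfl⟩
    exact inducedMatching_card_le G hM

/-- To refute a large induced matching: a system of `m` pairwise "clean" edges meeting `X`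
witnesses `m ≤ indMatchNumOn G X`. -/
lemma im_bound {X : Set V} {μm : ℕ} (hIM : indMatchNumOn G X ≤ μm) {m : ℕ}
    (p : Fin m → V × V)
    (h1 : ∀ i, G.Adj (p i).1 (p i).2)
    (h2 : ∀ i, (p i).1 ∈ X ∨ (p i).2 ∈ X)
    (h3 : ∀ i j, i ≠ j → ¬ G.Adj (p i).1 (p j).1 ∧ ¬ G.Adj (p i).1 (p j).2 ∧
      ¬ G.Adj (p i).2 (p j).1 ∧ ¬ G.Adj (p i).2 (p j).2)
    (h4 : ∀ i j, i ≠ j → (p i).1 ≠ (p j).1 ∧ (p i).1 ≠ (p j).2 ∧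
      (p i).2 ≠ (p j).1 ∧ (p i).2 ≠ (p j).2) :
    m ≤ μm := by
  have hpinj : Function.Injective p := by
    intro i j hij
    by_contra hne
    exact (h4 i j hne).1 (by rw [hij])
  set M := Finset.image p Finset.univ with hMdef
  have hcard : M.card = m := by
    rw [hMdef, Finset.card_image_of_injective _ hpinj, Finset.card_univ, Fintype.card_fin]
  have hmem : ∀ e ∈ M, ∃ i, p i = e := by
    intro e he
    simpa [hMdef] using he
  have hne_of : ∀ i j : Fin m, p i ≠ p j → i ≠ j := fun i j h hc => h (by rw [hc])
  have hIMat : IsInducedMatching G M := by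
    refine ⟨⟨?_, ?_⟩, ?_⟩
    · intro e he; obtain ⟨i, rfl⟩ := hmem e he; exact h1 i
    · intro e he f hf hef
      obtain ⟨i, rfl⟩ := hmem e he; obtain ⟨j, rfl⟩ := hmem f hf
      exact h4 i j (hne_of i j hef)
    · intro e he f hf hef
      obtain ⟨i, rfl⟩ := hmem e he; obtain ⟨j, rfl⟩ := hmem f hf
      exact h3 i j (hne_of i j hef)
  have hmeet : ∀ e ∈ M, e.1 ∈ X ∨ e.2 ∈ X := by
    intro e he; obtain ⟨i, rfl⟩ := hmem e he; exact h2 i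
  have hle : m ≤ indMatchNumOn G X := by
    have hmm : m ∈ {k | ∃ M : Finset (V × V), IsInducedMatching G M ∧
        (∀ e ∈ M, e.1 ∈ X ∨ e.2 ∈ X) ∧ M.card = k} := ⟨M, hIMat, hmeet, hcard⟩
    exact le_csSup ⟨Fintype.card V, fun k hk => by
      obtain ⟨M', hM', _, rfl⟩ := hk; exact inducedMatching_card_le G hM'⟩ hmm
  exact hle.trans hIM

lemma indepNumOn_le {X : Set V} {k : ℕ}
    (h : ∀ s : Finset V, ↑s ⊆ X → FIndep G s → s.card ≤ k) : indepNumOn G X ≤ k := by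
  apply csSup_le
  · exact ⟨0, ⟨∅, by simp, by simp [IsIndep], by simp⟩⟩
  · rintro n ⟨s, hsX, hsI, rfl⟩
    exact h s hsX ((fIndep_iff_isIndep G s).2 hsI)

/-! ### Maximum independent set and Hall matching -/

lemma exists_max_indep :
    ∃ I : Finset V, FIndep G I ∧ ∀ J : Finset V, FIndep G J → J.card ≤ I.card := by
  have hne : (Finset.univ.filter (fun s : Finset V => FIndep G s)).Nonempty :=
    ⟨∅, Finset.mem_filter.2 ⟨Finset.mem_univ _, fun a ha => absurd ha (Finset.notMem_empty a)⟩⟩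
  obtain ⟨I, hI, hmax⟩ := Finset.exists_max_image _ Finset.card hne
  refine ⟨I, (Finset.mem_filter.1 hI).2, fun J hJ => hmax J ?_⟩
  exact Finset.mem_filter.2 ⟨Finset.mem_univ _, hJ⟩

lemma hall_matching {I s1 : Finset V} (hI : FIndep G I)
    (hImax : ∀ J : Finset V, FIndep G J → J.card ≤ I.card)
    (hs1 : FIndep G s1) (hdisj : ∀ v ∈ s1, v ∉ I) :
    ∃ f : V → V, Set.InjOn f ↑s1 ∧ ∀ v ∈ s1, f v ∈ I ∧ G.Adj v (f v) := by
  classical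
  set tf : {v // v ∈ s1} → Finset V := fun v => (nbrF G (v : V)) ∩ I with htf
  have hall : ∀ (s : Finset {v // v ∈ s1}), s.card ≤ (s.biUnion tf).card := by
    intro s
    by_contra hlt
    push_neg at hlt
    set D := s.biUnion tf with hD
    have hDI : D ⊆ I := by
      intro x hx
      rw [hD, Finset.mem_biUnion] at hx
      obtain ⟨v, _, hv⟩ := hx
      exact (Finset.mem_inter.1 hv).2
    set J := (I \ D) ∪ s.image (Subtype.val) with hJ
    have himgsub : s.image (Subtype.val) ⊆ s1 := by
      intro x hx
      rw [Finset.mem_image] at hx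
      obtain ⟨⟨v, hv⟩, _, rfl⟩ := hx
      exact hv
    have hdisjJ : Disjoint (I \ D) (s.image (Subtype.val)) := by
      rw [Finset.disjoint_left]
      intro x hx hx2
      exact hdisj x (himgsub hx2) (Finset.mem_sdiff.1 hx).1
    have hcross : ∀ x ∈ I \ D, ∀ v ∈ s.image (Subtype.val), ¬ G.Adj x v := by
      intro x hx v hv hadj
      rw [Finset.mem_image] at hv
      obtain ⟨⟨v', hv'⟩, hv's, rfl⟩ := hv
      have : x ∈ tf ⟨v', hv'⟩ := by
        rw [htf]
        exact Finset.mem_inter.2 ⟨(mem_nbrF G).2 hadj.symm, (Finset.mem_sdiff.1 hx).1⟩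
      have : x ∈ D := Finset.mem_biUnion.2 ⟨⟨v', hv'⟩, hv's, this⟩
      exact (Finset.mem_sdiff.1 hx).2 this
    have hJind : FIndep G J := by
      intro a ha b hb hab
      rw [hJ, Finset.mem_union] at ha hb
      rcases ha with ha | ha <;> rcases hb with hb | hb
      · exact hI a (Finset.mem_sdiff.1 ha).1 b (Finset.mem_sdiff.1 hb).1 hab
      · exact hcross a ha b hb
      · intro hadj
        exact hcross b hb a ha hadj.symm
      · exact hs1 a (himgsub ha) b (himgsub hb) hab
    have hcardimg : (s.image (Subtype.val)).card = s.card :=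
      Finset.card_image_of_injective _ Subtype.val_injective
    have hJcard : I.card < J.card := by
      rw [hJ, Finset.card_union_of_disjoint hdisjJ, hcardimg,
        Finset.card_sdiff_of_subset hDI]
      have hDle : D.card ≤ I.card := Finset.card_le_card hDI
      omega
    exact absurd (hImax J hJind) (not_le.2 hJcard)
  obtain ⟨f, hfinj, hf⟩ := (Finset.all_card_le_biUnion_card_iff_exists_injective tf).1 hall
  refine ⟨fun v => if h : v ∈ s1 then f ⟨v, h⟩ else v, ?_, ?_⟩
  · intro x hx y hy hxy
    simp only [Finset.mem_coe] at hx hy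
    simp only [hx, hy, dif_pos] at hxy
    exact Subtype.ext_iff.1 (hfinj hxy)
  · intro v hv
    simp only [hv, dif_pos]
    have := hf ⟨v, hv⟩
    rw [htf, Finset.mem_inter] at this
    exact ⟨this.2, (mem_nbrF G).1 this.1⟩

/-! ### Double counting: the "half-degree" lemma -/

lemma descFactorial_ratio {t n m : ℕ} (h1 : 4*t ≤ n) (h2 : n ≤ 2*m) :
    n.descFactorial t ≤ 4^t * m.descFactorial t := by
  induction t with
  | zero => simp
  | succ t ih =>
    have ht' : 4*t ≤ n := by omega
    have hrec := ih ht'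
    rw [Nat.descFactorial_succ, Nat.descFactorial_succ, pow_succ]
    have hfac : n - t ≤ 4 * (m - t) := by omega
    calc (n-t) * n.descFactorial t ≤ (4*(m-t)) * (4^t * m.descFactorial t) :=
          Nat.mul_le_mul hfac hrec
      _ = 4^t*4 * ((m-t) * m.descFactorial t) := by ring

/-- Any `t` independent vertices have at most `2t-1` common neighbours inside an
independent set (else an induced `K_{t,t}` arises). -/
lemma common_nbr_bound {t : ℕ} (ht : 0 < t) (hK : KttF G t) {A P : Finset V}
    (hA : FIndep G A) (hP : FIndep G P) (hPcard : P.card = t) :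
    (A.filter (fun u => ∀ w ∈ P, G.Adj u w)).card ≤ 2*t - 1 := by
  by_contra hc
  push_neg at hc
  set C := A.filter (fun u => ∀ w ∈ P, G.Adj u w) with hC
  have hCP : t ≤ (C \ P).card := by
    have h1 := Finset.card_le_card_sdiff_add_card (s := C) (t := P)
    omega
  obtain ⟨C', hC'sub, hC'card⟩ := Finset.exists_subset_card_eq hCP
  refine hK C' P (FIndep.subset G hA (hC'sub.trans ((Finset.sdiff_subset).trans
    (Finset.filter_subset _ _)))) hP ?_ hC'card hPcard ?_
  · rw [Finset.disjoint_left]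
    intro x hx hxP
    exact (Finset.mem_sdiff.1 (hC'sub hx)).2 hxP
  · intro a ha b hb
    have := hC'sub ha
    rw [Finset.mem_sdiff, hC, Finset.mem_filter] at this
    exact this.1.2 b hb

/-- In a `K_{t,t}`-free graph, between two independent sets, few vertices of `A` see more
than half of `B`. -/
lemma half_bound {t : ℕ} (ht : 0 < t) (hK : KttF G t) {A B : Finset V}
    (hA : FIndep G A) (hB : FIndep G B) (hBcard : 4*t ≤ B.card) :
    (A.filter (fun u => B.card / 2 < (B.filter (fun w => G.Adj u w)).card)).card
      ≤ (2*t-1) * 4^t := by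
  classical
  set n := B.card with hn
  set m := n / 2 + 1 with hm
  set Heavy := A.filter (fun u => B.card / 2 < (B.filter (fun w => G.Adj u w)).card) with hH
  set Pairs := (A ×ˢ B.powersetCard t).filter
      (fun z => z.2 ⊆ B.filter (fun w => G.Adj z.1 w)) with hPairs
  -- each fiber over a t-subset has at most 2t-1 elements
  have count2 : ∀ P ∈ B.powersetCard t, (Pairs.filter (fun z => z.2 = P)).card ≤ 2*t-1 := by
    intro P hP
    rw [Finset.mem_powersetCard] at hP
    have hPind : FIndep G P := FIndep.subset G hB hP.1
    have hinj : Set.InjOn (fun z : V × Finset V => z.1) ↑(Pairs.filter (fun z => z.2 = P)) := by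
      intro z1 hz1 z2 hz2 he
      simp only [Finset.coe_filter, Set.mem_setOf_eq] at hz1 hz2
      exact Prod.ext he (hz1.2.trans hz2.2.symm)
    have hmaps : ∀ z ∈ Pairs.filter (fun z => z.2 = P),
        z.1 ∈ A.filter (fun u => ∀ w ∈ P, G.Adj u w) := by
      intro z hz
      rw [Finset.mem_filter] at hz
      obtain ⟨hzP, rfl⟩ := hz
      rw [hPairs, Finset.mem_filter, Finset.mem_product] at hzP
      refine Finset.mem_filter.2 ⟨hzP.1.1, fun w hw => ?_⟩
      have := hzP.2 hw
      exact (Finset.mem_filter.1 this).2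
    calc (Pairs.filter (fun z => z.2 = P)).card
        ≤ (A.filter (fun u => ∀ w ∈ P, G.Adj u w)).card :=
          Finset.card_le_card_of_injOn _ hmaps hinj
      _ ≤ 2*t-1 := common_nbr_bound G ht hK hA hPind hP.2
  have hPairsLe : Pairs.card ≤ (2*t-1) * Nat.choose n t := by
    have hfib := Finset.card_eq_sum_card_fiberwise
      (f := fun z : V × Finset V => z.2) (s := Pairs) (t := B.powersetCard t) ?_
    · rw [hfib]
      calc ∑ P ∈ B.powersetCard t, (Pairs.filter (fun z => z.2 = P)).card
          ≤ ∑ _P ∈ B.powersetCard t, (2*t-1) := Finset.sum_le_sum count2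
        _ = (B.powersetCard t).card * (2*t-1) := by rw [Finset.sum_const, smul_eq_mul]
        _ = (2*t-1) * Nat.choose n t := by
            rw [Finset.card_powersetCard, mul_comm, hn]
    · intro z hz
      rw [hPairs, Finset.mem_coe, Finset.mem_filter, Finset.mem_product] at hz
      exact hz.1.2
  -- each heavy vertex has a large fiber
  have count1 : ∀ u ∈ Heavy, Nat.choose m t ≤ (Pairs.filter (fun z => z.1 = u)).card := by
    intro u hu
    rw [hH, Finset.mem_filter] at hu
    set Bu := B.filter (fun w => G.Adj u w) with hBu
    have hmle : m ≤ Bu.card := by omega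
    have hinj2 : Set.InjOn (fun P : Finset V => ((u : V), P)) ↑(Bu.powersetCard t) := by
      intro P1 _ P2 _ he
      exact (Prod.ext_iff.1 he).2
    have hmaps2 : ∀ P ∈ Bu.powersetCard t, (u, P) ∈ Pairs.filter (fun z => z.1 = u) := by
      intro P hP
      rw [Finset.mem_powersetCard] at hP
      refine Finset.mem_filter.2 ⟨?_, rfl⟩
      rw [hPairs, Finset.mem_filter, Finset.mem_product]
      exact ⟨⟨hu.1, Finset.mem_powersetCard.2 ⟨hP.1.trans (Finset.filter_subset _ _), hP.2⟩⟩,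
        hP.1⟩
    calc Nat.choose m t ≤ Nat.choose Bu.card t := Nat.choose_le_choose t hmle
      _ = (Bu.powersetCard t).card := (Finset.card_powersetCard t Bu).symm
      _ ≤ (Pairs.filter (fun z => z.1 = u)).card :=
          Finset.card_le_card_of_injOn _ hmaps2 hinj2
  have hHPairs : Heavy.card * Nat.choose m t ≤ Pairs.card := by
    have hfib := Finset.card_eq_sum_card_fiberwise
      (f := fun z : V × Finset V => z.1) (s := Pairs) (t := A) ?_
    · rw [hfib]
      calc Heavy.card * Nat.choose m t = ∑ _u ∈ Heavy, Nat.choose m t := by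
            rw [Finset.sum_const, smul_eq_mul]
        _ ≤ ∑ u ∈ Heavy, (Pairs.filter (fun z => z.1 = u)).card := Finset.sum_le_sum count1
        _ ≤ ∑ u ∈ A, (Pairs.filter (fun z => z.1 = u)).card := by
            refine Finset.sum_le_sum_of_subset (by rw [hH]; exact Finset.filter_subset _ _)
    · intro z hz
      rw [hPairs, Finset.mem_coe, Finset.mem_filter, Finset.mem_product] at hz
      exact hz.1.1
  -- combine, multiplying through by t!
  have hkey : Heavy.card * Nat.choose m t ≤ (2*t-1) * Nat.choose n t :=
    le_trans hHPairs hPairsLe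
  have hdf : Heavy.card * (m.descFactorial t) ≤ (2*t-1) * (n.descFactorial t) := by
    rw [Nat.descFactorial_eq_factorial_mul_choose, Nat.descFactorial_eq_factorial_mul_choose]
    calc Heavy.card * (t.factorial * Nat.choose m t)
        = t.factorial * (Heavy.card * Nat.choose m t) := by ring
      _ ≤ t.factorial * ((2*t-1) * Nat.choose n t) := Nat.mul_le_mul_left _ hkey
      _ = (2*t-1) * (t.factorial * Nat.choose n t) := by ring
  have hratio : n.descFactorial t ≤ 4^t * m.descFactorial t :=
    descFactorial_ratio hBcard (by omega)
  have hdfpos : 0 < m.descFactorial t := by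
    rw [Nat.pos_iff_ne_zero]
    intro h0
    have := Nat.descFactorial_eq_zero_iff_lt.1 h0
    omega
  have hfinal : Heavy.card * (m.descFactorial t) ≤ ((2*t-1) * 4^t) * (m.descFactorial t) := by
    calc Heavy.card * (m.descFactorial t) ≤ (2*t-1) * (n.descFactorial t) := hdf
      _ ≤ (2*t-1) * (4^t * m.descFactorial t) := Nat.mul_le_mul_left _ hratio
      _ = ((2*t-1) * 4^t) * (m.descFactorial t) := by ring
  exact Nat.le_of_mul_le_mul_right hfinal hdfpos

/-! ### Constants -/

def cT (t : ℕ) : ℕ := (2*t-1) * 4^t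
def s0 (μm t : ℕ) : ℕ := (2*t-1)*(μm+1) + 1
def cP (μm t : ℕ) : ℕ := s0 μm t * cT t + 8*t + 1
def f1 (μm t : ℕ) : ℕ := cP μm t * 4^(s0 μm t) + (t-1) * Nat.choose (s0 μm t) t
def gR (μm t : ℕ) : ℕ := R3 (μm+1) (2*t) (2*t)
def KK (μm t : ℕ) : ℕ := gR μm t + s0 μm t + gR μm t * f1 μm t + f1 μm t + 2

lemma f1_pos {μm t : ℕ} (ht : 0 < t) : 0 < f1 μm t := by
  have h1 : 0 < cP μm t := by simp [cP]
  have h2 : 0 < 4^(s0 μm t) := pow_pos (by norm_num) _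
  have := Nat.mul_pos h1 h2
  unfold f1
  omega

/-! ### The three per-bag bounds -/

/-- Claim C': in a bag, an independent set disjoint from a maximum independent set is small. -/
lemma claimC {t μm : ℕ} (ht : 0 < t) (hK : KttF G t) {X : Set V}
    (hIM : indMatchNumOn G X ≤ μm) {I s1 : Finset V} (hI : FIndep G I)
    (hImax : ∀ J : Finset V, FIndep G J → J.card ≤ I.card)
    (hs1 : FIndep G s1) (hs1X : ↑s1 ⊆ X) (hdisj : ∀ v ∈ s1, v ∉ I) :
    s1.card < gR μm t := by
  classical
  by_contra hbig
  push_neg at hbig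
  obtain ⟨f, hfinj, hf⟩ := hall_matching G hI hImax hs1 hdisj
  letI : LinearOrder V := LinearOrder.lift' (fun v => ((Fintype.equivFin V) v : ℕ))
    (fun _ _ h => (Fintype.equivFin V).injective (Fin.val_injective h))
  set col : V → V → Fin 3 := fun u v =>
    if G.Adj u (f v) then 1 else if G.Adj v (f u) then 2 else 0 with hcol
  obtain ⟨M, hMsub, hM⟩ := ramsey3 col (μm+1) (2*t) (2*t) s1 hbig
  have hMX : ∀ a ∈ M, (a : V) ∈ X := fun a ha => hs1X (hMsub ha)
  have hMI : ∀ a ∈ M, f a ∈ I ∧ G.Adj a (f a) := fun a ha => hf a (hMsub ha)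
  have hMind : FIndep G M := FIndep.subset G hs1 hMsub
  have hfinjM : ∀ a ∈ M, ∀ b ∈ M, a ≠ b → f a ≠ f b := by
    intro a ha b hb hab hc
    exact hab (hfinj (hMsub ha) (hMsub hb) hc)
  rcases hM with ⟨hcard, hmono⟩ | ⟨hcard, hmono⟩ | ⟨hcard, hmono⟩
  · -- a clean induced matching of size μm+1 : contradiction
    have hclean : ∀ a ∈ M, ∀ b ∈ M, a ≠ b → ¬ G.Adj a (f b) := by
      intro a ha b hb hab
      rcases lt_trichotomy a b with h | h | h
      · have := hmono a ha b hb h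
        rw [hcol] at this
        intro hadj
        simp only [hadj, if_true] at this
        exact absurd this (by decide)
      · exact absurd h hab
      · have := hmono b hb a ha h
        rw [hcol] at this
        intro hadj
        by_cases h2 : G.Adj b (f a) <;> simp only [hadj, h2, if_true, if_false] at this <;>
          exact absurd this (by decide)
    set e : Fin (μm+1) → V := fun i => (M.equivFin.symm (Fin.cast hcard.symm i) : V) with he
    have heM : ∀ i, e i ∈ M := fun i => (M.equivFin.symm (Fin.cast hcard.symm i)).2
    have heinj : Function.Injective e := by
      intro i j hij
      have := M.equivFin.symm.injective (Subtype.val_injective hij)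
      simpa [Fin.ext_iff] using congrArg Fin.val this
    have hcontra := im_bound G hIM (fun i => (e i, f (e i)))
      (fun i => (hMI _ (heM i)).2)
      (fun i => Or.inl (hMX _ (heM i)))
      ?_ ?_
    · omega
    · intro i j hij
      have hne : e i ≠ e j := fun hc => hij (heinj hc)
      refine ⟨hMind _ (heM i) _ (heM j) hne, hclean _ (heM i) _ (heM j) hne, ?_, ?_⟩
      · intro hadj
        exact hclean _ (heM j) _ (heM i) (Ne.symm hne) hadj.symm
      · exact hI _ (hMI _ (heM i)).1 _ (hMI _ (heM j)).1 (hfinjM _ (heM i) _ (heM j) hne)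
    · intro i j hij
      have hne : e i ≠ e j := fun hc => hij (heinj hc)
      have hei : e i ∉ I := hdisj _ (hMsub (heM i))
      have hej : e j ∉ I := hdisj _ (hMsub (heM j))
      refine ⟨hne, ?_, ?_, hfinjM _ (heM i) _ (heM j) hne⟩
      · intro hc
        exact hei (by rw [show (e i : V) = f (e j) from hc]; exact (hMI _ (heM j)).1)
      · intro hc
        have hc2 : f (e i) = e j := hc
        have hc' : (e j : V) = f (e i) := hc2.symm
        exact hej (by rw [hc']; exact (hMI _ (heM i)).1)
  · -- forward edges : induced K_tt
    obtain ⟨F, hFsub, hFcard, hFlt⟩ := ordered_split t M (by omega)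
    have hcard2 : t ≤ (M \ F).card := by
      rw [Finset.card_sdiff_of_subset hFsub]
      omega
    obtain ⟨L, hLsub, hLcard⟩ := Finset.exists_subset_card_eq hcard2
    have hLM : L ⊆ M := hLsub.trans (Finset.sdiff_subset)
    have hBind : FIndep G (L.image f) := by
      intro x hx y hy hxy
      rw [Finset.mem_image] at hx hy
      obtain ⟨x', hx', rfl⟩ := hx
      obtain ⟨y', hy', rfl⟩ := hy
      exact hI _ (hMI _ (hLM hx')).1 _ (hMI _ (hLM hy')).1 hxy
    refine hK F (L.image f) (FIndep.subset G hMind hFsub) hBind ?_ hFcard ?_ ?_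
    · rw [Finset.disjoint_left]
      intro x hxF hxim
      rw [Finset.mem_image] at hxim
      obtain ⟨y, hy, rfl⟩ := hxim
      exact hdisj _ (hMsub (hFsub hxF)) (hMI _ (hLM hy)).1
    · rw [Finset.card_image_of_injOn, hLcard]
      intro x hx y hy hxy
      by_contra hne
      exact hfinjM _ (hLM hx) _ (hLM hy) hne hxy
    · intro a ha b hb
      rw [Finset.mem_image] at hb
      obtain ⟨y, hy, rfl⟩ := hb
      have hyMF' := hLsub hy
      rw [Finset.mem_sdiff] at hyMF'
      have hlt := hFlt a ha y hyMF'.1 hyMF'.2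
      have := hmono a (hFsub ha) y (hLM hy) hlt
      rw [hcol] at this
      by_cases h1 : G.Adj a (f y)
      · exact h1
      · exfalso
        by_cases h2 : G.Adj y (f a) <;> simp only [h1, h2, if_true, if_false] at this <;>
          exact absurd this (by decide)
  · -- backward edges : induced K_tt
    obtain ⟨F, hFsub, hFcard, hFlt⟩ := ordered_split t M (by omega)
    have hcard2 : t ≤ (M \ F).card := by
      rw [Finset.card_sdiff_of_subset hFsub]
      omega
    obtain ⟨L, hLsub, hLcard⟩ := Finset.exists_subset_card_eq hcard2
    have hLM : L ⊆ M := hLsub.trans (Finset.sdiff_subset)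
    have hBind : FIndep G (F.image f) := by
      intro x hx y hy hxy
      rw [Finset.mem_image] at hx hy
      obtain ⟨x', hx', rfl⟩ := hx
      obtain ⟨y', hy', rfl⟩ := hy
      exact hI _ (hMI _ (hFsub hx')).1 _ (hMI _ (hFsub hy')).1 hxy
    refine hK L (F.image f) (FIndep.subset G hMind hLM) hBind ?_ hLcard ?_ ?_
    · rw [Finset.disjoint_left]
      intro x hxL hxim
      rw [Finset.mem_image] at hxim
      obtain ⟨y, hy, rfl⟩ := hxim
      exact hdisj _ (hMsub (hLM hxL)) (hMI _ (hFsub hy)).1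
    · rw [Finset.card_image_of_injOn, hFcard]
      intro x hx y hy hxy
      by_contra hne
      exact hfinjM _ (hFsub hx) _ (hFsub hy) hne hxy
    · intro b hb a ha
      rw [Finset.mem_image] at ha
      obtain ⟨x, hx, rfl⟩ := ha
      have hyMF' := hLsub hb
      rw [Finset.mem_sdiff] at hyMF'
      have hlt := hFlt x hx b hyMF'.1 hyMF'.2
      have := hmono x (hFsub hx) b (hLM hb) hlt
      rw [hcol] at this
      by_cases h1 : G.Adj x (f b)
      · exfalso
        simp only [h1, if_true] at this
        exact absurd this (by decide)
      · by_cases h2 : G.Adj b (f x)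
        · exact h2
        · exfalso
          simp only [h1, h2, if_false] at this
          exact absurd this (by decide)

/-- Claim E: in a bag, few vertices of `I` have a large independent set in their
neighbourhood. -/
lemma claimE {t μm : ℕ} (ht : 0 < t) (hK : KttF G t) {X : Set V}
    (hIM : indMatchNumOn G X ≤ μm) {I s2 : Finset V} (hI : FIndep G I)
    (hs2I : s2 ⊆ I) (hs2X : ↑s2 ⊆ X)
    (hbig : ∀ v ∈ s2, ∃ Tv : Finset V, Tv ⊆ nbrF G v ∧ FIndep G Tv ∧ Tv.card = f1 μm t) :
    s2.card < s0 μm t := by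
  classical
  by_contra hcon
  push_neg at hcon
  set sN := s0 μm t with hsN
  have hsNpos : 0 < sN := by simp [hsN, s0]
  obtain ⟨W, hWsub, hWcard⟩ := Finset.exists_subset_card_eq hcon
  have hWI : W ⊆ I := hWsub.trans hs2I
  have hWX : ∀ v ∈ W, (v : V) ∈ X := fun v hv => hs2X (hWsub hv)
  have hWind : FIndep G W := FIndep.subset G hI hWI
  -- choice of the big independent neighbourhoods
  set T : V → Finset V := fun v =>
    if h : ∃ Tv : Finset V, Tv ⊆ nbrF G v ∧ FIndep G Tv ∧ Tv.card = f1 μm t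
    then h.choose else ∅ with hT
  have hTprop : ∀ v ∈ W, T v ⊆ nbrF G v ∧ FIndep G (T v) ∧ (T v).card = f1 μm t := by
    intro v hv
    have h := hbig v (hWsub hv)
    rw [hT]
    simp only [h, dif_pos]
    exact h.choose_spec
  -- vertices of T v are never in I
  have hTnotI : ∀ v ∈ W, ∀ u ∈ T v, u ∉ I := by
    intro v hv u hu huI
    have hadj : G.Adj v u := (mem_nbrF G).1 ((hTprop v hv).1 hu)
    exact hI v (hWI hv) u huI (fun hc => G.irrefl (hc ▸ hadj)) hadj
  -- Stage 1: prune vertices with many neighbours in W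
  set T1 : V → Finset V := fun v =>
    (T v).filter (fun u => (W.filter (fun w => G.Adj u w)).card ≤ t - 1) with hT1
  have hT1sub : ∀ v, T1 v ⊆ T v := fun v => Finset.filter_subset _ _
  have hT1deg : ∀ v, ∀ u ∈ T1 v, (W.filter (fun w => G.Adj u w)).card ≤ t - 1 := by
    intro v u hu
    exact (Finset.mem_filter.1 hu).2
  have hT1card : ∀ v ∈ W, cP μm t * 4^sN ≤ (T1 v).card := by
    intro v hv
    set Bad := (T v).filter (fun u => ¬ ((W.filter (fun w => G.Adj u w)).card ≤ t - 1)) with hBad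
    have hsplitc : (T1 v).card + Bad.card = (T v).card := by
      rw [hT1]
      exact Finset.card_filter_add_card_filter_not _
    have hBadBound : Bad.card ≤ (t-1) * Nat.choose sN t := by
      set φ : V → Finset V := fun u =>
        if h : ∃ P : Finset V, P ⊆ W.filter (fun w => G.Adj u w) ∧ P.card = t
        then h.choose else ∅ with hφ
      have hφprop : ∀ u ∈ Bad, φ u ⊆ W.filter (fun w => G.Adj u w) ∧ (φ u).card = t := by
        intro u hu
        rw [hBad, Finset.mem_filter] at hu
        have hex : ∃ P : Finset V, P ⊆ W.filter (fun w => G.Adj u w) ∧ P.card = t :=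
          Finset.exists_subset_card_eq (by omega)
        rw [hφ]
        simp only [hex, dif_pos]
        exact hex.choose_spec
      have himg : Bad.image φ ⊆ W.powersetCard t := by
        intro P hP
        rw [Finset.mem_image] at hP
        obtain ⟨u, hu, rfl⟩ := hP
        exact Finset.mem_powersetCard.2
          ⟨(hφprop u hu).1.trans (Finset.filter_subset _ _), (hφprop u hu).2⟩
      have hfiber : ∀ P ∈ Bad.image φ, (Bad.filter (fun u => φ u = P)).card ≤ t - 1 := by
        intro P hP
        by_contra hfc
        push_neg at hfc
        have hPW : P ⊆ W ∧ P.card = t := by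
          have := himg hP
          rw [Finset.mem_powersetCard] at this
          exact this
        obtain ⟨F1, hF1sub, hF1card⟩ := Finset.exists_subset_card_eq
          (show t ≤ (Bad.filter (fun u => φ u = P)).card by omega)
        refine hK F1 P (FIndep.subset G (hTprop v hv).2.1
          (hF1sub.trans ((Finset.filter_subset _ _).trans (Finset.filter_subset _ _))))
          (FIndep.subset G hWind hPW.1) ?_ hF1card hPW.2 ?_
        · rw [Finset.disjoint_left]
          intro u huF huP
          have huBad : u ∈ Bad := (Finset.filter_subset _ _) (hF1sub huF)
          have huT : u ∈ T v := (Finset.filter_subset _ _) huBad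
          exact hTnotI v hv u huT (hWI (hPW.1 huP))
        · intro a ha b hb
          have haf := hF1sub ha
          rw [Finset.mem_filter] at haf
          have := (hφprop a haf.1).1
          rw [haf.2] at this
          exact (Finset.mem_filter.1 (this hb)).2
      have hBc : Bad.card ≤ (t-1) * (Bad.image φ).card := by
        rw [Finset.card_eq_sum_card_fiberwise (f := φ) (s := Bad) (t := Bad.image φ)
          (fun u hu => Finset.mem_image_of_mem φ hu)]
        calc ∑ P ∈ Bad.image φ, (Bad.filter (fun u => φ u = P)).card
            ≤ ∑ _P ∈ Bad.image φ, (t-1) := Finset.sum_le_sum hfiber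
          _ = (Bad.image φ).card * (t-1) := by rw [Finset.sum_const, smul_eq_mul]
          _ = (t-1) * (Bad.image φ).card := by ring
      calc Bad.card ≤ (t-1) * (Bad.image φ).card := hBc
        _ ≤ (t-1) * Nat.choose sN t := by
            refine Nat.mul_le_mul_left _ ?_
            calc (Bad.image φ).card ≤ (W.powersetCard t).card := Finset.card_le_card himg
              _ = Nat.choose sN t := by rw [Finset.card_powersetCard, hWcard]
    have hTvcard := (hTprop v hv).2.2
    have hf1eq : f1 μm t = cP μm t * 4^sN + (t-1) * Nat.choose sN t := by
      rw [hsN]; rfl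
    omega
  -- enumeration of W
  set e : Fin sN → V := fun i => (W.equivFin.symm (Fin.cast hWcard.symm i) : V) with he
  have heW : ∀ i, e i ∈ W := fun i => (W.equivFin.symm (Fin.cast hWcard.symm i)).2
  have heinj : Function.Injective e := by
    intro i j hij
    have := W.equivFin.symm.injective (Subtype.val_injective hij)
    simpa [Fin.ext_iff] using congrArg Fin.val this
  -- Stage 2: greedy transversal with halving
  have hcPbig : (Finset.univ : Finset (Fin sN)).card * cT t < cP μm t := by
    rw [Finset.card_univ, Fintype.card_fin, cP, hsN]
    omega
  have hrec : ∀ k : ℕ, k ≤ sN → ∃ (tsel : Fin sN → V) (C : Fin sN → Finset V),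
      (∀ i : Fin sN, (i:ℕ) < k → tsel i ∈ T1 (e i)) ∧
      (∀ i j : Fin sN, (i:ℕ) < k → (j:ℕ) < k → i ≠ j →
        ¬ G.Adj (tsel i) (tsel j) ∧ tsel i ≠ tsel j) ∧
      (∀ j : Fin sN, k ≤ (j:ℕ) → (C j ⊆ T1 (e j)) ∧ (cP μm t * 4^(sN-k) ≤ (C j).card) ∧
        (∀ i : Fin sN, (i:ℕ) < k → ∀ u ∈ C j, ¬ G.Adj (tsel i) u ∧ tsel i ≠ u)) := by
    intro k
    induction k with
    | zero =>
      intro _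
      refine ⟨fun i => e i, fun j => T1 (e j), by omega, by omega, ?_⟩
      intro j _
      exact ⟨Finset.Subset.refl _, by simpa using hT1card (e j) (heW j), by omega⟩
    | succ k ih =>
      intro hk1
      obtain ⟨tsel, C, ha, hb, hc⟩ := ih (by omega)
      set cur : Fin sN := ⟨k, by omega⟩ with hcur
      obtain ⟨hCcur_sub, hCcur_card, hCcur_clean⟩ := hc cur (by simp [hcur])
      set badU : Finset V := Finset.univ.biUnion (fun j : Fin sN =>
        if k < (j:ℕ) then (C cur).filter
          (fun u => (C j).card / 2 < ((C j).filter (fun w => G.Adj u w)).card) else ∅) with hbadU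
      have hbadUcard : badU.card ≤ (Finset.univ : Finset (Fin sN)).card * cT t := by
        calc badU.card ≤ ∑ j : Fin sN, (if k < (j:ℕ) then (C cur).filter
              (fun u => (C j).card / 2 < ((C j).filter (fun w => G.Adj u w)).card) else ∅).card :=
              Finset.card_biUnion_le
          _ ≤ ∑ _j : Fin sN, cT t := by
              refine Finset.sum_le_sum ?_
              intro j _
              by_cases hj : k < (j:ℕ)
              · simp only [hj, if_true]
                obtain ⟨hCj_sub, hCj_card, _⟩ := hc j (by omega)
                have h4t : 4*t ≤ (C j).card := by
                  have h1 : 8*t ≤ cP μm t := by rw [cP]; omega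
                  have h2 : 1 ≤ 4^(sN-k) := Nat.one_le_pow _ _ (by norm_num)
                  nlinarith
                have := half_bound G ht hK
                  (FIndep.subset G (hTprop (e cur) (heW cur)).2.1
                    (hCcur_sub.trans (hT1sub _)))
                  (FIndep.subset G (hTprop (e j) (heW j)).2.1 (hCj_sub.trans (hT1sub _)))
                  h4t
                rw [cT]
                exact this
              · simp [hj]
          _ = Finset.univ.card * cT t := by rw [Finset.sum_const, smul_eq_mul]
      have hpick : ((C cur) \ badU).Nonempty := by
        rw [← Finset.card_pos]
        have h1 : cP μm t ≤ (C cur).card := by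
          have h2 : 1 ≤ 4^(sN-k) := Nat.one_le_pow _ _ (by norm_num)
          nlinarith
        have h3 := Finset.card_le_card_sdiff_add_card (s := C cur) (t := badU)
        omega
      obtain ⟨u, hu⟩ := hpick
      have huC : u ∈ C cur := (Finset.mem_sdiff.1 hu).1
      have hunotbad : ∀ j : Fin sN, k < (j:ℕ) →
          ((C j).filter (fun w => G.Adj u w)).card ≤ (C j).card / 2 := by
        intro j hj
        by_contra hbad
        push_neg at hbad
        refine (Finset.mem_sdiff.1 hu).2 ?_
        rw [hbadU, Finset.mem_biUnion]
        refine ⟨j, Finset.mem_univ _, ?_⟩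
        simp only [hj, if_true]
        exact Finset.mem_filter.2 ⟨huC, hbad⟩
      set tsel' := Function.update tsel cur u with htsel'
      set C' : Fin sN → Finset V := fun j =>
        if k < (j:ℕ) then ((C j).filter (fun w => ¬ G.Adj u w)).erase u else C j with hC'
      have htsel'cur : tsel' cur = u := Function.update_self _ _ _
      have htsel'old : ∀ i : Fin sN, (i:ℕ) < k → tsel' i = tsel i := by
        intro i hi
        refine Function.update_of_ne ?_ _ _
        intro hcontra
        rw [hcontra] at hi
        have hck : ((cur : Fin sN) : ℕ) = k := by simp [hcur]
        omega
      refine ⟨tsel', C', ?_, ?_, ?_⟩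
      · intro i hi
        by_cases hik : (i:ℕ) < k
        · rw [htsel'old i hik]
          exact ha i hik
        · have : i = cur := by
            rw [hcur]
            apply Fin.ext
            simp
            omega
          rw [this, htsel'cur]
          exact hCcur_sub huC
      · intro i j hi hj hij
        by_cases hik : (i:ℕ) < k <;> by_cases hjk : (j:ℕ) < k
        · rw [htsel'old i hik, htsel'old j hjk]
          exact hb i j hik hjk hij
        · have hjcur : j = cur := by
            apply Fin.ext
            simp [hcur]
            omega
          rw [htsel'old i hik, hjcur, htsel'cur]
          exact hCcur_clean i hik u huC
        · have hicur : i = cur := by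
            apply Fin.ext
            simp [hcur]
            omega
          rw [htsel'old j hjk, hicur, htsel'cur]
          have h2 := hCcur_clean j hjk u huC
          exact ⟨fun hadj => h2.1 hadj.symm, fun hcq => h2.2 hcq.symm⟩
        · exfalso
          have hicur : i = cur := by
            apply Fin.ext
            simp [hcur]
            omega
          have hjcur : j = cur := by
            apply Fin.ext
            simp [hcur]
            omega
          exact hij (hicur.trans hjcur.symm)
      · intro j hj
        have hjk : k < (j:ℕ) := by omega
        have hCjnew : C' j = ((C j).filter (fun w => ¬ G.Adj u w)).erase u := by
          rw [hC']
          simp [hjk]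
        obtain ⟨hCj_sub, hCj_card, hCj_clean⟩ := hc j (by omega)
        refine ⟨?_, ?_, ?_⟩
        · rw [hCjnew]
          exact ((Finset.erase_subset _ _).trans (Finset.filter_subset _ _)).trans hCj_sub
        · rw [hCjnew]
          have hhalf := hunotbad j hjk
          have hcfilters : ((C j).filter (fun w => G.Adj u w)).card
              + ((C j).filter (fun w => ¬ G.Adj u w)).card = (C j).card :=
            Finset.card_filter_add_card_filter_not _
          have herase : (((C j).filter (fun w => ¬ G.Adj u w)).erase u).card
              ≥ ((C j).filter (fun w => ¬ G.Adj u w)).card - 1 := by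
            have := Finset.card_erase_le (s := (C j).filter (fun w => ¬ G.Adj u w)) (a := u)
            have := Finset.pred_card_le_card_erase
              (s := (C j).filter (fun w => ¬ G.Adj u w)) (a := u)
            omega
          have hpow : cP μm t * 4^(sN-k) = 4 * (cP μm t * 4^(sN-(k+1))) := by
            have : sN - k = (sN - (k+1)) + 1 := by omega
            rw [this, pow_succ]
            ring
          have hcp1 : 1 ≤ cP μm t := by rw [cP]; omega
          have hm1 : 1 ≤ cP μm t * 4^(sN-(k+1)) :=
            Nat.one_le_iff_ne_zero.2 (by positivity)
          omega
        · intro i hi w hw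
          rw [hCjnew] at hw
          have hw1 : w ∈ (C j).filter (fun w => ¬ G.Adj u w) := Finset.mem_of_mem_erase hw
          have hwC : w ∈ C j := (Finset.filter_subset _ _) hw1
          by_cases hik : (i:ℕ) < k
          · rw [htsel'old i hik]
            exact hCj_clean i hik w hwC
          · have hicur : i = cur := by
              apply Fin.ext
              simp [hcur]
              omega
            rw [hicur, htsel'cur]
            exact ⟨(Finset.mem_filter.1 hw1).2, fun hc2 => (Finset.ne_of_mem_erase hw) hc2.symm⟩
  obtain ⟨tsel, _, hta, htb, _⟩ := hrec sN le_rfl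
  have htadj : ∀ i : Fin sN, G.Adj (e i) (tsel i) := by
    intro i
    have := (hT1sub _).trans (hTprop (e i) (heW i)).1 (hta i i.isLt)
    exact (mem_nbrF G).1 this
  have htdeg : ∀ i : Fin sN, (W.filter (fun w => G.Adj (tsel i) w)).card ≤ t - 1 :=
    fun i => hT1deg (e i) _ (hta i i.isLt)
  have htnotI : ∀ i : Fin sN, tsel i ∉ I := by
    intro i
    exact hTnotI (e i) (heW i) _ ((hT1sub _) (hta i i.isLt))
  -- Turán cleanup of residual conflicts
  set r : Fin sN → Fin sN → Prop := fun i j => G.Adj (tsel i) (e j) with hr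
  have hrdeg : ∀ i ∈ (Finset.univ : Finset (Fin sN)),
      ((Finset.univ.erase i).filter (r i)).card ≤ t - 1 := by
    intro i _
    have hmaps : ∀ j ∈ (Finset.univ.erase i).filter (r i),
        e j ∈ W.filter (fun w => G.Adj (tsel i) w) := by
      intro j hj
      rw [Finset.mem_filter] at hj
      exact Finset.mem_filter.2 ⟨heW j, hj.2⟩
    have hinj : Set.InjOn e ↑((Finset.univ.erase i).filter (r i)) :=
      fun a _ b _ hab => heinj hab
    calc ((Finset.univ.erase i).filter (r i)).card
        ≤ (W.filter (fun w => G.Adj (tsel i) w)).card :=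
          Finset.card_le_card_of_injOn _ hmaps hinj
      _ ≤ t - 1 := htdeg i
  obtain ⟨Q, _, hQcard, hQclean⟩ := turan_greedy r (t-1) Finset.univ hrdeg
  have hQbig : μm + 1 ≤ Q.card := by
    rw [Finset.card_univ, Fintype.card_fin] at hQcard
    have h1 : sN = (2*t-1)*(μm+1) + 1 := by rw [hsN, s0]
    have h2 : 2*(t-1)+1 ≤ 2*t-1 := by omega
    nlinarith [hQcard, hQcard.trans (Nat.mul_le_mul_right Q.card h2)]
  obtain ⟨Q', hQ'sub, hQ'card⟩ := Finset.exists_subset_card_eq hQbig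
  set e2 : Fin (μm+1) → Fin sN := fun i => (Q'.equivFin.symm (Fin.cast hQ'card.symm i) : Fin sN)
    with he2
  have he2Q : ∀ i, e2 i ∈ Q' := fun i => (Q'.equivFin.symm (Fin.cast hQ'card.symm i)).2
  have he2inj : Function.Injective e2 := by
    intro i j hij
    have := Q'.equivFin.symm.injective (Subtype.val_injective hij)
    simpa [Fin.ext_iff] using congrArg Fin.val this
  have hcontra := im_bound G hIM (fun i => (e (e2 i), tsel (e2 i)))
    (fun i => htadj (e2 i))
    (fun i => Or.inl (hWX _ (heW (e2 i))))
    ?_ ?_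
  · omega
  · intro i j hij
    have hne : e2 i ≠ e2 j := fun hc2 => hij (he2inj hc2)
    have hclean := hQclean _ (hQ'sub (he2Q i)) _ (hQ'sub (he2Q j)) hne
    have hclean' := hQclean _ (hQ'sub (he2Q j)) _ (hQ'sub (he2Q i)) (Ne.symm hne)
    refine ⟨?_, ?_, ?_, ?_⟩
    · exact hWind _ (heW _) _ (heW _) (fun hc2 => hne (heinj hc2))
    · intro hadj
      exact hclean' hadj.symm
    · intro hadj
      exact hclean hadj
    · exact (htb (e2 i) (e2 j) (e2 i).isLt (e2 j).isLt hne).1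
  · intro i j hij
    have hne : e2 i ≠ e2 j := fun hc2 => hij (he2inj hc2)
    refine ⟨fun hc2 => hne (heinj hc2), ?_, ?_, ?_⟩
    · intro hc2
      refine htnotI (e2 j) ?_
      have hc3 : e (e2 i) = tsel (e2 j) := hc2
      rw [← hc3]
      exact hWI (heW (e2 i))
    · intro hc2
      refine htnotI (e2 i) ?_
      have hc3 : tsel (e2 i) = e (e2 j) := hc2
      rw [hc3]
      exact hWI (heW (e2 j))
    · exact (htb (e2 i) (e2 j) (e2 i).isLt (e2 j).isLt hne).2

/-- Claim P: an independent set inside the union of neighbourhoods of "small" satellite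
vertices of a bag is small. -/
lemma claimP {t μm : ℕ} (ht : 0 < t) (hK : KttF G t) {X : Set V}
    (hIM : indMatchNumOn G X ≤ μm) {I s3 : Finset V} (hI : FIndep G I)
    (hs3 : FIndep G s3)
    (hmem : ∀ a ∈ s3, ∃ v, v ∈ I ∧ (v : V) ∈ X ∧ G.Adj v a ∧
      (∀ u : Finset V, u ⊆ nbrF G v → FIndep G u → u.card ≤ f1 μm t)) :
    s3.card ≤ gR μm t * f1 μm t := by
  classical
  by_contra hbig
  push_neg at hbig
  have hs3I : ∀ a ∈ s3, a ∉ I := by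
    intro a ha haI
    obtain ⟨v, hvI, _, hadj, _⟩ := hmem a ha
    have hva : v ≠ a := fun hc => G.irrefl (hc ▸ hadj)
    exact hI v hvI a haI hva hadj
  -- greedy extraction of a system of pairs (v_i, a_i)
  have grab : ∀ (A' : Finset V), A' ⊆ s3 → ∃ (k : ℕ) (q : Fin k → V × V),
      A'.card ≤ k * f1 μm t ∧
      (∀ i, (q i).2 ∈ A' ∧ (q i).1 ∈ I ∧ (q i).1 ∈ X ∧ G.Adj (q i).1 (q i).2) ∧
      (∀ i j, i < j → ¬ G.Adj ((q i).1) ((q j).2)) := by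
    intro A'
    induction A' using Finset.strongInduction with
    | _ A' ih =>
    intro hA'sub
    rcases Finset.eq_empty_or_nonempty A' with rfl | hA'ne
    · exact ⟨0, Fin.elim0, by simp, fun i => i.elim0, fun i => i.elim0⟩
    obtain ⟨a, ha⟩ := hA'ne
    obtain ⟨v, hvI, hvX, hadj, hsmall⟩ := hmem a (hA'sub ha)
    set A'' := A' \ (nbrF G v) with hA''
    have hA''ss : A'' ⊂ A' := by
      refine Finset.ssubset_iff_of_subset (Finset.sdiff_subset) |>.2 ⟨a, ha, ?_⟩
      intro hc
      exact (Finset.mem_sdiff.1 hc).2 ((mem_nbrF G).2 hadj)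
    obtain ⟨k, q, hkcard, hq1, hq2⟩ := ih A'' hA''ss ((Finset.sdiff_subset).trans hA'sub)
    set q' : Fin (k+1) → V × V := fun i => if h : i = 0 then (v, a) else q (i.pred h) with hq'
    have hq'0 : q' 0 = (v, a) := by simp [hq']
    have hq'succ : ∀ (i : Fin (k+1)) (h : i ≠ 0), q' i = q (i.pred h) := by
      intro i h
      simp [hq', h]
    refine ⟨k+1, q', ?_, ?_, ?_⟩
    · have hinter : (A' ∩ nbrF G v).card ≤ f1 μm t :=
        hsmall (A' ∩ nbrF G v) (Finset.inter_subset_right)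
          (FIndep.subset G hs3 (Finset.coe_subset.2 ((Finset.inter_subset_left).trans hA'sub)))
      have hsplit : A'.card ≤ A''.card + (A' ∩ nbrF G v).card := by
        have hsub2 : A' ⊆ A'' ∪ (A' ∩ nbrF G v) := by
          intro x hx
          by_cases hxn : x ∈ nbrF G v
          · exact Finset.mem_union_right _ (Finset.mem_inter.2 ⟨hx, hxn⟩)
          · exact Finset.mem_union_left _ (Finset.mem_sdiff.2 ⟨hx, hxn⟩)
        calc A'.card ≤ _ := Finset.card_le_card hsub2
          _ ≤ _ := Finset.card_union_le _ _
      calc A'.card ≤ A''.card + (A' ∩ nbrF G v).card := hsplit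
        _ ≤ k * f1 μm t + f1 μm t := by omega
        _ = (k+1) * f1 μm t := by ring
    · intro i
      by_cases h0 : i = 0
      · rw [h0, hq'0]
        exact ⟨ha, hvI, hvX, hadj⟩
      · rw [hq'succ i h0]
        obtain ⟨h1, h2, h3, h4⟩ := hq1 (i.pred h0)
        exact ⟨(Finset.sdiff_subset) h1, h2, h3, h4⟩
    · intro i j hij
      have hj0 : j ≠ 0 := fun hc => by
        rw [hc] at hij
        exact absurd hij (by simp)
      rw [hq'succ j hj0]
      by_cases h0 : i = 0
      · rw [h0, hq'0]
        have := (hq1 (j.pred hj0)).1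
        rw [hA'', Finset.mem_sdiff] at this
        intro hadj2
        exact this.2 ((mem_nbrF G).2 hadj2)
      · rw [hq'succ i h0]
        refine hq2 _ _ ?_
        have hi := Fin.pred_lt_pred_iff (ha := h0) (hb := hj0)
        exact hi.2 hij
  obtain ⟨k, q, hkcard, hq1, hq2⟩ := grab s3 (Finset.Subset.refl _)
  have hf1pos := f1_pos (μm := μm) ht
  have hkbig : gR μm t < k := by
    by_contra hk
    push_neg at hk
    have : k * f1 μm t ≤ gR μm t * f1 μm t := Nat.mul_le_mul_right _ hk
    omega
  -- distinctness facts
  have hvdist : ∀ i j : Fin k, i ≠ j → (q i).1 ≠ (q j).1 := by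
    intro i j hij hc
    rcases lt_or_gt_of_ne hij with h | h
    · exact hq2 i j h (hc ▸ (hq1 j).2.2.2)
    · exact hq2 j i h (hc ▸ (hq1 i).2.2.2)
  have hadist : ∀ i j : Fin k, i ≠ j → (q i).2 ≠ (q j).2 := by
    intro i j hij hc
    rcases lt_or_gt_of_ne hij with h | h
    · exact hq2 i j h (hc ▸ (hq1 i).2.2.2)
    · exact hq2 j i h (hc.symm ▸ (hq1 j).2.2.2)
  have hmix : ∀ i j : Fin k, (q i).1 ≠ (q j).2 := by
    intro i j hc
    exact hs3I _ (hq1 j).1 (hc ▸ (hq1 i).2.1)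
  set col : Fin k → Fin k → Fin 3 := fun i j =>
    if G.Adj ((q j).1) ((q i).2) then 1 else 0 with hcol
  have hcol01 : ∀ i j, col i j ≠ 2 := by
    intro i j
    rw [hcol]
    by_cases h : G.Adj ((q j).1) ((q i).2) <;> simp [h]
  obtain ⟨M, _, hM⟩ := ramsey3 col (μm+1) (2*t) (2*t) Finset.univ
    (by rw [Finset.card_univ, Fintype.card_fin]; exact le_of_lt hkbig)
  rcases hM with ⟨hcard, hmono⟩ | ⟨hcard, hmono⟩ | ⟨hcard, hmono⟩
  · -- clean induced matching of size μm+1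
    have hclean : ∀ x ∈ M, ∀ y ∈ M, x ≠ y → ¬ G.Adj ((q y).1) ((q x).2) := by
      intro x hx y hy hxy
      rcases lt_trichotomy x y with h | h | h
      · have := hmono x hx y hy h
        rw [hcol] at this
        intro hadj2
        simp only [hadj2, if_true] at this
        exact absurd this (by decide)
      · exact absurd h hxy
      · exact hq2 y x h
    set e : Fin (μm+1) → Fin k := fun i => (M.equivFin.symm (Fin.cast hcard.symm i) : Fin k)
      with he
    have heM : ∀ i, e i ∈ M := fun i => (M.equivFin.symm (Fin.cast hcard.symm i)).2
    have heinj : Function.Injective e := by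
      intro i j hij
      have := M.equivFin.symm.injective (Subtype.val_injective hij)
      simpa [Fin.ext_iff] using congrArg Fin.val this
    have hcontra := im_bound G hIM (fun i => q (e i))
      (fun i => (hq1 (e i)).2.2.2)
      (fun i => Or.inl (hq1 (e i)).2.2.1)
      ?_ ?_
    · omega
    · intro i j hij
      have hne : e i ≠ e j := fun hc => hij (heinj hc)
      refine ⟨hI _ (hq1 (e i)).2.1 _ (hq1 (e j)).2.1 (hvdist _ _ hne), ?_, ?_, ?_⟩
      · exact hclean _ (heM j) _ (heM i) (Ne.symm hne)
      · intro hadj2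
        exact hclean _ (heM i) _ (heM j) hne hadj2.symm
      · exact hs3 _ (hq1 (e i)).1 _ (hq1 (e j)).1 (hadist _ _ hne)
    · intro i j hij
      have hne : e i ≠ e j := fun hc => hij (heinj hc)
      exact ⟨hvdist _ _ hne, hmix _ _, fun hc => hmix (e j) (e i) hc.symm, hadist _ _ hne⟩
  · -- dense pattern: induced K_tt
    obtain ⟨F, hFsub, hFcard, hFlt⟩ := ordered_split t M (by omega)
    have hcard2 : t ≤ (M \ F).card := by
      rw [Finset.card_sdiff_of_subset hFsub]; omega
    obtain ⟨L, hLsub, hLcard⟩ := Finset.exists_subset_card_eq hcard2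
    have hLM : L ⊆ M := hLsub.trans (Finset.sdiff_subset)
    set A := F.image (fun i => (q i).2) with hA
    set B := L.image (fun j => (q j).1) with hB
    have hAcard : A.card = t := by
      rw [hA, Finset.card_image_of_injOn, hFcard]
      intro x hx y hy hxy
      by_contra hne
      exact hadist x y hne hxy
    have hBcard : B.card = t := by
      rw [hB, Finset.card_image_of_injOn, hLcard]
      intro x hx y hy hxy
      by_contra hne
      exact hvdist x y hne hxy
    have hAind : FIndep G A := by
      intro x hx y hy hxy
      rw [hA, Finset.mem_image] at hx hy
      obtain ⟨x', _, rfl⟩ := hx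
      obtain ⟨y', _, rfl⟩ := hy
      have : x' ≠ y' := fun hc => hxy (by rw [hc])
      exact hs3 _ (hq1 x').1 _ (hq1 y').1 hxy
    have hBind : FIndep G B := by
      intro x hx y hy hxy
      rw [hB, Finset.mem_image] at hx hy
      obtain ⟨x', _, rfl⟩ := hx
      obtain ⟨y', _, rfl⟩ := hy
      exact hI _ (hq1 x').2.1 _ (hq1 y').2.1 hxy
    refine hK A B hAind hBind ?_ hAcard hBcard ?_
    · rw [Finset.disjoint_left]
      intro x hxA hxB
      rw [hA, Finset.mem_image] at hxA
      rw [hB, Finset.mem_image] at hxB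
      obtain ⟨x', _, rfl⟩ := hxA
      obtain ⟨y', _, hy'⟩ := hxB
      exact hmix y' x' hy'
    · intro x hx y hy
      rw [hA, Finset.mem_image] at hx
      rw [hB, Finset.mem_image] at hy
      obtain ⟨x', hx', rfl⟩ := hx
      obtain ⟨y', hy', rfl⟩ := hy
      have hyMF' := hLsub hy'
      rw [Finset.mem_sdiff] at hyMF'
      have hlt := hFlt x' hx' y' hyMF'.1 hyMF'.2
      have := hmono x' (hFsub hx') y' (hLM hy') hlt
      rw [hcol] at this
      by_cases hadj2 : G.Adj ((q y').1) ((q x').2)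
      · exact hadj2.symm
      · exfalso
        simp only [hadj2, if_false] at this
        exact absurd this (by decide)
  · -- colour 2 never occurs
    exfalso
    have h2le : 1 < M.card := by omega
    obtain ⟨x, hx, y, hy, hxy⟩ := Finset.one_lt_card.1 h2le
    rcases lt_or_gt_of_ne hxy with h | h
    · exact hcol01 x y (hmono x hx y hy h)
    · exact hcol01 y x (hmono y hy x hx h)

/-! ### Pendant trees -/

section Pendant
variable {ι J : Type} (T : SimpleGraph ι) (a : J → ι)

def pendant : SimpleGraph (ι ⊕ J) where
  Adj x y := match x, y with
    | .inl x, .inl y => T.Adj x y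
    | .inl x, .inr j => a j = x
    | .inr j, .inl x => a j = x
    | .inr _, .inr _ => False
  symm := ⟨by rintro (x|j) (y|k) h <;> simp_all <;> exact h.symm⟩
  loopless := ⟨by rintro (x|j) h <;> simp_all⟩

@[simp] lemma pendant_adj_inl_inl {x y : ι} : (pendant T a).Adj (.inl x) (.inl y) ↔ T.Adj x y :=
  Iff.rfl

@[simp] lemma pendant_adj_inl_inr {x : ι} {j : J} :
    (pendant T a).Adj (.inl x) (.inr j) ↔ a j = x := Iff.rfl

@[simp] lemma pendant_adj_inr_inl {x : ι} {j : J} :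
    (pendant T a).Adj (.inr j) (.inl x) ↔ a j = x := Iff.rfl

@[simp] lemma pendant_adj_inr_inr {j k : J} :
    ¬ (pendant T a).Adj (.inr j) (.inr k) := fun h => h

def inlHom : T →g pendant T a := ⟨Sum.inl, fun {u v} h => h⟩

lemma inlHom_injective : Function.Injective (inlHom T a) := fun _ _ h => Sum.inl_injective h

lemma pendant_support_isLeft {x y : ι} (p : (pendant T a).Walk (.inl x) (.inl y))
    (hp : p.IsPath) : ∀ v ∈ p.support, v.isLeft = true := by
  intro v hv
  cases v with
  | inl z => rfl
  | inr j =>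
    exfalso
    rw [SimpleGraph.Walk.mem_support_iff_exists_append] at hv
    obtain ⟨q, r, rfl⟩ := hv
    have hqmem : Sum.inl (a j) ∈ q.support := by
      have hrev : Sum.inl (a j) ∈ q.reverse.support := by
        cases hqr : q.reverse with
        | @cons _ w _ h' r₂ =>
          cases w with
          | inl z =>
            have hz : a j = z := h'
            subst hz
            rw [SimpleGraph.Walk.support_cons]
            exact List.mem_cons_of_mem _ (r₂.start_mem_support)
          | inr j' => exact absurd h' (pendant_adj_inr_inr T a)
      rw [SimpleGraph.Walk.support_reverse] at hrev
      exact List.mem_reverse.1 hrev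
    have hrmem : Sum.inl (a j) ∈ r.support.tail := by
      cases hr : r with
      | @cons _ w _ h'' r₃ =>
        cases w with
        | inl z =>
          have hz : a j = z := h''
          subst hz
          rw [SimpleGraph.Walk.support_cons]
          exact r₃.start_mem_support
        | inr j' => exact absurd h'' (pendant_adj_inr_inr T a)
    have hnodup := hp.support_nodup
    rw [SimpleGraph.Walk.support_append] at hnodup
    have hdisj := List.disjoint_of_nodup_append hnodup
    exact hdisj hqmem hrmem

lemma pendant_pullback : ∀ {s z : ι ⊕ J} (p : (pendant T a).Walk s z)
    (_ : ∀ v ∈ p.support, v.isLeft = true) {x y : ι} (hx : s = Sum.inl x)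
    (hz : z = Sum.inl y),
    ∃ q : T.Walk x y, p.copy hx hz = q.map (inlHom T a) := by
  intro s z p
  induction p with
  | nil =>
    intro _ x y hx hz
    subst hx
    obtain rfl := Sum.inl_injective hz
    exact ⟨SimpleGraph.Walk.nil, rfl⟩
  | @cons u v w h p ih =>
    intro hsup x y hx hz
    subst hx
    have hv : v.isLeft = true := by
      refine hsup v ?_
      rw [SimpleGraph.Walk.support_cons]
      exact List.mem_cons_of_mem _ (p.start_mem_support)
    cases v with
    | inr j => simp at hv
    | inl x' =>
      have hadj : T.Adj x x' := h
      obtain ⟨q, hq⟩ := ih (fun w' hw' => hsup w' (by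
        rw [SimpleGraph.Walk.support_cons]; exact List.mem_cons_of_mem _ hw')) rfl hz
      refine ⟨SimpleGraph.Walk.cons hadj q, ?_⟩
      rw [SimpleGraph.Walk.copy_cons, hq, SimpleGraph.Walk.map_cons]
      rfl

lemma pendant_unique_inl (hT : T.IsTree) {x y : ι}
    (p q : (pendant T a).Walk (.inl x) (.inl y)) (hp : p.IsPath) (hq : q.IsPath) : p = q := by
  obtain ⟨_, huniq⟩ := SimpleGraph.isTree_iff_existsUnique_path.1 hT
  obtain ⟨p', hp'⟩ := pendant_pullback T a p (pendant_support_isLeft T a p hp) rfl rfl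
  obtain ⟨q', hq'⟩ := pendant_pullback T a q (pendant_support_isLeft T a q hq) rfl rfl
  rw [SimpleGraph.Walk.copy_rfl_rfl] at hp' hq'
  have hp'path : p'.IsPath := SimpleGraph.Walk.IsPath.of_map (f := inlHom T a) (hp' ▸ hp)
  have hq'path : q'.IsPath := SimpleGraph.Walk.IsPath.of_map (f := inlHom T a) (hq' ▸ hq)
  obtain ⟨pp, -, hppu⟩ := huniq x y
  have : p' = q' := (hppu p' hp'path).trans (hppu q' hq'path).symm
  rw [hp', hq', this]

theorem pendant_isTree (hT : T.IsTree) : (pendant T a).IsTree := by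
  classical
  obtain ⟨⟨x0⟩, huniqT⟩ := SimpleGraph.isTree_iff_existsUnique_path.1 hT
  rw [SimpleGraph.isTree_iff_existsUnique_path]
  refine ⟨⟨Sum.inl x0⟩, ?_⟩
  have hex_inl : ∀ x y : ι, ∃ p : (pendant T a).Walk (.inl x) (.inl y), p.IsPath ∧
      (∀ v ∈ p.support, v.isLeft = true) := by
    intro x y
    obtain ⟨p, hp, -⟩ := huniqT x y
    refine ⟨p.map (inlHom T a),
      SimpleGraph.Walk.map_isPath_of_injective (inlHom_injective T a) hp, ?_⟩
    intro v hv
    change v ∈ (SimpleGraph.Walk.map (inlHom T a) p).support at hv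
    rw [SimpleGraph.Walk.support_map] at hv
    obtain ⟨z, -, rfl⟩ := List.mem_map.1 hv
    rfl
  -- canonical first step out of a pendant vertex
  have hadj0 : ∀ j : J, (pendant T a).Adj (.inr j) (.inl (a j)) := fun j => rfl
  -- uniqueness of paths from a pendant vertex to a left vertex
  have huniq_inr_inl : ∀ (j : J) (y : ι) (p q : (pendant T a).Walk (.inr j) (.inl y)),
      p.IsPath → q.IsPath → p = q := by
    intro j y p q hp hq
    cases p with
    | @cons _ v _ h p₂ =>
      cases q with
      | @cons _ v' _ h' q₂ =>
        cases v with
        | inr j2 => exact absurd h (pendant_adj_inr_inr T a)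
        | inl z =>
          cases v' with
          | inr j2 => exact absurd h' (pendant_adj_inr_inr T a)
          | inl z' =>
            have hz : a j = z := h
            have hz' : a j = z' := h'
            subst hz
            subst hz'
            have hp₂ : p₂.IsPath := ((SimpleGraph.Walk.cons_isPath_iff _ _).1 hp).1
            have hq₂ : q₂.IsPath := ((SimpleGraph.Walk.cons_isPath_iff _ _).1 hq).1
            rw [pendant_unique_inl T a hT p₂ q₂ hp₂ hq₂]
  -- existence of a path from a pendant vertex to a left vertex
  have hex_inr_inl : ∀ (j : J) (y : ι), ∃ p : (pendant T a).Walk (.inr j) (.inl y),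
      p.IsPath ∧ (∀ v ∈ p.support, v = Sum.inr j ∨ v.isLeft = true) := by
    intro j y
    obtain ⟨p0, hp0, hp0l⟩ := hex_inl (a j) y
    refine ⟨SimpleGraph.Walk.cons (hadj0 j) p0, ?_, ?_⟩
    · rw [SimpleGraph.Walk.cons_isPath_iff]
      refine ⟨hp0, fun hmem => ?_⟩
      have := hp0l _ hmem
      simp at this
    · intro v hv
      rw [SimpleGraph.Walk.support_cons] at hv
      rcases List.mem_cons.1 hv with rfl | hv'
      · exact Or.inl rfl
      · exact Or.inr (hp0l _ hv')
  intro v w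
  rcases v with x | j <;> rcases w with y | j'
  · -- inl / inl
    obtain ⟨p, hp, -⟩ := hex_inl x y
    exact ⟨p, hp, fun q hq => pendant_unique_inl T a hT q p hq hp⟩
  · -- inl / inr : reverse of inr/inl
    obtain ⟨p, hp, -⟩ := hex_inr_inl j' x
    refine ⟨p.reverse, hp.reverse, ?_⟩
    intro q hq
    have h1 : q.reverse = p := huniq_inr_inl j' x q.reverse p hq.reverse hp
    calc q = q.reverse.reverse := (SimpleGraph.Walk.reverse_reverse q).symm
      _ = p.reverse := by rw [h1]
  · -- inr / inl
    obtain ⟨p, hp, -⟩ := hex_inr_inl j y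
    exact ⟨p, hp, fun q hq => huniq_inr_inl j y q p hq hp⟩
  · -- inr / inr
    by_cases hjj : j = j'
    · subst hjj
      refine ⟨SimpleGraph.Walk.nil, SimpleGraph.Walk.IsPath.nil, ?_⟩
      intro q hq
      exact SimpleGraph.Walk.isPath_iff_eq_nil.1 hq
    · -- distinct pendant vertices
      obtain ⟨p1, hp1, hp1l⟩ := hex_inr_inl j' (a j)
      have hjnot : Sum.inr j ∉ p1.reverse.support := by
        rw [SimpleGraph.Walk.support_reverse]
        intro hmem
        rcases hp1l _ (List.mem_reverse.1 hmem) with heq | hleft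
        · exact hjj (Sum.inr_injective heq.symm).symm
        · simp at hleft
      refine ⟨SimpleGraph.Walk.cons (hadj0 j) p1.reverse, ?_, ?_⟩
      · exact (SimpleGraph.Walk.cons_isPath_iff _ _).2 ⟨hp1.reverse, hjnot⟩
      · intro q hq
        cases q with
        | nil => exact absurd rfl hjj
        | @cons _ v _ h q₂ =>
          cases v with
          | inr j2 => exact absurd h (pendant_adj_inr_inr T a)
          | inl z =>
            have hz : a j = z := h
            subst hz
            have hq₂ : q₂.IsPath := ((SimpleGraph.Walk.cons_isPath_iff _ _).1 hq).1
            have h2 : q₂.reverse = p1 :=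
              huniq_inr_inl j' (a j) q₂.reverse p1 hq₂.reverse hp1
            have h3 : q₂ = p1.reverse := by
              calc q₂ = q₂.reverse.reverse := (SimpleGraph.Walk.reverse_reverse q₂).symm
                _ = p1.reverse := by rw [h2]
            rw [h3]

end Pendant

/-! ### Induced-subgraph connectivity helpers -/

section Induce
variable {W : Type*} {H : SimpleGraph W}

lemma reachable_induce_of_walk' {S : Set W} :
    ∀ {x y : W} (w : H.Walk x y), (∀ z ∈ w.support, z ∈ S) → ∀ (hx : x ∈ S) (hy : y ∈ S),
    (H.induce S).Reachable ⟨x, hx⟩ ⟨y, hy⟩ := by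
  intro x y w
  induction w with
  | nil => intro _ _ _; exact Reachable.refl _
  | @cons u v y h p ih =>
    intro hsup hx hy
    have hv : v ∈ S := hsup v (by simp)
    have h1 : (H.induce S).Adj ⟨u, hx⟩ ⟨v, hv⟩ := h
    exact (h1.reachable).trans (ih (fun z hz => hsup z (by simp [hz])) hv hy)

lemma reachable_induce_of_walk {S : Set W} {x y : W} (hx : x ∈ S) (hy : y ∈ S)
    (w : H.Walk x y) (hw : ∀ z ∈ w.support, z ∈ S) :
    (H.induce S).Reachable ⟨x, hx⟩ ⟨y, hy⟩ :=
  reachable_induce_of_walk' w hw hx hy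

lemma induce_connected_pointed {S : Set W} {x₀ : W} (hx₀ : x₀ ∈ S)
    (h : ∀ y (_ : y ∈ S), ∃ w : H.Walk y x₀, ∀ z ∈ w.support, z ∈ S) :
    (H.induce S).Connected := by
  rw [SimpleGraph.connected_iff]
  refine ⟨?_, ⟨⟨x₀, hx₀⟩⟩⟩
  rintro ⟨u, hu⟩ ⟨v, hv⟩
  obtain ⟨wu, hwu⟩ := h u hu
  obtain ⟨wv, hwv⟩ := h v hv
  exact (reachable_induce_of_walk hu hx₀ wu hwu).trans
    (reachable_induce_of_walk hv hx₀ wv hwv).symm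

lemma induce_connected_singleton (z : W) : (H.induce {z}).Connected := by
  refine induce_connected_pointed (x₀ := z) rfl ?_
  intro y hy
  have hyz : y = z := hy
  subst hyz
  exact ⟨SimpleGraph.Walk.nil, by simp⟩

lemma walk_in_induce {S : Set W} (h : (H.induce S).Connected) {x y : W}
    (hx : x ∈ S) (hy : y ∈ S) : ∃ w : H.Walk x y, ∀ z ∈ w.support, z ∈ S := by
  obtain ⟨w⟩ := h.preconnected ⟨x, hx⟩ ⟨y, hy⟩
  refine ⟨w.map ⟨Subtype.val, fun {a b} hab => hab⟩, ?_⟩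
  intro z hz
  rw [SimpleGraph.Walk.support_map] at hz
  simp only [List.mem_map] at hz
  obtain ⟨⟨z', hz'⟩, _, rfl⟩ := hz
  exact hz'

end Induce

/-! ### Trivial decomposition -/

def trivDecomp (G : SimpleGraph V) : TreeDecomp G where
  ι := Unit
  tree := ⊥
  bag := fun _ => Set.univ
  is_td := by
    refine ⟨⟨?_, ?_⟩, ?_, ?_⟩
    · rw [SimpleGraph.connected_iff]
      refine ⟨fun u v => by cases u; cases v; exact Reachable.refl _, ⟨()⟩⟩
    · intro v c hc
      cases c with
      | nil => exact hc.ne_nil rfl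
      | cons h p => exact h.elim
    · intro u v _
      exact ⟨(), trivial, trivial⟩
    · intro v
      rw [SimpleGraph.connected_iff]
      constructor
      · rintro ⟨x, hx⟩ ⟨y, hy⟩
        cases x; cases y; exact Reachable.refl _
      · exact ⟨⟨(), by simp⟩⟩

end Stmt1Aux
/-- For every two positive integers μ and t, there is an integer `K` such that
every `K_{t,t}`-free graph `G` with induced matching treewidth at most `μ` has
tree-independence number strictly less than `K`. -/
theorem stmt1 (μ t : ℕ) (hμ : 0 < μ) (ht : 0 < t) :
    ∃ K : ℕ, ∀ (V : Type) [Fintype V] (G : SimpleGraph V),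
      KttFree G t → imTreewidth G ≤ μ → treeIndepNum G < K := by
  classical
  refine ⟨Stmt1Aux.KK μ t, ?_⟩
  intro V _ G hKtt hitw
  have hK : Stmt1Aux.KttF G t := Stmt1Aux.kttF_of_kttFree G hKtt
  -- a decomposition attaining the induced matching treewidth
  have hne : {k | ∃ D : TreeDecomp G, D.mu = k}.Nonempty :=
    ⟨(Stmt1Aux.trivDecomp G).mu, ⟨_, rfl⟩⟩
  obtain ⟨D, hDmu_eq⟩ := Nat.sInf_mem hne
  have hDmu : D.mu ≤ μ := by rw [hDmu_eq]; exact hitw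
  have hbag : ∀ x : D.ι, indMatchNumOn G (D.bag x) ≤ μ := by
    intro x
    have hbdd : BddAbove {k | ∃ x : D.ι, k = indMatchNumOn G (D.bag x)} := by
      refine ⟨Fintype.card V, ?_⟩
      rintro k ⟨x, rfl⟩
      exact Stmt1Aux.indMatchNumOn_le_card G _
    have hmem : indMatchNumOn G (D.bag x) ∈
        {k | ∃ x : D.ι, k = indMatchNumOn G (D.bag x)} := ⟨x, rfl⟩
    exact (le_csSup hbdd hmem).trans hDmu
  -- maximum independent set and satellites
  obtain ⟨I, hI, hImax⟩ := Stmt1Aux.exists_max_indep G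
  set Sat : Finset V := I.filter (fun v => ∀ u : Finset V,
    u ⊆ Stmt1Aux.nbrF G v → Stmt1Aux.FIndep G u → u.card ≤ Stmt1Aux.f1 μ t) with hSat
  have hSatI : Sat ⊆ I := Finset.filter_subset _ _
  have hSatSmall : ∀ v ∈ Sat, ∀ u : Finset V,
      u ⊆ Stmt1Aux.nbrF G v → Stmt1Aux.FIndep G u → u.card ≤ Stmt1Aux.f1 μ t :=
    fun v hv => (Finset.mem_filter.1 hv).2
  have hSatNoAdj : ∀ v ∈ Sat, ∀ w ∈ Sat, ¬ G.Adj v w := by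
    intro v hv w hw hadj
    exact hI v (hSatI hv) w (hSatI hw) (fun hc => G.irrefl (hc ▸ hadj)) hadj
  -- choice of a home node for each vertex
  have hcover : ∀ v : V, ∃ x : D.ι, v ∈ D.bag x := by
    intro v
    obtain ⟨⟨x, hx⟩⟩ := (D.is_td.support_connected v).nonempty
    exact ⟨x, hx⟩
  set aFun : V → D.ι := fun v => (hcover v).choose with haFun
  have haBag : ∀ v, v ∈ D.bag (aFun v) := fun v => (hcover v).choose_spec
  -- the new tree and bags
  set P2 := Stmt1Aux.pendant D.tree aFun with hP2
  set bag' : D.ι ⊕ V → Set V := Sum.elim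
    (fun x => {u | (u ∈ D.bag x ∧ u ∉ Sat) ∨ (∃ v ∈ Sat, v ∈ D.bag x ∧ G.Adj v u)})
    (fun v => if v ∈ Sat then {u | u = v ∨ G.Adj v u} else ∅) with hbag'
  have hbagl : ∀ x u, u ∈ bag' (Sum.inl x) ↔
      ((u ∈ D.bag x ∧ u ∉ Sat) ∨ (∃ v ∈ Sat, v ∈ D.bag x ∧ G.Adj v u)) := by
    intro x u
    rw [hbag']
    simp only [Sum.elim_inl, Set.mem_setOf_eq]
  have hbagr : ∀ v u, u ∈ bag' (Sum.inr v) ↔ (v ∈ Sat ∧ (u = v ∨ G.Adj v u)) := by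
    intro v u
    rw [hbag']
    simp only [Sum.elim_inr]
    by_cases hv : v ∈ Sat
    · simp [hv]
    · simp [hv]
  -- lifted walks in the support of a vertex
  have hlift : ∀ (w0 : V) (x1 x2 : D.ι), w0 ∈ D.bag x1 → w0 ∈ D.bag x2 →
      ∃ w : P2.Walk (Sum.inl x1) (Sum.inl x2),
        ∀ z ∈ w.support, ∃ x, z = Sum.inl x ∧ w0 ∈ D.bag x := by
    intro w0 x1 x2 h1 h2
    obtain ⟨w, hw⟩ := Stmt1Aux.walk_in_induce (D.is_td.support_connected w0)
      (show x1 ∈ {x | w0 ∈ D.bag x} from h1) (show x2 ∈ {x | w0 ∈ D.bag x} from h2)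
    refine ⟨w.map (Stmt1Aux.inlHom D.tree aFun), ?_⟩
    intro z hz
    change z ∈ (SimpleGraph.Walk.map (Stmt1Aux.inlHom D.tree aFun) w).support at hz
    rw [SimpleGraph.Walk.support_map] at hz
    obtain ⟨x, hx, rfl⟩ := List.mem_map.1 hz
    exact ⟨x, rfl, hw x hx⟩
  -- the new tree decomposition
  have histd : IsTreeDecomp G P2 bag' := by
    refine ⟨Stmt1Aux.pendant_isTree _ _ D.is_td.isTree, ?_, ?_⟩
    · -- edges
      intro u v hadj
      by_cases hv : v ∈ Sat
      · refine ⟨Sum.inr v, ?_, ?_⟩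
        · exact (hbagr v u).2 ⟨hv, Or.inr hadj.symm⟩
        · exact (hbagr v v).2 ⟨hv, Or.inl rfl⟩
      · by_cases hu : u ∈ Sat
        · refine ⟨Sum.inr u, ?_, ?_⟩
          · exact (hbagr u u).2 ⟨hu, Or.inl rfl⟩
          · exact (hbagr u v).2 ⟨hu, Or.inr hadj⟩
        · obtain ⟨x, hx1, hx2⟩ := D.is_td.edge_mem hadj
          exact ⟨Sum.inl x, (hbagl x u).2 (Or.inl ⟨hx1, hu⟩),
            (hbagl x v).2 (Or.inl ⟨hx2, hv⟩)⟩
    · -- supports connected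
      intro u
      by_cases hu : u ∈ Sat
      · -- the support is the singleton {inr u}
        have hSeq : {y | u ∈ bag' y} = {Sum.inr u} := by
          ext y
          simp only [Set.mem_setOf_eq, Set.mem_singleton_iff]
          constructor
          · intro hy
            rcases y with x | v
            · exfalso
              rcases (hbagl x u).1 hy with ⟨_, hnot⟩ | ⟨v, hvS, _, hadj⟩
              · exact hnot hu
              · exact hSatNoAdj v hvS u hu hadj
            · obtain ⟨hvS, hor⟩ := (hbagr v u).1 hy
              rcases hor with rfl | hadj
              · rfl
              · exact absurd hadj (hSatNoAdj v hvS u hu)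
          · rintro rfl
            exact (hbagr u u).2 ⟨hu, Or.inl rfl⟩
        rw [hSeq]
        exact Stmt1Aux.induce_connected_singleton _
      · -- pointed connectivity towards inl (aFun u)
        have hx0 : Sum.inl (aFun u) ∈ {y | u ∈ bag' y} :=
          (hbagl _ u).2 (Or.inl ⟨haBag u, hu⟩)
        refine Stmt1Aux.induce_connected_pointed hx0 ?_
        -- route from any inl node in the support of a satellite neighbour v
        have hroute : ∀ (v : V), v ∈ Sat → G.Adj v u → ∀ (x : D.ι), v ∈ D.bag x →
            ∃ w : P2.Walk (Sum.inl x) (Sum.inl (aFun u)),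
              ∀ z ∈ w.support, u ∈ bag' z := by
          intro v hvS hadj x hvx
          obtain ⟨x1, hx1v, hx1u⟩ := D.is_td.edge_mem hadj
          obtain ⟨w1, hw1⟩ := hlift v x x1 hvx hx1v
          obtain ⟨w2, hw2⟩ := hlift u x1 (aFun u) hx1u (haBag u)
          refine ⟨w1.append w2, ?_⟩
          intro z hz
          rw [SimpleGraph.Walk.support_append] at hz
          rcases List.mem_append.1 hz with hz1 | hz2
          · obtain ⟨x', rfl, hx'⟩ := hw1 z hz1
            exact (hbagl x' u).2 (Or.inr ⟨v, hvS, hx', hadj⟩)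
          · obtain ⟨x', rfl, hx'⟩ := hw2 z (List.mem_of_mem_tail hz2)
            exact (hbagl x' u).2 (Or.inl ⟨hx', hu⟩)
        intro y hy
        rcases y with x | v
        · rcases (hbagl x u).1 hy with ⟨hxu, -⟩ | ⟨v, hvS, hvx, hadj⟩
          · obtain ⟨w, hw⟩ := hlift u x (aFun u) hxu (haBag u)
            refine ⟨w, ?_⟩
            intro z hz
            obtain ⟨x', rfl, hx'⟩ := hw z hz
            exact (hbagl x' u).2 (Or.inl ⟨hx', hu⟩)
          · obtain ⟨w, hw⟩ := hroute v hvS hadj x hvx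
            exact ⟨w, hw⟩
        · obtain ⟨hvS, hor⟩ := (hbagr v u).1 hy
          have hadj : G.Adj v u := by
            rcases hor with rfl | hadj
            · exact absurd hvS hu
            · exact hadj
          obtain ⟨w, hw⟩ := hroute v hvS hadj (aFun v) (haBag v)
          have hstep : P2.Adj (Sum.inr v) (Sum.inl (aFun v)) := rfl
          refine ⟨SimpleGraph.Walk.cons hstep w, ?_⟩
          intro z hz
          rw [SimpleGraph.Walk.support_cons] at hz
          rcases List.mem_cons.1 hz with rfl | hz'
          · exact hy
          · exact hw z hz'
  -- the new decomposition and its independence number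
  set D' : TreeDecomp G := ⟨D.ι ⊕ V, P2, bag', histd⟩ with hD'
  have hbound : ∀ y : D.ι ⊕ V, indepNumOn G (bag' y) ≤
      Stmt1Aux.gR μ t + Stmt1Aux.s0 μ t + Stmt1Aux.gR μ t * Stmt1Aux.f1 μ t
        + Stmt1Aux.f1 μ t := by
    intro y
    apply Stmt1Aux.indepNumOn_le
    intro s hsX hsInd
    rcases y with x | v
    · -- a main bag
      set s3 := s.filter (fun w => ∃ v ∈ Sat, v ∈ D.bag x ∧ G.Adj v w) with hs3
      set rest := s.filter (fun w => ¬ ∃ v ∈ Sat, v ∈ D.bag x ∧ G.Adj v w) with hrest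
      have hrestmem : ∀ w ∈ rest, w ∈ D.bag x ∧ w ∉ Sat := by
        intro w hw
        rw [hrest, Finset.mem_filter] at hw
        rcases (hbagl x w).1 (hsX hw.1) with h1 | h2
        · exact h1
        · exact absurd h2 hw.2
      set s1 := rest.filter (fun w => w ∉ I) with hs1
      set s2 := rest.filter (fun w => w ∈ I) with hs2
      have hcard3 : s3.card + rest.card = s.card :=
        Finset.card_filter_add_card_filter_not _
      have hcard12 : s2.card + s1.card = rest.card := by
        rw [hs1, hs2]
        exact Finset.card_filter_add_card_filter_not _
      have hb1 : s1.card < Stmt1Aux.gR μ t := by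
        refine Stmt1Aux.claimC G ht hK (hbag x) hI hImax
          (Stmt1Aux.FIndep.subset G hsInd ((Finset.filter_subset _ _).trans
            (Finset.filter_subset _ _))) ?_ ?_
        · intro w hw
          exact (hrestmem w ((Finset.filter_subset _ _) hw)).1
        · intro w hw
          exact (Finset.mem_filter.1 hw).2
      have hb2 : s2.card < Stmt1Aux.s0 μ t := by
        refine Stmt1Aux.claimE G ht hK (hbag x) hI ?_ ?_ ?_
        · intro w hw
          exact (Finset.mem_filter.1 hw).2
        · intro w hw
          exact (hrestmem w ((Finset.filter_subset _ _) hw)).1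
        · intro w hw
          have hwrest := (Finset.filter_subset _ _) hw
          have hwnotSat := (hrestmem w hwrest).2
          have hwI := (Finset.mem_filter.1 hw).2
          have hnotSmall : ¬ (∀ u : Finset V, u ⊆ Stmt1Aux.nbrF G w →
              Stmt1Aux.FIndep G u → u.card ≤ Stmt1Aux.f1 μ t) := by
            intro hsm
            exact hwnotSat (by rw [hSat]; exact Finset.mem_filter.2 ⟨hwI, hsm⟩)
          push_neg at hnotSmall
          obtain ⟨u0, hu0sub, hu0ind, hu0card⟩ := hnotSmall
          obtain ⟨Tw, hTwsub, hTwcard⟩ := Finset.exists_subset_card_eq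
            (show Stmt1Aux.f1 μ t ≤ u0.card by omega)
          exact ⟨Tw, hTwsub.trans hu0sub, Stmt1Aux.FIndep.subset G hu0ind hTwsub, hTwcard⟩
      have hb3 : s3.card ≤ Stmt1Aux.gR μ t * Stmt1Aux.f1 μ t := by
        refine Stmt1Aux.claimP G ht hK (hbag x) hI
          (Stmt1Aux.FIndep.subset G hsInd (Finset.filter_subset _ _)) ?_
        intro w hw
        obtain ⟨v, hvS, hvx, hadj⟩ := (Finset.mem_filter.1 hw).2
        exact ⟨v, hSatI hvS, hvx, hadj, hSatSmall v hvS⟩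
      omega
    · -- a pendant bag
      by_cases hv : v ∈ Sat
      · by_cases hvs : v ∈ s
        · -- then s = {v}
          have hsub : s ⊆ {v} := by
            intro w hw
            rw [Finset.mem_singleton]
            by_contra hne
            have := (hbagr v w).1 (hsX hw)
            rcases this.2 with rfl | hadj
            · exact hne rfl
            · exact hsInd v hvs w hw (fun hc => hne hc.symm) hadj
          have := Finset.card_le_card hsub
          simp only [Finset.card_singleton] at this
          have hf1 := Stmt1Aux.f1_pos (μm := μ) ht
          omega
        · -- s consists of neighbours of v
          have hsub : s ⊆ Stmt1Aux.nbrF G v := by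
            intro w hw
            rcases ((hbagr v w).1 (hsX hw)).2 with rfl | hadj
            · exact absurd hw hvs
            · exact (Stmt1Aux.mem_nbrF G).2 hadj
          have := hSatSmall v hv s hsub hsInd
          omega
      · -- empty bag
        have : s = ∅ := by
          rw [← Finset.subset_empty]
          intro w hw
          have := (hbagr v w).1 (hsX hw)
          exact absurd this.1 hv
        simp [this]
  have halpha : D'.alpha ≤ Stmt1Aux.gR μ t + Stmt1Aux.s0 μ t
      + Stmt1Aux.gR μ t * Stmt1Aux.f1 μ t + Stmt1Aux.f1 μ t := by
    apply csSup_le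
    · obtain ⟨x0⟩ := D.is_td.isTree.isConnected.nonempty
      exact ⟨indepNumOn G (bag' (Sum.inl x0)), ⟨Sum.inl x0, rfl⟩⟩
    · rintro k ⟨y, rfl⟩
      exact hbound y
  have htin : treeIndepNum G ≤ D'.alpha := Nat.sInf_le ⟨D', rfl⟩
  have hKKeq : Stmt1Aux.KK μ t = Stmt1Aux.gR μ t + Stmt1Aux.s0 μ t
      + Stmt1Aux.gR μ t * Stmt1Aux.f1 μ t + Stmt1Aux.f1 μ t + 2 := by
    rw [Stmt1Aux.KK]
  omega
end

section
/- (Kővári–Sós–Turán) For every fixed integer t ≥ 1, every graph on n vertices that does not contain K_{t,t} as a (not necessarily induced) subgraph has at most ((t−1)^{1/t}/2) · n^{2−1/t} + tn/2 edges. -/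
open Finset in
lemma key_count (t : ℕ) (ht : 1 ≤ t) (V : Type) [Fintype V] (G : SimpleGraph V)
    [DecidableRel G.Adj] (h : ¬ HasKttSubgraph G t) :
    ∑ v : V, (G.degree v).choose t ≤ (t - 1) * (Fintype.card V).choose t := by
  classical
  have hA : ∀ A ∈ (univ : Finset V).powersetCard t,
      (univ.filter fun v => A ⊆ G.neighborFinset v).card ≤ t - 1 := by
    intro A hAmem
    rw [mem_powersetCard] at hAmem
    by_contra hcon
    push_neg at hcon
    have hge : t ≤ (univ.filter fun v => A ⊆ G.neighborFinset v).card := by omega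
    obtain ⟨B, hBsub, hBcard⟩ := Finset.exists_subset_card_eq hge
    apply h
    refine ⟨A, B, ?_, hAmem.2, hBcard, ?_⟩
    · rw [Finset.disjoint_left]
      intro a haA haB
      have := (Finset.mem_filter.1 (hBsub haB)).2 haA
      exact G.irrefl ((G.mem_neighborFinset _ _).1 this)
    · intro a haA b hbB
      have := (Finset.mem_filter.1 (hBsub hbB)).2 haA
      exact ((G.mem_neighborFinset _ _).1 this).symm
  calc ∑ v : V, (G.degree v).choose t
      = ∑ v : V, ((univ.powersetCard t).filter fun A => A ⊆ G.neighborFinset v).card := by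
        refine Finset.sum_congr rfl fun v _ => ?_
        rw [← SimpleGraph.card_neighborFinset_eq_degree, ← Finset.card_powersetCard]
        congr 1
        ext A
        simp [Finset.mem_powersetCard, Finset.mem_filter]
        tauto
    _ = ∑ A ∈ univ.powersetCard t, (univ.filter fun v => A ⊆ G.neighborFinset v).card := by
        simp_rw [Finset.card_filter]
        exact Finset.sum_comm
    _ ≤ ∑ _A ∈ univ.powersetCard t, (t - 1) := Finset.sum_le_sum hA
    _ = (t - 1) * (Fintype.card V).choose t := by
        rw [Finset.sum_const, smul_eq_mul, Finset.card_powersetCard, Finset.card_univ, mul_comm]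

lemma pow_le_descFactorial (n t : ℕ) : (n + 1 - t) ^ t ≤ n.descFactorial t := by
  rw [Nat.descFactorial_eq_prod_range]
  calc (n + 1 - t) ^ t = ∏ _i ∈ Finset.range t, (n + 1 - t) := by
        rw [Finset.prod_const, Finset.card_range]
    _ ≤ ∏ i ∈ Finset.range t, (n - i) := Finset.prod_le_prod' fun i hi => ?_
  rw [Finset.mem_range] at hi
  omega

/-- Kővári–Sós–Turán: every `n`-vertex graph with no `K_{t,t}` subgraph
has at most `(t-1)^{1/t}/2 * n^{2-1/t} + t*n/2` edges. -/
theorem stmt2 (t : ℕ) (ht : 1 ≤ t) (V : Type) [Fintype V] (G : SimpleGraph V)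
    (h : ¬ HasKttSubgraph G t) :
    (G.edgeSet.ncard : ℝ) ≤
      ((t : ℝ) - 1) ^ ((1 : ℝ) / (t : ℝ)) / 2 *
        (Fintype.card V : ℝ) ^ ((2 : ℝ) - 1 / (t : ℝ)) +
      (t : ℝ) * (Fintype.card V : ℝ) / 2 := by
  classical
  haveI : DecidableRel G.Adj := Classical.decRel _
  set n := Fintype.card V with hn
  have hm : G.edgeSet.ncard = G.edgeFinset.card := by
    rw [Set.ncard_eq_toFinset_card']
    congr 1
  set m := G.edgeFinset.card with hmdef
  have hsum : ∑ v : V, G.degree v = 2 * m := G.sum_degrees_eq_twice_card_edges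
  have hkey := key_count t ht V G h
  set a : V → ℕ := fun v => G.degree v + 1 - t with ha
  have h2m : 2 * m ≤ (∑ v : V, a v) + (t - 1) * n := by
    calc 2 * m = ∑ v : V, G.degree v := hsum.symm
      _ ≤ ∑ v : V, (a v + (t - 1)) := Finset.sum_le_sum fun v _ => show G.degree v ≤ G.degree v + 1 - t + (t - 1) by omega
      _ = (∑ v : V, a v) + (t - 1) * n := by
          rw [Finset.sum_add_distrib, Finset.sum_const, Finset.card_univ, smul_eq_mul]
          ring_nf
          rw [← hn]
          ring
  have hpowsum : ∑ v : V, (a v) ^ t ≤ (t - 1) * n ^ t := by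
    calc ∑ v : V, (a v) ^ t ≤ ∑ v : V, (G.degree v).descFactorial t :=
          Finset.sum_le_sum fun v _ => pow_le_descFactorial _ _
      _ = ∑ v : V, t.factorial * (G.degree v).choose t := by
          simp [Nat.descFactorial_eq_factorial_mul_choose]
      _ = t.factorial * ∑ v : V, (G.degree v).choose t := (Finset.mul_sum _ _ _).symm
      _ ≤ t.factorial * ((t - 1) * n.choose t) := Nat.mul_le_mul_left _ hkey
      _ = (t - 1) * (t.factorial * n.choose t) := by ring
      _ = (t - 1) * n.descFactorial t := by rw [Nat.descFactorial_eq_factorial_mul_choose]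
      _ ≤ (t - 1) * n ^ t := Nat.mul_le_mul_left _ (Nat.descFactorial_le_pow _ _)
  -- move to the reals
  have ht0 : (0 : ℝ) < (t : ℝ) := by exact_mod_cast ht
  have ht1 : (0 : ℝ) ≤ (t : ℝ) - 1 := by
    have : (1 : ℝ) ≤ (t : ℝ) := by exact_mod_cast ht
    linarith
  rcases Nat.eq_zero_or_pos n with hn0 | hn1
  · have hE : IsEmpty V := Fintype.card_eq_zero_iff.mp hn0
    have hm0 : m = 0 := by
      have hz : ∑ v : V, G.degree v = 0 := by simp
      omega
    rw [hm, hm0, hn0]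
    have hexp : ((2 : ℝ) - 1 / (t : ℝ)) ≠ 0 := by
      have : 1 / (t : ℝ) ≤ 1 := by
        rw [div_le_one ht0]; exact_mod_cast ht
      intro hc; rw [sub_eq_zero] at hc; linarith [hc]
    simp only [Nat.cast_zero]
    rw [Real.zero_rpow hexp]
    norm_num
  · set A : ℝ := ((∑ v : V, a v : ℕ) : ℝ) with hA
    have hA0 : (0 : ℝ) ≤ A := by positivity
    have hN0 : (0 : ℝ) ≤ (n : ℝ) := by positivity
    have hN1 : (0 : ℝ) < (n : ℝ) := by exact_mod_cast hn1
    -- power mean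
    have hPM : A ^ t / (n : ℝ) ^ (t - 1) ≤ ∑ v : V, ((a v : ℝ)) ^ t := by
      have := pow_sum_div_card_le_sum_pow (s := (Finset.univ : Finset V))
        (f := fun v => (a v : ℝ)) (fun i _ => by positivity) (t - 1)
      rwa [show t - 1 + 1 = t from by omega, Finset.card_univ, ← hn, ← Nat.cast_sum] at this
    have hAt : A ^ t ≤ ((t : ℝ) - 1) * (n : ℝ) ^ (2 * t - 1) := by
      have h1 : A ^ t ≤ (n : ℝ) ^ (t - 1) * ∑ v : V, ((a v : ℝ)) ^ t := by
        rw [div_le_iff₀ (by positivity)] at hPM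
        linarith [hPM]
      have h2 : (∑ v : V, ((a v : ℝ)) ^ t) ≤ ((t : ℝ) - 1) * (n : ℝ) ^ t := by
        have := (Nat.cast_le (α := ℝ)).2 hpowsum
        push_cast [Nat.cast_sub ht] at this
        convert this using 2
      calc A ^ t ≤ (n : ℝ) ^ (t - 1) * (((t : ℝ) - 1) * (n : ℝ) ^ t) := by
            refine h1.trans ?_
            exact mul_le_mul_of_nonneg_left h2 (by positivity)
        _ = ((t : ℝ) - 1) * (n : ℝ) ^ (2 * t - 1) := by
            rw [show 2 * t - 1 = (t - 1) + t by omega, pow_add]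
            ring
    have hfinal : A ≤ ((t : ℝ) - 1) ^ ((1 : ℝ) / (t : ℝ)) *
        (n : ℝ) ^ ((2 : ℝ) - 1 / (t : ℝ)) := by
      have e1 : A = (A ^ t) ^ ((1 : ℝ) / (t : ℝ)) := by
        rw [← Real.rpow_natCast A t, ← Real.rpow_mul hA0, mul_one_div,
          div_self (ne_of_gt ht0), Real.rpow_one]
      have e2 : (A ^ t) ^ ((1 : ℝ) / (t : ℝ)) ≤
          ((((t : ℝ) - 1) * (n : ℝ) ^ (2 * t - 1))) ^ ((1 : ℝ) / (t : ℝ)) :=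
        Real.rpow_le_rpow (by positivity) hAt (by positivity)
      have e3 : ((((t : ℝ) - 1) * (n : ℝ) ^ (2 * t - 1))) ^ ((1 : ℝ) / (t : ℝ)) =
          ((t : ℝ) - 1) ^ ((1 : ℝ) / (t : ℝ)) * (n : ℝ) ^ ((2 : ℝ) - 1 / (t : ℝ)) := by
        rw [Real.mul_rpow ht1 (by positivity), ← Real.rpow_natCast (n : ℝ) (2 * t - 1),
          ← Real.rpow_mul hN0]
        congr 1
        have : ((2 * t - 1 : ℕ) : ℝ) = 2 * (t : ℝ) - 1 := by
          push_cast [Nat.cast_sub (by omega : 1 ≤ 2 * t)]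
          ring
        rw [this]
        field_simp
      rw [e1]
      exact e2.trans (le_of_eq e3)
    have h2mr : 2 * (m : ℝ) ≤ A + ((t : ℝ) - 1) * (n : ℝ) := by
      have h' := (Nat.cast_le (α := ℝ)).2 h2m
      push_cast [Nat.cast_sub ht] at h'
      have hAs : A = ∑ x : V, ((a x : ℝ)) := Nat.cast_sum _ _
      linarith [h', hAs.ge, hAs.le]
    rw [hm]
    have : ((t : ℝ) - 1) * (n : ℝ) ≤ (t : ℝ) * (n : ℝ) := by nlinarith
    linarith [hfinal, h2mr, this]
end

section
/- For every integer t ≥ 1 there exists an integer n_t such that for every n ≥ n_t, every graph on n vertices that does not contain K_{t,t} as a (not necessarily induced) subgraph has at most n^{2−1/t} edges. -/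
open Finset

lemma sub_aux {t : ℕ} (ht : 1 ≤ t) (d : ℕ) : d - (t-1) = d + 1 - t := by omega

lemma key {V : Type} [Fintype V] [DecidableEq V] (G : SimpleGraph V) [DecidableRel G.Adj]
    {t : ℕ} (ht : 1 ≤ t) (hK : ¬ HasKttSubgraph G t) :
    ∑ v : V, (G.degree v - (t-1))^t ≤ (t-1) * (Fintype.card V)^t := by
  classical
  set S : Finset (V × (Fin t → V)) :=
    univ.filter (fun p => Function.Injective p.2 ∧ ∀ i, G.Adj p.1 (p.2 i)) with hS
  -- lower bound
  have hlow : ∑ v : V, (G.degree v - (t-1))^t ≤ S.card := by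
    rw [card_eq_sum_card_fiberwise (f := Prod.fst) (t := univ) (fun x _ => mem_univ _)]
    refine Finset.sum_le_sum fun v _ => ?_
    have hcard : (S.filter fun x => x.1 = v).card
        = Fintype.card {f : Fin t → V // Function.Injective f ∧ ∀ i, G.Adj v (f i)} := by
      rw [Fintype.card_subtype]
      apply Finset.card_bij (fun p _ => p.2)
      · intro p hp
        simp only [hS, mem_filter, mem_univ, true_and] at hp ⊢
        exact ⟨hp.1.1, hp.2 ▸ hp.1.2⟩
      · intro p hp q hq h
        simp only [hS, mem_filter] at hp hq
        exact Prod.ext (hp.2.trans hq.2.symm) h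
      · intro f hf
        simp only [mem_filter, mem_univ, true_and] at hf
        exact ⟨(v, f), by simp [hS, hf.1, hf.2], rfl⟩
    rw [hcard]
    have hequiv : {f : Fin t → V // Function.Injective f ∧ ∀ i, G.Adj v (f i)}
        ≃ (Fin t ↪ (G.neighborFinset v)) := by
      refine ⟨fun f => ⟨fun i => ⟨f.1 i, by simpa [G.mem_neighborFinset] using f.2.2 i⟩,
          fun i j h => f.2.1 (by simpa using h)⟩,
        fun e => ⟨fun i => (e i).1, fun i j h => e.injective (Subtype.ext h),
          fun i => by have := (e i).2; rw [G.mem_neighborFinset] at this; exact this⟩,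
        fun f => rfl, fun e => by ext i; rfl⟩
    have hcard2 : Fintype.card {f : Fin t → V // Function.Injective f ∧ ∀ i, G.Adj v (f i)}
        = (G.degree v).descFactorial t := by
      rw [Fintype.card_congr hequiv]
      rw [Fintype.card_embedding_eq]
      rw [Fintype.card_coe]
      rw [Fintype.card_fin]
      rw [SimpleGraph.card_neighborFinset_eq_degree]
    rw [hcard2]
    rw [sub_aux ht]
    exact Nat.pow_sub_le_descFactorial _ _
  -- upper bound
  have hup : S.card ≤ (t-1) * (Fintype.card V)^t := by
    rw [card_eq_sum_card_fiberwise (f := Prod.snd) (t := univ) (fun x _ => mem_univ _)]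
    calc ∑ f : Fin t → V, (S.filter fun x => x.2 = f).card
        ≤ ∑ _f : Fin t → V, (t-1) := by
          refine Finset.sum_le_sum fun f _ => ?_
          by_cases hinj : Function.Injective f
          · -- common neighbor count ≤ t-1
            have hsub : (S.filter fun x => x.2 = f) ⊆
                (univ.filter fun v : V => ∀ i, G.Adj v (f i)).image (fun v => (v, f)) := by
              intro p hp
              simp only [hS, mem_filter, mem_univ, true_and] at hp
              simp only [mem_image, mem_filter, mem_univ, true_and]
              exact ⟨p.1, hp.2 ▸ hp.1.2, by rw [← hp.2]⟩
            have hC : (univ.filter fun v : V => ∀ i, G.Adj v (f i)).card ≤ t - 1 := by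
              by_contra hc
              push_neg at hc
              have hc' : t ≤ (univ.filter fun v : V => ∀ i, G.Adj v (f i)).card := by omega
              obtain ⟨B, hBsub, hBcard⟩ := Finset.exists_subset_card_eq hc'
              apply hK
              refine ⟨Finset.image f univ, B, ?_, ?_, hBcard, ?_⟩
              · rw [Finset.disjoint_left]
                rintro a ha haB
                simp only [mem_image, mem_univ, true_and] at ha
                obtain ⟨i, rfl⟩ := ha
                have := (Finset.mem_filter.mp (hBsub haB)).2 i
                exact G.loopless.irrefl _ this
              · rw [Finset.card_image_of_injective _ hinj, card_univ, Fintype.card_fin]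
              · rintro a ha b hb
                simp only [mem_image, mem_univ, true_and] at ha
                obtain ⟨i, rfl⟩ := ha
                exact ((Finset.mem_filter.mp (hBsub hb)).2 i).symm
            calc (S.filter fun x => x.2 = f).card
                ≤ ((univ.filter fun v : V => ∀ i, G.Adj v (f i)).image (fun v => (v, f))).card :=
                  Finset.card_le_card hsub
              _ ≤ _ := le_trans (Finset.card_image_le) hC
          · have : (S.filter fun x => x.2 = f) = ∅ := by
              rw [Finset.eq_empty_iff_forall_notMem]
              intro p hp
              simp only [hS, mem_filter, mem_univ, true_and] at hp
              exact hinj (hp.2 ▸ hp.1.1)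
            simp [this]
      _ = (t-1) * (Fintype.card V)^t := by
          rw [Finset.sum_const, card_univ, smul_eq_mul, mul_comm,
            Fintype.card_fun, Fintype.card_fin]
  exact hlow.trans hup

lemma cast_sub_ge (a b : ℕ) : (a:ℝ) - b ≤ ((a - b : ℕ):ℝ) := by
  rcases le_total b a with h|h
  · rw [Nat.cast_sub h]
  · rw [Nat.sub_eq_zero_of_le h]
    have := (Nat.cast_le (α := ℝ)).mpr h
    push_cast
    linarith

lemma pow32 {t : ℕ} (h : 2 ≤ t) : (t:ℝ) ≤ (3/2)^t := by
  induction t with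
  | zero => omega
  | succ s ih =>
    rcases Nat.lt_or_ge s 2 with hs|hs
    · interval_cases s
      · omega
      · norm_num
    · have h1 := ih hs
      have h2 : (2:ℝ) ≤ s := by exact_mod_cast hs
      have h3 : (0:ℝ) ≤ (3/2:ℝ)^s := by positivity
      push_cast
      calc (s:ℝ) + 1 ≤ (3/2) * s := by linarith
        _ ≤ (3/2) * (3/2)^s := by nlinarith
        _ = (3/2)^(s+1) := by ring


/-- for every `t ≥ 1` there exists `n_t` such that for every `n ≥ n_t`,
every `n`-vertex graph with no `K_{t,t}` subgraph has at most `n^{2-1/t}` edges. -/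
theorem stmt3 (t : ℕ) (ht : 1 ≤ t) :
    ∃ n_t : ℕ, ∀ n : ℕ, n_t ≤ n →
      ∀ (V : Type) [Fintype V] (G : SimpleGraph V),
        Fintype.card V = n → ¬ HasKttSubgraph G t →
        (G.edgeSet.ncard : ℝ) ≤ (n : ℝ) ^ ((2 : ℝ) - 1 / (t : ℝ)) := by
  refine ⟨4 * t^2, fun n hn V _ G hcardV hK => ?_⟩
  classical
  rcases eq_or_lt_of_le ht with ht1|ht2
  · -- t = 1 : no edges at all
    have hempty : G.edgeSet = ∅ := by
      ext e
      simp only [Set.mem_empty_iff_false, iff_false]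
      induction e with
      | h a b =>
        intro he
        rw [SimpleGraph.mem_edgeSet] at he
        exact hK ⟨{a}, {b}, Finset.disjoint_singleton.mpr (G.ne_of_adj he),
          by simp [← ht1], by simp [← ht1], by simpa using he⟩
    rw [hempty]
    simpa using Real.rpow_nonneg (Nat.cast_nonneg n) _
  -- t ≥ 2
  have ht2' : 2 ≤ t := ht2
  have htR : (1:ℝ) ≤ t := by exact_mod_cast ht
  have htR2 : (2:ℝ) ≤ t := by exact_mod_cast ht2'
  have hn4 : 4 ≤ n := le_trans (by nlinarith) hn
  have hn0 : (0:ℝ) < n := by positivity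
  have hn1 : (1:ℝ) ≤ n := by exact_mod_cast Nat.one_le_iff_ne_zero.mpr (by omega)
  set m : ℕ := G.edgeFinset.card with hm
  have hncard : G.edgeSet.ncard = m := by
    rw [hm, SimpleGraph.edgeFinset, Set.ncard_eq_toFinset_card']
  rw [hncard]
  by_contra hcon
  push_neg at hcon
  set P : ℝ := (n:ℝ) ^ ((2:ℝ) - 1 / t) with hP
  have hP0 : 0 < P := Real.rpow_pos_of_pos hn0 _
  have hm0 : (0:ℝ) < m := lt_trans hP0 hcon
  -- (t-1) * n ≤ P / 2
  have hlinear : ((t:ℝ) - 1) * n ≤ P / 2 := by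
    have hexp : (1:ℝ)/2 ≤ 1 - 1/t := by
      have h1t : (1:ℝ)/t ≤ 1/2 :=
        div_le_div_of_nonneg_left (by norm_num) (by norm_num) htR2
      linarith
    have hsq : 2 * ((t:ℝ) - 1) ≤ (n:ℝ) ^ ((1:ℝ)/2) := by
      rw [← Real.sqrt_eq_rpow]
      refine Real.le_sqrt_of_sq_le ?_
      have hnR : (4:ℝ) * t^2 ≤ n := by exact_mod_cast hn
      nlinarith
    have h2 : (n:ℝ) ^ ((1:ℝ)/2) ≤ (n:ℝ) ^ ((1:ℝ) - 1/t) :=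
      Real.rpow_le_rpow_of_exponent_le hn1 hexp
    have hPsplit : P = (n:ℝ) ^ ((1:ℝ) - 1/t) * n := by
      rw [hP, show ((2:ℝ) - 1/t) = ((1:ℝ) - 1/t) + 1 by ring, Real.rpow_add hn0,
        Real.rpow_one]
    rw [hPsplit]
    have : 2 * ((t:ℝ) - 1) * n ≤ (n:ℝ) ^ ((1:ℝ) - 1/t) * n :=
      mul_le_mul_of_nonneg_right (hsq.trans h2) hn0.le
    linarith
  -- sum of degrees
  have hsumdeg : (∑ v : V, (G.degree v : ℝ)) = 2 * m := by
    have h := G.sum_degrees_eq_twice_card_edges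
    have := congrArg (fun k : ℕ => (k:ℝ)) h
    push_cast at this
    exact this
  set f : V → ℝ := fun v => ((G.degree v - (t-1) : ℕ) : ℝ) with hf
  have hfnonneg : ∀ v, 0 ≤ f v := fun v => Nat.cast_nonneg _
  have hsumf : (3/2:ℝ) * m ≤ ∑ v : V, f v := by
    have h1 : ∑ v : V, ((G.degree v : ℝ) - ((t:ℝ)-1)) ≤ ∑ v : V, f v := by
      refine Finset.sum_le_sum fun v _ => ?_
      have := cast_sub_ge (G.degree v) (t-1)
      rw [hf]
      have hcast : ((t - 1 : ℕ):ℝ) = (t:ℝ) - 1 := by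
        push_cast [Nat.cast_sub ht]; ring
      simpa [hcast] using this
    rw [Finset.sum_sub_distrib, hsumdeg, Finset.sum_const, Finset.card_univ, hcardV,
      nsmul_eq_mul] at h1
    have : ((t:ℝ)-1) * n ≤ m / 2 := le_trans hlinear (by linarith)
    linarith [h1, this]
  -- Jensen
  have hjensen := pow_sum_div_card_le_sum_pow (s := Finset.univ) (f := f)
    (fun i _ => hfnonneg i) (t-1)
  rw [Nat.sub_add_cancel ht, Finset.card_univ, hcardV] at hjensen
  -- key bound, cast to ℝ
  have hkeyR : (∑ v : V, (f v)^t) ≤ ((t:ℝ) - 1) * (n:ℝ)^t := by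
    have hkeyN := key G ht hK
    have := (Nat.cast_le (α := ℝ)).mpr hkeyN
    push_cast [Nat.cast_sub ht, hcardV] at this
    convert this using 2 <;> try rw [hcardV]
  -- final chain
  have hnp : (0:ℝ) < (n:ℝ)^(t-1) := by positivity
  rw [div_le_iff₀ hnp] at hjensen
  set N : ℝ := (n:ℝ)^(2*t-1) with hN
  have hNsplit : ((t:ℝ)-1) * (n:ℝ)^t * (n:ℝ)^(t-1) = ((t:ℝ)-1) * N := by
    rw [hN, mul_assoc, ← pow_add]
    congr 2
    omega
  have h1 : ((3/2:ℝ) * m)^t ≤ (∑ v : V, f v)^t :=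
    pow_le_pow_left₀ (by positivity) hsumf t
  have h2 : (∑ v : V, f v)^t ≤ ((t:ℝ)-1) * N := by
    calc (∑ v : V, f v)^t ≤ (∑ v : V, (f v)^t) * (n:ℝ)^(t-1) := hjensen
      _ ≤ ((t:ℝ)-1) * (n:ℝ)^t * (n:ℝ)^(t-1) :=
          mul_le_mul_of_nonneg_right hkeyR hnp.le
      _ = ((t:ℝ)-1) * N := hNsplit
  have hPt : P^t = N := by
    rw [hP, ← Real.rpow_natCast ((n:ℝ) ^ ((2:ℝ) - 1/t)) t, ← Real.rpow_mul hn0.le]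
    rw [show ((2:ℝ) - 1/(t:ℝ)) * t = ((2*t - 1 : ℕ) : ℝ) by
      push_cast [Nat.cast_sub (by omega : 1 ≤ 2*t)]
      field_simp]
    rw [Real.rpow_natCast]
  have hPm : P^t < (m:ℝ)^t := pow_lt_pow_left₀ hcon hP0.le (by omega)
  have hmt : (0:ℝ) < (m:ℝ)^t := by positivity
  have hchain : (3/2:ℝ)^t * (m:ℝ)^t < ((t:ℝ)-1) * (m:ℝ)^t := by
    calc (3/2:ℝ)^t * (m:ℝ)^t = ((3/2:ℝ) * m)^t := (mul_pow _ _ _).symm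
      _ ≤ ((t:ℝ)-1) * N := h1.trans h2
      _ = ((t:ℝ)-1) * P^t := by rw [hPt]
      _ < ((t:ℝ)-1) * (m:ℝ)^t := by
          exact mul_lt_mul_of_pos_left hPm (by linarith)
  have hlt : (3/2:ℝ)^t < (t:ℝ)-1 := lt_of_mul_lt_mul_right hchain hmt.le
  have := pow32 ht2'
  linarith
end

section
/- For every integer t ≥ 1 there exists a constant c (depending only on t) such that for every integer s ≥ 1 the following holds: every bipartite graph that contains a matching of size at least c·(s+1)^t contains either an induced subgraph isomorphic to K_{t,t} or an induced matching of size s+1. -/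


lemma nat_pow_le_aux : ∀ (t N : ℕ), N ^ t ≤ t ^ 2 * N ^ (t - 1) + N.descFactorial t
  | 0, N => by simp
  | 1, N => by simp [Nat.descFactorial]
  | (k+2), N => by
    have ih := nat_pow_le_aux (k+1) N
    have hd : N * N.descFactorial (k+1)
        ≤ (k+1) * N.descFactorial (k+1) + N.descFactorial (k+2) := by
      rw [Nat.descFactorial_succ]
      calc N * N.descFactorial (k+1)
          ≤ ((k+1) + (N - (k+1))) * N.descFactorial (k+1) :=
            Nat.mul_le_mul_right _ (by omega)
        _ = (k+1) * N.descFactorial (k+1) + (N - (k+1)) * N.descFactorial (k+1) := by ring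
    have hdp : N.descFactorial (k+1) ≤ N ^ (k+1) := Nat.descFactorial_le_pow _ _
    have hsq : (k+1)^2 + (k+1) ≤ (k+2)^2 := by nlinarith
    calc N ^ (k+2) = N ^ (k+1) * N := by ring
      _ ≤ ((k+1)^2 * N ^ k + N.descFactorial (k+1)) * N :=
          Nat.mul_le_mul_right _ (by simpa using ih)
      _ = (k+1)^2 * N^(k+1) + N * N.descFactorial (k+1) := by ring
      _ ≤ (k+1)^2 * N^(k+1) + ((k+1) * N.descFactorial (k+1) + N.descFactorial (k+2)) :=
          Nat.add_le_add_left hd _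
      _ ≤ (k+1)^2 * N^(k+1) + ((k+1) * N^(k+1) + N.descFactorial (k+2)) := by
          gcongr
      _ = ((k+1)^2 + (k+1)) * N^(k+1) + N.descFactorial (k+2) := by ring
      _ ≤ (k+2)^2 * N^(k+1) + N.descFactorial (k+2) :=
          Nat.add_le_add_right (Nat.mul_le_mul_right _ hsq) _
      _ = (k+2)^2 * N^((k+2)-1) + N.descFactorial (k+2) := by norm_num

lemma nat_pow_sum_le {α : Type*} (s : Finset α) (f : α → ℕ) (n : ℕ) :
    (∑ i ∈ s, f i) ^ (n+1) ≤ s.card ^ n * ∑ i ∈ s, f i ^ (n+1) := by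
  have h := pow_sum_le_card_mul_sum_pow (α := ℚ) (s := s) (f := fun i => (f i : ℚ))
      (fun i _ => by positivity) n
  exact_mod_cast h



lemma dens_lemma {α : Type*} [DecidableEq α] (s : ℕ) (conf : α → α → Prop) [DecidableRel conf]
    (hsymm : ∀ a b, conf a b → conf b a) (hirr : ∀ a, ¬ conf a a) :
    ∀ M : Finset α, (∀ I ⊆ M, (∀ e ∈ I, ∀ f ∈ I, ¬ conf e f) → I.card ≤ s) →
      (M.card - s) ^ 2 ≤ s * ∑ e ∈ M, (M.filter (conf e)).card := by
  intro M
  induction M using Finset.strongInduction with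
  | _ M ih =>
    intro hInd
    by_cases hNs : M.card ≤ s
    · have h0 : M.card - s = 0 := by omega
      simp [h0]
    push_neg at hNs
    classical
    have hne : (M.powerset.filter fun I => ∀ e ∈ I, ∀ f ∈ I, ¬ conf e f).Nonempty :=
      ⟨∅, by simp⟩
    obtain ⟨I, hImem, hImax⟩ := Finset.exists_max_image _ Finset.card hne
    simp only [Finset.mem_filter, Finset.mem_powerset] at hImem
    obtain ⟨hIM, hIfree⟩ := hImem
    have hIs : I.card ≤ s := hInd I hIM hIfree
    have hMne : M.Nonempty := Finset.card_pos.mp (by omega)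
    have hIne : I.Nonempty := by
      by_contra h
      obtain ⟨x, hx⟩ := hMne
      have h1 : ({x} : Finset α) ∈ M.powerset.filter
          (fun I => ∀ e ∈ I, ∀ f ∈ I, ¬ conf e f) := by
        simp only [Finset.mem_filter, Finset.mem_powerset]
        refine ⟨Finset.singleton_subset_iff.mpr hx, ?_⟩
        intro e he f hf
        rw [Finset.mem_singleton] at he hf
        subst he; subst hf; exact hirr _
      have h2 := hImax _ h1
      rw [Finset.not_nonempty_iff_eq_empty] at h
      simp [h] at h2
    have hcov : ∀ f ∈ M, f ∉ I → ∃ e ∈ I, conf e f := by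
      intro f hf hfI
      by_contra hno
      push_neg at hno
      have hfree' : ∀ e ∈ insert f I, ∀ g ∈ insert f I, ¬ conf e g := by
        intro e he g hg hc
        rw [Finset.mem_insert] at he hg
        rcases he with rfl | he
        · rcases hg with rfl | hg
          · exact hirr _ hc
          · exact hno g hg (hsymm _ _ hc)
        · rcases hg with rfl | hg
          · exact hno e he hc
          · exact hIfree e he g hg hc
      have hmem : insert f I ∈ M.powerset.filter
          (fun I => ∀ e ∈ I, ∀ f ∈ I, ¬ conf e f) := by
        simp only [Finset.mem_filter, Finset.mem_powerset]
        exact ⟨Finset.insert_subset hf hIM, hfree'⟩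
      have h3 := hImax _ hmem
      rw [Finset.card_insert_of_notMem hfI] at h3
      omega
    have hsub : M \ I ⊆ I.biUnion fun e => M.filter (conf e) := by
      intro f hf
      rw [Finset.mem_sdiff] at hf
      obtain ⟨e, he, hc⟩ := hcov f hf.1 hf.2
      exact Finset.mem_biUnion.mpr ⟨e, he, Finset.mem_filter.mpr ⟨hf.1, hc⟩⟩
    have hcard1 : M.card - I.card ≤ ∑ e ∈ I, (M.filter (conf e)).card := by
      calc M.card - I.card = (M \ I).card := (Finset.card_sdiff_of_subset hIM).symm
        _ ≤ _ := (Finset.card_le_card hsub).trans Finset.card_biUnion_le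
    obtain ⟨e, heI, hemax⟩ :=
      Finset.exists_max_image I (fun e => (M.filter (conf e)).card) hIne
    have hdeg : M.card - s ≤ s * (M.filter (conf e)).card := by
      have h2 : ∑ e' ∈ I, (M.filter (conf e')).card ≤ I.card * (M.filter (conf e)).card := by
        calc ∑ e' ∈ I, (M.filter (conf e')).card
            ≤ ∑ _e' ∈ I, (M.filter (conf e)).card := Finset.sum_le_sum fun i hi => hemax i hi
          _ = I.card * (M.filter (conf e)).card := by rw [Finset.sum_const, smul_eq_mul]
      calc M.card - s ≤ M.card - I.card := by omega
        _ ≤ I.card * (M.filter (conf e)).card := hcard1.trans h2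
        _ ≤ s * (M.filter (conf e)).card := Nat.mul_le_mul_right _ hIs
    -- recursion
    have heM : e ∈ M := hIM heI
    have hssub : M.erase e ⊂ M := Finset.erase_ssubset heM
    have hIH := ih (M.erase e) hssub
      (fun J hJ hf => hInd J (hJ.trans (Finset.erase_subset _ _)) hf)
    have hdege : (M.filter (conf e)).card = ((M.erase e).filter (conf e)).card := by
      rw [Finset.filter_erase, Finset.erase_eq_of_notMem]
      intro hmem
      exact hirr e (Finset.mem_filter.mp hmem).2
    set d := ((M.erase e).filter (conf e)).card with hd
    have hsplit : ∀ f ∈ M.erase e,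
        (M.filter (conf f)).card = ((M.erase e).filter (conf f)).card
          + (if conf f e then 1 else 0) := by
      intro f hf
      conv_lhs => rw [← Finset.insert_erase heM]
      rw [Finset.filter_insert]
      split_ifs with h
      · rw [Finset.card_insert_of_notMem]
        intro hmem
        exact (Finset.notMem_erase e M) (Finset.mem_of_mem_filter _ hmem)
      · rfl
    have hsum : ∑ f ∈ M, (M.filter (conf f)).card
        = d + (∑ f ∈ M.erase e, ((M.erase e).filter (conf f)).card) + d := by
      rw [← Finset.add_sum_erase _ _ heM]
      rw [Finset.sum_congr rfl hsplit, Finset.sum_add_distrib]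
      have : ∑ f ∈ M.erase e, (if conf f e then 1 else 0)
          = ((M.erase e).filter fun f => conf f e).card := (Finset.card_filter _ _).symm
      rw [this]
      have h4 : ((M.erase e).filter fun f => conf f e) = ((M.erase e).filter (conf e)) := by
        apply Finset.filter_congr
        intro x _
        exact ⟨fun h => hsymm _ _ h, fun h => hsymm _ _ h⟩
      rw [h4, ← hd, hdege]
      ring
    -- combine
    have hcard2 : (M.erase e).card = M.card - 1 := Finset.card_erase_of_mem heM
    rw [hdege] at hdeg
    set r' := ∑ f ∈ M.erase e, ((M.erase e).filter (conf f)).card with hr'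
    rw [hcard2] at hIH
    rw [hsum]
    have hexp : s * (d + r' + d) = s * r' + 2 * (s * d) := by ring
    rw [hexp]
    have ha : M.card - 1 - s = (M.card - s) - 1 := by omega
    rw [ha] at hIH
    obtain ⟨b, hb2⟩ : ∃ b, M.card - s = b + 1 := ⟨M.card - s - 1, by omega⟩
    rw [hb2] at hIH hdeg ⊢
    simp only [Nat.add_sub_cancel] at hIH
    nlinarith [hIH, hdeg]



lemma count_lemma {α : Type*} [DecidableEq α] (t : ℕ) (R : α → α → Prop) [DecidableRel R]
    (M : Finset α)
    (hK : ¬ ∃ E F : Finset α, E ⊆ M ∧ F ⊆ M ∧ E.card = t ∧ F.card = t ∧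
      ∀ e ∈ E, ∀ f ∈ F, R e f) :
    ∑ e ∈ M, ((M.filter (R e)).card).choose t ≤ (t - 1) * M.card.choose t := by
  classical
  have hcol : ∀ F ∈ M.powersetCard t, (M.filter fun e => ∀ f ∈ F, R e f).card ≤ t - 1 := by
    intro F hF
    rw [Finset.mem_powersetCard] at hF
    by_contra h
    push_neg at h
    have ht0 : t ≠ 0 := by
      rintro rfl
      exact hK ⟨∅, ∅, Finset.empty_subset _, Finset.empty_subset _, rfl, rfl, by simp⟩
    have h' : t ≤ (M.filter fun e => ∀ f ∈ F, R e f).card := by omega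
    obtain ⟨E, hE, hEcard⟩ := Finset.exists_subset_card_eq h'
    exact hK ⟨E, F, hE.trans (Finset.filter_subset _ _), hF.1, hEcard, hF.2,
      fun e he f hf => (Finset.mem_filter.mp (hE he)).2 f hf⟩
  have hrow : ∀ e, ((M.filter (R e)).card).choose t
      = ((M.powersetCard t).filter fun F => ∀ f ∈ F, R e f).card := by
    intro e
    rw [← Finset.card_powersetCard]
    congr 1
    ext F
    simp only [Finset.mem_powersetCard, Finset.mem_filter]
    constructor
    · rintro ⟨hsub, hc⟩
      exact ⟨⟨fun x hx => (Finset.mem_filter.mp (hsub hx)).1, hc⟩,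
        fun f hf => (Finset.mem_filter.mp (hsub hf)).2⟩
    · rintro ⟨⟨hsub, hc⟩, hall⟩
      exact ⟨fun x hx => Finset.mem_filter.mpr ⟨hsub hx, hall x hx⟩, hc⟩
  calc ∑ e ∈ M, ((M.filter (R e)).card).choose t
      = ∑ e ∈ M, ∑ F ∈ M.powersetCard t, if ∀ f ∈ F, R e f then 1 else 0 := by
        simp_rw [hrow, Finset.card_filter]
    _ = ∑ F ∈ M.powersetCard t, ∑ e ∈ M, if ∀ f ∈ F, R e f then 1 else 0 :=
        Finset.sum_comm
    _ = ∑ F ∈ M.powersetCard t, (M.filter fun e => ∀ f ∈ F, R e f).card := by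
        simp_rw [Finset.card_filter]
    _ ≤ ∑ _F ∈ M.powersetCard t, (t-1) := Finset.sum_le_sum hcol
    _ = (M.powersetCard t).card * (t-1) := by rw [Finset.sum_const, smul_eq_mul]
    _ = (t-1) * M.card.choose t := by rw [Finset.card_powersetCard, Nat.mul_comm]



lemma emb_of_ktt {V : Type} (G : SimpleGraph V) (t : ℕ) (A B : Finset V)
    (hA : A.card = t) (hB : B.card = t) (hdisj : Disjoint A B)
    (hAi : (A : Set V).Pairwise fun u v => ¬ G.Adj u v)
    (hBi : (B : Set V).Pairwise fun u v => ¬ G.Adj u v)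
    (hadj : ∀ a ∈ A, ∀ b ∈ B, G.Adj a b) :
    Nonempty (completeBipartiteGraph (Fin t) (Fin t) ↪g G) := by
  classical
  let eA : Fin t ≃ A := (A.equivFin.trans (finCongr hA)).symm
  let eB : Fin t ≃ B := (B.equivFin.trans (finCongr hB)).symm
  let f : Fin t ⊕ Fin t → V := Sum.elim (fun i => ((eA i : A) : V)) (fun i => ((eB i : B) : V))
  have hfA : ∀ i, f (Sum.inl i) ∈ A := fun i => (eA i).2
  have hfB : ∀ i, f (Sum.inr i) ∈ B := fun i => (eB i).2
  have hAB : ∀ i j, f (Sum.inl i) ≠ f (Sum.inr j) := by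
    intro i j h
    exact Finset.disjoint_left.mp hdisj (h ▸ hfA i) (hfB j)
  have hinj : Function.Injective f := by
    intro x y h
    match x, y with
    | Sum.inl i, Sum.inl j =>
      have h2 : eA i = eA j := Subtype.ext h
      rw [eA.injective h2]
    | Sum.inl i, Sum.inr j => exact absurd h (hAB i j)
    | Sum.inr i, Sum.inl j => exact absurd h.symm (hAB j i)
    | Sum.inr i, Sum.inr j =>
      have h2 : eB i = eB j := Subtype.ext h
      rw [eB.injective h2]
  refine ⟨⟨⟨f, hinj⟩, ?_⟩⟩
  intro x y
  show G.Adj (f x) (f y) ↔ _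
  match x, y with
  | Sum.inl i, Sum.inl j =>
    have hrhs : ¬ (completeBipartiteGraph (Fin t) (Fin t)).Adj (Sum.inl i) (Sum.inl j) := by simp
    have hlhs : ¬ G.Adj (f (Sum.inl i)) (f (Sum.inl j)) := by
      by_cases hij : i = j
      · subst hij; exact G.irrefl
      · have hne : f (Sum.inl i) ≠ f (Sum.inl j) := fun h => hij (Sum.inl_injective (hinj h))
        exact hAi (hfA i) (hfA j) hne
    exact iff_of_false hlhs hrhs
  | Sum.inl i, Sum.inr j =>
    have hrhs : (completeBipartiteGraph (Fin t) (Fin t)).Adj (Sum.inl i) (Sum.inr j) := by simp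
    exact iff_of_true (hadj _ (hfA i) _ (hfB j)) hrhs
  | Sum.inr i, Sum.inl j =>
    have hrhs : (completeBipartiteGraph (Fin t) (Fin t)).Adj (Sum.inr i) (Sum.inl j) := by simp
    exact iff_of_true (hadj _ (hfA j) _ (hfB i)).symm hrhs
  | Sum.inr i, Sum.inr j =>
    have hrhs : ¬ (completeBipartiteGraph (Fin t) (Fin t)).Adj (Sum.inr i) (Sum.inr j) := by simp
    have hlhs : ¬ G.Adj (f (Sum.inr i)) (f (Sum.inr j)) := by
      by_cases hij : i = j
      · subst hij; exact G.irrefl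
      · have hne : f (Sum.inr i) ≠ f (Sum.inr j) := fun h => hij (Sum.inr_injective (hinj h))
        exact hBi (hfB i) (hfB j) hne
    exact iff_of_false hlhs hrhs


/-- for every `t ≥ 1` there exists a constant `c` such that for every `s ≥ 1`,
every bipartite graph containing a matching of size at least `c·(s+1)^t` contains either an
induced `K_{t,t}` or an induced matching of size `s+1`. -/
theorem stmt5 (t : ℕ) (ht : 1 ≤ t) :
    ∃ c : ℕ, ∀ s : ℕ, 1 ≤ s →
      ∀ (V : Type) [Fintype V] (G : SimpleGraph V), IsBipartite G →
        (∃ M : Finset (V × V), IsMatching' G M ∧ c * (s + 1) ^ t ≤ M.card) →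
        (¬ KttFree G t ∨
          ∃ M : Finset (V × V), IsInducedMatching G M ∧ M.card = s + 1) := by
  classical
  refine ⟨2 ^ (3*t+1) * t^2 + 2, ?_⟩
  intro s hs V _ G hbip hMex
  obtain ⟨X, Y, hXY, hX, hY⟩ := hbip
  obtain ⟨M, hM, hMcard⟩ := hMex
  by_cases hBig : ∃ I : Finset (V × V), IsInducedMatching G I ∧ s + 1 ≤ I.card
  · right
    obtain ⟨I, hI, hIcard⟩ := hBig
    obtain ⟨J, hJI, hJcard⟩ := Finset.exists_subset_card_eq hIcard
    exact ⟨J, ⟨⟨fun e he => hI.1.1 e (hJI he), fun e he f hf => hI.1.2 e (hJI he) f (hJI hf)⟩,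
      fun e he f hf => hI.2 e (hJI he) f (hJI hf)⟩, hJcard⟩
  push_neg at hBig
  have hSmall : ∀ I : Finset (V × V), IsInducedMatching G I → I.card ≤ s := by
    intro I hI
    have := hBig I hI
    omega
  left
  -- bipartite basic facts
  have hX' : X.Pairwise (fun u v => ¬ G.Adj u v) := hX
  have hY' : Y.Pairwise (fun u v => ¬ G.Adj u v) := hY
  have hadjX : ∀ {u v : V}, G.Adj u v → u ∈ X → v ∉ X :=
    fun huv hu hv => hX' hu hv (G.ne_of_adj huv) huv
  have hadjY : ∀ {u v : V}, G.Adj u v → u ∈ Y → v ∉ Y :=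
    fun huv hu hv => hY' hu hv (G.ne_of_adj huv) huv
  have hmemXY : ∀ v : V, v ∈ X ∨ v ∈ Y := by
    intro v
    have hv : v ∈ X ∪ Y := by rw [hXY]; exact Set.mem_univ v
    exact hv
  -- normalization
  set φ : V × V → V × V := fun e => if e.1 ∈ X then e else e.swap with hφ
  set M' := M.image φ with hM'def
  have hφcomp : ∀ e : V × V, ((φ e).1 = e.1 ∧ (φ e).2 = e.2) ∨ ((φ e).1 = e.2 ∧ (φ e).2 = e.1) := by
    intro e
    by_cases h : e.1 ∈ X
    · left; rw [hφ]; simp [h]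
    · right; rw [hφ]; simp [h]
  have hgood : ∀ e ∈ M', G.Adj e.1 e.2 ∧ e.1 ∈ X ∧ e.2 ∉ X := by
    intro e he
    obtain ⟨e₀, he₀, rfl⟩ := Finset.mem_image.mp he
    have hadj0 := hM.1 e₀ he₀
    by_cases h1 : e₀.1 ∈ X
    · rw [hφ]; simp only [if_pos h1]
      exact ⟨hadj0, h1, hadjX hadj0 h1⟩
    · rw [hφ]; simp only [if_neg h1]
      have h2 : e₀.2 ∈ X := by
        by_contra h2
        have h3 : e₀.1 ∈ Y := (hmemXY e₀.1).resolve_left h1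
        have h4 : e₀.2 ∈ Y := (hmemXY e₀.2).resolve_left h2
        exact hadjY hadj0 h3 h4
      exact ⟨hadj0.symm, h2, h1⟩
  have hgood2 : ∀ e ∈ M', e.2 ∈ Y ∧ e.1 ∉ Y := by
    intro e he
    obtain ⟨hadj0, h1, h2⟩ := hgood e he
    have h3 : e.2 ∈ Y := (hmemXY e.2).resolve_left h2
    refine ⟨h3, fun h4 => ?_⟩
    exact hadjY hadj0 h4 h3
  have hM'card : M'.card = M.card := by
    rw [hM'def]
    apply Finset.card_image_of_injOn
    intro a ha b hb hab
    by_contra hne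
    obtain ⟨h1, h2, h3, h4⟩ := hM.2 a ha b hb hne
    have e1 : (φ a).1 = (φ b).1 := by rw [hab]
    rcases hφcomp a with ⟨ha1, _⟩ | ⟨ha1, _⟩ <;>
      rcases hφcomp b with ⟨hb1, _⟩ | ⟨hb1, _⟩ <;>
      rw [ha1, hb1] at e1 <;>
      first
        | exact h1 e1
        | exact h2 e1
        | exact h3 e1
        | exact h4 e1
  have hM'disj : ∀ e ∈ M', ∀ f ∈ M', e ≠ f →
      e.1 ≠ f.1 ∧ e.1 ≠ f.2 ∧ e.2 ≠ f.1 ∧ e.2 ≠ f.2 := by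
    intro e he f hf hef
    obtain ⟨e₀, he₀, rfl⟩ := Finset.mem_image.mp he
    obtain ⟨f₀, hf₀, rfl⟩ := Finset.mem_image.mp hf
    have hne : e₀ ≠ f₀ := fun h => hef (by rw [h])
    obtain ⟨h1, h2, h3, h4⟩ := hM.2 e₀ he₀ f₀ hf₀ hne
    rcases hφcomp e₀ with ⟨ha1, ha2⟩ | ⟨ha1, ha2⟩ <;>
      rcases hφcomp f₀ with ⟨hb1, hb2⟩ | ⟨hb1, hb2⟩ <;>
      rw [ha1, ha2, hb1, hb2] <;>
      exact ⟨by assumption, by assumption, by assumption, by assumption⟩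
  have hM'match : IsMatching' G M' :=
    ⟨fun e he => (hgood e he).1, hM'disj⟩
  -- conflict structure
  have hfreeIM : ∀ I ⊆ M',
      (∀ e ∈ I, ∀ f ∈ I, ¬ (e ≠ f ∧ (G.Adj e.2 f.1 ∨ G.Adj f.2 e.1))) →
      IsInducedMatching G I := by
    intro I hIM' hfree
    refine ⟨⟨fun e he => (hgood e (hIM' he)).1,
      fun e he f hf hne => hM'disj e (hIM' he) f (hIM' hf) hne⟩, ?_⟩
    intro e he f hf hne
    have hor : ¬ (G.Adj e.2 f.1 ∨ G.Adj f.2 e.1) := fun h => hfree e he f hf ⟨hne, h⟩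
    obtain ⟨hd1, hd2, hd3, hd4⟩ := hM'disj e (hIM' he) f (hIM' hf) hne
    refine ⟨?_, ?_, ?_, ?_⟩
    · exact hX' (hgood e (hIM' he)).2.1 (hgood f (hIM' hf)).2.1 hd1
    · exact fun h => hor (Or.inr h.symm)
    · exact fun h => hor (Or.inl h)
    · exact hY' (hgood2 e (hIM' he)).1 (hgood2 f (hIM' hf)).1 hd4
  have hSmallFree : ∀ I ⊆ M',
      (∀ e ∈ I, ∀ f ∈ I, ¬ (e ≠ f ∧ (G.Adj e.2 f.1 ∨ G.Adj f.2 e.1))) → I.card ≤ s :=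
    fun I hI hf => hSmall I (hfreeIM I hI hf)
  have hNc : (2 ^ (3*t+1) * t^2 + 2) * (s+1)^t ≤ M'.card := by
    rw [hM'card]; exact hMcard
  -- find complete bipartite pair of edge sets
  have hEF : ∃ E F : Finset (V × V), E ⊆ M' ∧ F ⊆ M' ∧ E.card = t ∧ F.card = t ∧
      ∀ e ∈ E, ∀ f ∈ F, G.Adj e.2 f.1 := by
    by_contra hK
    have hdens := dens_lemma s (fun e f => e ≠ f ∧ (G.Adj e.2 f.1 ∨ G.Adj f.2 e.1))
      (fun a b h => ⟨Ne.symm h.1, h.2.symm⟩) (fun a h => h.1 rfl) M' hSmallFree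
    have hcount := count_lemma t (fun e f : V × V => G.Adj e.2 f.1) M' hK
    set N := M'.card with hN
    -- conflict degree bounded by in+out degree
    have hconfsub : ∀ e : V × V,
        M'.filter (fun f => e ≠ f ∧ (G.Adj e.2 f.1 ∨ G.Adj f.2 e.1)) ⊆
          (M'.filter fun f => G.Adj e.2 f.1) ∪ (M'.filter fun f => G.Adj f.2 e.1) := by
      intro e x hx
      rw [Finset.mem_filter] at hx
      rcases hx.2.2 with h | h
      · exact Finset.mem_union_left _ (Finset.mem_filter.mpr ⟨hx.1, h⟩)
      · exact Finset.mem_union_right _ (Finset.mem_filter.mpr ⟨hx.1, h⟩)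
    have hswap : ∑ e ∈ M', (M'.filter fun f => G.Adj f.2 e.1).card
        = ∑ e ∈ M', (M'.filter fun f => G.Adj e.2 f.1).card := by
      simp only [Finset.card_filter]
      exact Finset.sum_comm
    have hsumconf : ∑ e ∈ M', (M'.filter (fun f => e ≠ f ∧ (G.Adj e.2 f.1 ∨ G.Adj f.2 e.1))).card
        ≤ 2 * ∑ e ∈ M', (M'.filter fun f => G.Adj e.2 f.1).card := by
      calc ∑ e ∈ M', (M'.filter (fun f => e ≠ f ∧ (G.Adj e.2 f.1 ∨ G.Adj f.2 e.1))).card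
          ≤ ∑ e ∈ M', ((M'.filter fun f => G.Adj e.2 f.1).card
              + (M'.filter fun f => G.Adj f.2 e.1).card) :=
            Finset.sum_le_sum fun e _ =>
              (Finset.card_le_card (hconfsub e)).trans (Finset.card_union_le _ _)
        _ = (∑ e ∈ M', (M'.filter fun f => G.Adj e.2 f.1).card)
              + ∑ e ∈ M', (M'.filter fun f => G.Adj f.2 e.1).card := Finset.sum_add_distrib
        _ = 2 * ∑ e ∈ M', (M'.filter fun f => G.Adj e.2 f.1).card := by rw [hswap]; ring
    set S := ∑ e ∈ M', (M'.filter fun f => G.Adj e.2 f.1).card with hS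
    have hA : (N - s)^2 ≤ 2 * (s * S) := by
      calc (N - s)^2 ≤ s * ∑ e ∈ M',
            (M'.filter (fun f => e ≠ f ∧ (G.Adj e.2 f.1 ∨ G.Adj f.2 e.1))).card := hdens
        _ ≤ s * (2 * S) := Nat.mul_le_mul_left _ hsumconf
        _ = 2 * (s * S) := by ring
    -- bound on sum of t-th powers of degrees
    have hsumdegt : ∑ e ∈ M', ((M'.filter fun f => G.Adj e.2 f.1).card)^t
        ≤ 2 * t^2 * N^t := by
      have hper : ∀ e ∈ M', ((M'.filter fun f => G.Adj e.2 f.1).card)^t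
          ≤ t^2 * N^(t-1) + t.factorial * (((M'.filter fun f => G.Adj e.2 f.1).card).choose t) := by
        intro e _
        calc ((M'.filter fun f => G.Adj e.2 f.1).card)^t
            ≤ t^2 * ((M'.filter fun f => G.Adj e.2 f.1).card)^(t-1)
              + ((M'.filter fun f => G.Adj e.2 f.1).card).descFactorial t :=
              nat_pow_le_aux t _
          _ ≤ t^2 * N^(t-1)
              + t.factorial * (((M'.filter fun f => G.Adj e.2 f.1).card).choose t) := by
              rw [Nat.descFactorial_eq_factorial_mul_choose]
              gcongr
              exact Finset.card_filter_le _ _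
      have hNdesc : t.factorial * ((t-1) * N.choose t) ≤ (t-1) * N^t := by
        calc t.factorial * ((t-1) * N.choose t) = (t-1) * (t.factorial * N.choose t) := by ring
          _ = (t-1) * N.descFactorial t := by rw [Nat.descFactorial_eq_factorial_mul_choose]
          _ ≤ (t-1) * N^t := Nat.mul_le_mul_left _ (Nat.descFactorial_le_pow _ _)
      have hexp0 : N * (t^2 * N^(t-1)) = t^2 * N^t := by
        rw [mul_comm N, mul_assoc, ← pow_succ]
        congr 2
        omega
      calc ∑ e ∈ M', ((M'.filter fun f => G.Adj e.2 f.1).card)^t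
          ≤ ∑ e ∈ M', (t^2 * N^(t-1)
              + t.factorial * (((M'.filter fun f => G.Adj e.2 f.1).card).choose t)) :=
            Finset.sum_le_sum hper
        _ = N * (t^2 * N^(t-1))
              + t.factorial * ∑ e ∈ M', (((M'.filter fun f => G.Adj e.2 f.1).card).choose t) := by
            rw [Finset.sum_add_distrib, Finset.sum_const, smul_eq_mul, Finset.mul_sum]
        _ ≤ N * (t^2 * N^(t-1)) + t.factorial * ((t-1) * N.choose t) := by
            gcongr
        _ ≤ t^2 * N^t + (t-1) * N^t := by
            rw [hexp0]
            exact Nat.add_le_add_left hNdesc _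
        _ ≤ 2 * t^2 * N^t := by
            have h1 : t ≤ t^2 := by
              calc t = t*1 := (mul_one t).symm
                _ ≤ t*t := Nat.mul_le_mul_left t ht
                _ = t^2 := (sq t).symm
            have h2 : t^2 + (t-1) ≤ 2 * t^2 := by omega
            calc t^2 * N^t + (t-1) * N^t = (t^2 + (t-1)) * N^t := by ring
              _ ≤ (2 * t^2) * N^t := Nat.mul_le_mul_right _ h2
    -- power mean
    have hpm : S^t ≤ N^(t-1) * ∑ e ∈ M', ((M'.filter fun f => G.Adj e.2 f.1).card)^t := by
      have h := nat_pow_sum_le M' (fun e => (M'.filter fun f => G.Adj e.2 f.1).card) (t-1)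
      have h2 : t - 1 + 1 = t := by omega
      rw [h2] at h
      exact h
    -- numeric facts
    have hc2 : (2:ℕ) ≤ 2 ^ (3*t+1) * t^2 + 2 := Nat.le_add_left _ _
    have hs1 : s + 1 ≤ (s+1)^t := Nat.le_self_pow (by omega) _
    have h2s : 2 * s ≤ N := by
      calc 2 * s ≤ 2 * (s + 1) := by omega
        _ ≤ 2 * (s+1)^t := Nat.mul_le_mul_left _ hs1
        _ ≤ (2 ^ (3*t+1) * t^2 + 2) * (s+1)^t := Nat.mul_le_mul_right _ hc2
        _ ≤ N := hNc
    have hNpos : 1 ≤ N := by omega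
    have hNs : N ≤ 2 * (N - s) := by omega
    have hexp1 : N^(t-1) * N^t = N^(2*t-1) := by
      rw [← pow_add]; congr 1; omega
    have hexp2 : (2:ℕ)^(2*t) * 2^t * 2 = 2^(3*t+1) := by
      rw [← pow_add, ← pow_succ]; congr 1; omega
    have hkey : N^(2*t) ≤ 2^(3*t+1) * t^2 * s^t * N^(2*t-1) := by
      calc N^(2*t) ≤ (2*(N-s))^(2*t) := Nat.pow_le_pow_left hNs _
        _ = 2^(2*t) * ((N-s)^2)^t := by rw [mul_pow, ← pow_mul]
        _ ≤ 2^(2*t) * ((2*(s*S))^t) := by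
            exact Nat.mul_le_mul_left _ (Nat.pow_le_pow_left hA _)
        _ = 2^(2*t) * (2^t * (s^t * S^t)) := by rw [mul_pow, mul_pow]
        _ ≤ 2^(2*t) * (2^t * (s^t * (N^(t-1) * (2 * t^2 * N^t)))) := by
            have hSb : S^t ≤ N^(t-1) * (2 * t^2 * N^t) :=
              hpm.trans (Nat.mul_le_mul_left _ hsumdegt)
            exact Nat.mul_le_mul_left _ (Nat.mul_le_mul_left _ (Nat.mul_le_mul_left _ hSb))
        _ = (2^(2*t) * 2^t * 2) * t^2 * s^t * (N^(t-1) * N^t) := by ring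
        _ = 2^(3*t+1) * t^2 * s^t * N^(2*t-1) := by rw [hexp1, hexp2]
    have hfinal : N ≤ 2^(3*t+1) * t^2 * s^t := by
      have h2t : 2*t = (2*t - 1) + 1 := by omega
      rw [h2t, pow_succ] at hkey
      have hpos : 0 < N^(2*t-1) := Nat.pow_pos (by omega)
      have hkey2 : N^(2*t-1) * N ≤ N^(2*t-1) * (2^(3*t+1) * t^2 * s^t) := by
        calc N^(2*t-1) * N ≤ 2^(3*t+1) * t^2 * s^t * N^(2*t-1) := hkey
          _ = N^(2*t-1) * (2^(3*t+1) * t^2 * s^t) := by ring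
      exact Nat.le_of_mul_le_mul_left hkey2 hpos
    have hst : (1:ℕ) ≤ s^t := Nat.one_le_pow _ _ (by omega)
    have hmono : s^t ≤ (s+1)^t := Nat.pow_le_pow_left (by omega) _
    have hbig2 : 2^(3*t+1)*t^2*s^t + 2*s^t ≤ N := by
      calc 2^(3*t+1)*t^2*s^t + 2*s^t = (2^(3*t+1)*t^2 + 2) * s^t := by ring
        _ ≤ (2^(3*t+1)*t^2+2) * (s+1)^t := Nat.mul_le_mul_left _ hmono
        _ ≤ N := hNc
    linarith [hfinal, hbig2, hst]
  -- extract the K_{t,t}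
  obtain ⟨E, F, hEM, hFM, hEcard, hFcard, hEFadj⟩ := hEF
  have hAcard : (F.image Prod.fst).card = t := by
    rw [Finset.card_image_of_injOn, hFcard]
    intro a ha b hb hab
    by_contra hne
    exact (hM'disj a (hFM ha) b (hFM hb) hne).1 hab
  have hBcard : (E.image Prod.snd).card = t := by
    rw [Finset.card_image_of_injOn, hEcard]
    intro a ha b hb hab
    by_contra hne
    exact (hM'disj a (hEM ha) b (hEM hb) hne).2.2.2 hab
  have hAX : ∀ a ∈ F.image Prod.fst, a ∈ X := by
    intro a ha
    obtain ⟨f₀, hf₀, rfl⟩ := Finset.mem_image.mp ha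
    exact (hgood f₀ (hFM hf₀)).2.1
  have hBnX : ∀ b ∈ E.image Prod.snd, b ∉ X := by
    intro b hb
    obtain ⟨e₀, he₀, rfl⟩ := Finset.mem_image.mp hb
    exact (hgood e₀ (hEM he₀)).2.2
  have hBY : ∀ b ∈ E.image Prod.snd, b ∈ Y := by
    intro b hb
    obtain ⟨e₀, he₀, rfl⟩ := Finset.mem_image.mp hb
    exact (hgood2 e₀ (hEM he₀)).1
  have hdisj : Disjoint (F.image Prod.fst) (E.image Prod.snd) :=
    Finset.disjoint_left.mpr fun a haA haB => (hBnX a haB) (hAX a haA)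
  have hadjAB : ∀ a ∈ F.image Prod.fst, ∀ b ∈ E.image Prod.snd, G.Adj a b := by
    intro a ha b hb
    obtain ⟨f₀, hf₀, rfl⟩ := Finset.mem_image.mp ha
    obtain ⟨e₀, he₀, rfl⟩ := Finset.mem_image.mp hb
    exact (hEFadj e₀ he₀ f₀ hf₀).symm
  have hAindep : ((F.image Prod.fst : Finset V) : Set V).Pairwise fun u v => ¬ G.Adj u v :=
    hX'.mono (fun a ha => hAX a (Finset.mem_coe.mp ha))
  have hBindep : ((E.image Prod.snd : Finset V) : Set V).Pairwise fun u v => ¬ G.Adj u v :=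
    hY'.mono (fun a ha => hBY a (Finset.mem_coe.mp ha))
  obtain ⟨ψ⟩ := emb_of_ktt G t (F.image Prod.fst) (E.image Prod.snd)
    hAcard hBcard hdisj hAindep hBindep hadjAB
  intro hfree
  have hfree' : IsEmpty (completeBipartiteGraph (Fin t) (Fin t) ↪g G) := hfree
  exact hfree'.false ψ
end

section
/- For every integer t ≥ 1 there exists a constant c (depending only on t) such that for all integers s, m ≥ 1 the following holds: if G is a K_{t,t}-free graph and I_1, …, I_m are independent sets in G each of size at least c·(s·m²)^t, then there is an independent set I in G such that |I ∩ I_i| ≥ s for every i ∈ {1, …, m}. -/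
open Finset in
lemma cap {V : Type} [Fintype V] [DecidableEq V] {t : ℕ} (ht : 1 ≤ t)
    {G : SimpleGraph V} [DecidableRel G.Adj] (hG : KttFree G t)
    {A : Finset V} (hA : IsIndep G ↑A)
    {f : Fin t → V} (hf : Function.Injective f) (hfB : ∀ i j, ¬ G.Adj (f i) (f j)) :
    (A.filter fun a => ∀ i, G.Adj a (f i)).card ≤ t - 1 := by
  by_contra h
  push_neg at h
  have ht' : t ≤ (A.filter fun a => ∀ i, G.Adj a (f i)).card := by omega
  obtain ⟨T, hTsub, hTcard⟩ := Finset.exists_subset_card_eq ht'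
  have hmemT : ∀ x ∈ T, x ∈ A ∧ ∀ i, G.Adj x (f i) := by
    intro x hx
    have := hTsub hx
    simpa using this
  -- enumerate T
  let e : Fin t ≃ T := (Fintype.equivFinOfCardEq (by simpa using hTcard)).symm
  let g : Fin t → V := fun i => (e i : V)
  have hg : Function.Injective g := fun i j hij => e.injective (Subtype.ext hij)
  have hgT : ∀ i, g i ∈ T := fun i => (e i).2
  have hgA : ∀ i, g i ∈ A := fun i => (hmemT _ (hgT i)).1
  have hadj : ∀ i j, G.Adj (g i) (f j) := fun i j => (hmemT _ (hgT i)).2 j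
  have hgg : ∀ i j, ¬ G.Adj (g i) (g j) := by
    intro i j hadj'
    rcases eq_or_ne i j with rfl | hne
    · exact G.irrefl hadj'
    · exact hA (hgA i) (hgA j) (fun hc => hne (hg hc)) hadj'
  have hgf : ∀ i j, g i ≠ f j := by
    intro i j hc
    exact G.irrefl (hc ▸ hadj i j)
  refine hG.false ?_
  refine ⟨⟨Sum.elim g f, ?_⟩, ?_⟩
  · intro x y hxy
    cases x with
    | inl i => cases y with
      | inl j => simp only [Sum.elim_inl] at hxy; exact congrArg Sum.inl (hg hxy)
      | inr j => exact absurd hxy (hgf i j)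
    | inr i => cases y with
      | inl j => exact absurd hxy.symm (hgf j i)
      | inr j => simp only [Sum.elim_inr] at hxy; exact congrArg Sum.inr (hf hxy)
  · intro x y
    cases x with
    | inl i => cases y with
      | inl j => simp [completeBipartiteGraph, hgg i j]; exact hgg i j
      | inr j => simp [completeBipartiteGraph, hadj i j]; exact hadj i j
    | inr i => cases y with
      | inl j => simp [completeBipartiteGraph, (hadj j i).symm]; exact (hadj j i).symm
      | inr j => simp [completeBipartiteGraph, hfB i j]; exact hfB i j


lemma key_s6 {V : Type} [Fintype V] [DecidableEq V] {t : ℕ} (ht : 1 ≤ t)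
    {G : SimpleGraph V} [DecidableRel G.Adj] (hG : KttFree G t)
    {A B : Finset V} (hA : IsIndep G ↑A) (hB : IsIndep G ↑B) (D : ℕ) :
    (A.filter fun a => D ≤ (B.filter (G.Adj a)).card).card * (D + 1 - t) ^ t
      ≤ (t - 1) * B.card ^ t := by
  classical
  set Bad := A.filter fun a => D ≤ (B.filter (G.Adj a)).card with hBad
  set T : Finset (Fin t → V) := (Fintype.piFinset fun _ => B).filter Function.Injective with hT
  have lower : ∀ a ∈ Bad, (D + 1 - t) ^ t ≤ (T.filter fun f => ∀ i, G.Adj a (f i)).card := by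
    intro a ha
    have hD : D ≤ (B.filter (G.Adj a)).card := (Finset.mem_filter.mp ha).2
    set Na := B.filter (G.Adj a) with hNa
    calc (D + 1 - t) ^ t ≤ (Na.card + 1 - t) ^ t :=
          Nat.pow_le_pow_left (by omega) t
      _ ≤ Na.card.descFactorial t := Nat.pow_sub_le_descFactorial _ _
      _ = Fintype.card (Fin t ↪ ↥Na) := by
          rw [Fintype.card_embedding_eq, Fintype.card_coe, Fintype.card_fin]
      _ = (Finset.univ : Finset (Fin t ↪ ↥Na)).card := Finset.card_univ.symm
      _ ≤ (T.filter fun f => ∀ i, G.Adj a (f i)).card := by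
          refine Finset.card_le_card_of_injOn (fun e i => ((e i : V))) ?_ ?_
          · intro e _
            refine Finset.mem_filter.mpr ⟨Finset.mem_filter.mpr ⟨?_, ?_⟩, ?_⟩
            · exact Fintype.mem_piFinset.mpr fun i => (Finset.mem_filter.mp (e i).2).1
            · exact fun i j hij => e.injective (Subtype.ext hij)
            · exact fun i => (Finset.mem_filter.mp (e i).2).2
          · intro e1 _ e2 _ h
            exact Function.Embedding.ext fun i => Subtype.ext (congrFun h i)
  have cap' : ∀ f ∈ T, (Bad.filter fun a => ∀ i, G.Adj a (f i)).card ≤ t - 1 := by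
    intro f hf
    have hmem := Finset.mem_filter.mp hf
    have hfB : ∀ i, f i ∈ B := Fintype.mem_piFinset.mp hmem.1
    have hinj : Function.Injective f := hmem.2
    have hno : ∀ i j, ¬ G.Adj (f i) (f j) := by
      intro i j hadj
      rcases eq_or_ne i j with rfl | hne
      · exact G.irrefl hadj
      · exact hB (hfB i) (hfB j) (fun hc => hne (hinj hc)) hadj
    calc (Bad.filter fun a => ∀ i, G.Adj a (f i)).card
        ≤ (A.filter fun a => ∀ i, G.Adj a (f i)).card := by
          apply Finset.card_le_card
          exact Finset.filter_subset_filter _ (Finset.filter_subset _ _)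
      _ ≤ t - 1 := cap ht hG hA hinj hno
  calc Bad.card * (D + 1 - t) ^ t
      = ∑ a ∈ Bad, (D + 1 - t) ^ t := by rw [Finset.sum_const, smul_eq_mul]
    _ ≤ ∑ a ∈ Bad, (T.filter fun f => ∀ i, G.Adj a (f i)).card := Finset.sum_le_sum lower
    _ = ∑ f ∈ T, (Bad.filter fun a => ∀ i, G.Adj a (f i)).card := by
        simp_rw [Finset.card_filter]
        exact Finset.sum_comm
    _ ≤ ∑ f ∈ T, (t - 1) := Finset.sum_le_sum cap'
    _ = T.card * (t - 1) := by rw [Finset.sum_const, smul_eq_mul]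
    _ ≤ B.card ^ t * (t - 1) := by
        apply Nat.mul_le_mul_right
        calc T.card ≤ (Fintype.piFinset fun _ : Fin t => B).card :=
              Finset.card_le_card (Finset.filter_subset _ _)
          _ = B.card ^ t := by rw [Fintype.card_piFinset_const]
    _ = (t - 1) * B.card ^ t := Nat.mul_comm _ _

lemma AF1 (k s m c c' : ℕ) (hs : 1 ≤ s) (hm : 1 ≤ m) (h1 : 4*k*c^k ≤ c'^(k+1)) :
    4 * (m * (k * (c*(s*m^2)^(k+1))^(k+1))) ≤
      (c*(s*m^2)^(k+1)) * (c' * s^k * m^(2*k+1))^(k+1) := by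
  have h2 : m ≤ m^(k+1) := Nat.le_self_pow (by omega) m
  calc 4 * (m * (k * (c*(s*m^2)^(k+1))^(k+1)))
      = (4*k*c^k) * m * (c * s^((k+1)*(k+1)) * m^(2*((k+1)*(k+1)))) := by ring
    _ ≤ c'^(k+1) * m^(k+1) * (c * s^((k+1)*(k+1)) * m^(2*((k+1)*(k+1)))) :=
        Nat.mul_le_mul_right _ (Nat.mul_le_mul h1 h2)
    _ = (c*(s*m^2)^(k+1)) * (c' * s^k * m^(2*k+1))^(k+1) := by ring

lemma AF1' (k c' : ℕ) (hc' : 4*k*(8*(k+1))^k ≤ c') :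
    4*k*(8*(k+1)*c')^k ≤ c'^(k+1) := by
  calc 4*k*(8*(k+1)*c')^k = (4*k*(8*(k+1))^k) * c'^k := by rw [mul_pow]; ring
    _ ≤ c' * c'^k := Nat.mul_le_mul_right _ hc'
    _ = c'^(k+1) := by ring

lemma AF2 (k s m c c' : ℕ) (hs : 1 ≤ s) (hm : 1 ≤ m) (hcoef : 4*c' + 4*k + 4 ≤ c) :
    4 * (m*s*(c'*s^k*m^(2*k+1) + k) + s) ≤ c * (s*m^2)^(k+1) := by
  have hsX : s ≤ s^(k+1)*m^(2*k+2) := by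
    calc s = s * 1 := (mul_one s).symm
      _ ≤ s^(k+1) * m^(2*k+2) :=
        Nat.mul_le_mul (Nat.le_self_pow (by omega) s) (Nat.one_le_pow _ _ (by omega))
  have hmsX : m*s ≤ s^(k+1)*m^(2*k+2) := by
    calc m*s ≤ m^(2*k+2) * s^(k+1) :=
        Nat.mul_le_mul (Nat.le_self_pow (by omega) m) (Nat.le_self_pow (by omega) s)
      _ = s^(k+1)*m^(2*k+2) := by ring
  calc 4 * (m*s*(c'*s^k*m^(2*k+1) + k) + s)
      = 4*c'*(s^(k+1)*m^(2*k+2)) + (4*k)*(m*s) + 4*s := by ring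
    _ ≤ 4*c'*(s^(k+1)*m^(2*k+2)) + (4*k)*(s^(k+1)*m^(2*k+2)) + 4*(s^(k+1)*m^(2*k+2)) := by
        gcongr
    _ = (4*c' + 4*k + 4) * (s^(k+1)*m^(2*k+2)) := by ring
    _ ≤ c * (s^(k+1)*m^(2*k+2)) := Nat.mul_le_mul_right _ hcoef
    _ = c * (s*m^2)^(k+1) := by ring


/-- for every `t ≥ 1` there exists a constant `c` such that for all `s, m ≥ 1`:
if `G` is `K_{t,t}`-free and `I 1, …, I m` are independent sets each of size at least
`c·(s·m²)^t`, then there is an independent set `J` with `|J ∩ I i| ≥ s` for all `i`. -/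
theorem stmt6 (t : ℕ) (ht : 1 ≤ t) :
    ∃ c : ℕ, ∀ s m : ℕ, 1 ≤ s → 1 ≤ m →
      ∀ (V : Type) [Fintype V] [DecidableEq V] (G : SimpleGraph V), KttFree G t →
        ∀ I : Fin m → Finset V,
          (∀ i, IsIndep G ↑(I i) ∧ c * (s * m ^ 2) ^ t ≤ (I i).card) →
          ∃ J : Finset V, IsIndep G ↑J ∧ ∀ i, s ≤ (J ∩ I i).card := by
  obtain ⟨k, rfl⟩ : ∃ k, t = k + 1 := ⟨t - 1, by omega⟩
  refine ⟨8*(k+1)*(4*(k+1)*(8*(k+1))^(k+1)), ?_⟩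
  set c' : ℕ := 4*(k+1)*(8*(k+1))^(k+1) with hc'def
  have hc'1 : 1 ≤ c' := Nat.one_le_iff_ne_zero.mpr (by positivity)
  have hc'big : 4*k*(8*(k+1))^k ≤ c' := by
    rw [hc'def]
    have : (8*(k+1))^k ≤ (8*(k+1))^(k+1) := Nat.pow_le_pow_right (by omega) (by omega)
    calc 4*k*(8*(k+1))^k ≤ (4*(k+1))*(8*(k+1))^(k+1) :=
      Nat.mul_le_mul (by omega) this
      _ = c' := rfl
  intro s m hs hm V _ _ G hG I hI
  classical
  set c : ℕ := 8*(k+1)*c' with hcdef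
  set N : ℕ := c * (s*m^2)^(k+1) with hNdef
  have hNeq : c * (s * m ^ 2) ^ (k+1) = N := rfl
  -- trim each I i to size exactly N
  have htrim : ∀ i, ∃ J : Finset V, J ⊆ I i ∧ J.card = N := by
    intro i
    obtain ⟨J, h1, h2⟩ := Finset.exists_subset_card_eq ((hI i).2)
    exact ⟨J, h1, h2⟩
  choose I' hI'sub hI'card using htrim
  have hI'ind : ∀ i, IsIndep G ↑(I' i) :=
    fun i => Set.Pairwise.mono (Finset.coe_subset.mpr (hI'sub i)) (hI i).1
  set E : ℕ := c'*s^k*m^(2*k+1) with hEdef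
  have hE1 : 1 ≤ E := by
    have h1 : 1 ≤ s^k := Nat.one_le_pow _ _ (by omega)
    have h2 : 1 ≤ m^(2*k+1) := Nat.one_le_pow _ _ (by omega)
    calc 1 = 1*1*1 := by norm_num
      _ ≤ c'*s^k*m^(2*k+1) := Nat.mul_le_mul (Nat.mul_le_mul hc'1 h1) h2
  set D : ℕ := E + k with hDdef
  -- the unsafe vertices in each I' i are few
  have hunsafe : ∀ i : Fin m,
      4 * ((I' i).filter fun v => ¬ ∀ j : Fin m, ((I' j).filter (G.Adj v)).card < D).card ≤ N := by
    intro i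
    set U := (I' i).filter fun v => ¬ ∀ j : Fin m, ((I' j).filter (G.Adj v)).card < D with hU
    have hsub : U ⊆ Finset.univ.biUnion fun j : Fin m =>
        (I' i).filter fun v => D ≤ ((I' j).filter (G.Adj v)).card := by
      intro v hv
      obtain ⟨hvi, hvb⟩ := Finset.mem_filter.mp hv
      push_neg at hvb
      obtain ⟨j, hj⟩ := hvb
      exact Finset.mem_biUnion.mpr ⟨j, Finset.mem_univ j, Finset.mem_filter.mpr ⟨hvi, hj⟩⟩
    have hcard : U.card ≤ ∑ j : Fin m,
        ((I' i).filter fun v => D ≤ ((I' j).filter (G.Adj v)).card).card :=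
      le_trans (Finset.card_le_card hsub) (Finset.card_biUnion_le)
    have hkey : ∀ j : Fin m,
        ((I' i).filter fun v => D ≤ ((I' j).filter (G.Adj v)).card).card * E^(k+1)
          ≤ k * N^(k+1) := by
      intro j
      have := key_s6 (t := k+1) (by omega) hG (hI'ind i) (hI'ind j) D
      have hDE : D + 1 - (k+1) = E := by omega
      have hk1 : (k+1) - 1 = k := by omega
      rw [hDE, hk1, hI'card j] at this
      exact this
    have hsum : U.card * E^(k+1) ≤ m * (k * N^(k+1)) := by
      calc U.card * E^(k+1)
          ≤ (∑ j : Fin m, ((I' i).filter fun v => D ≤ ((I' j).filter (G.Adj v)).card).card)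
              * E^(k+1) := Nat.mul_le_mul_right _ hcard
        _ = ∑ j : Fin m, ((I' i).filter fun v => D ≤ ((I' j).filter (G.Adj v)).card).card
              * E^(k+1) := by rw [Finset.sum_mul]
        _ ≤ ∑ _j : Fin m, k * N^(k+1) := Finset.sum_le_sum fun j _ => hkey j
        _ = m * (k * N^(k+1)) := by rw [Finset.sum_const, Finset.card_univ, Fintype.card_fin,
              smul_eq_mul]
    have hAF : 4 * (m * (k * N^(k+1))) ≤ N * E^(k+1) := by
      rw [hNdef]
      exact AF1 k s m c c' hs hm (AF1' k c' hc'big)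
    have : (4 * U.card) * E^(k+1) ≤ N * E^(k+1) := by
      calc (4 * U.card) * E^(k+1) = 4 * (U.card * E^(k+1)) := by ring
        _ ≤ 4 * (m * (k * N^(k+1))) := Nat.mul_le_mul_left _ hsum
        _ ≤ N * E^(k+1) := hAF
    exact Nat.le_of_mul_le_mul_right this (Nat.pos_of_ne_zero (by positivity))
  have hAF2 : 4*(m*s*D + s) ≤ N := AF2 k s m c c' hs hm (by rw [hcdef]; nlinarith)
  -- greedy construction
  have greedy : ∀ n : ℕ, n ≤ m → ∃ J : Finset V, IsIndep G ↑J ∧ J.card ≤ n * s ∧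
      (∀ v ∈ J, ∀ j : Fin m, ((I' j).filter (G.Adj v)).card < D) ∧
      ∀ i : Fin m, (i : ℕ) < n → s ≤ (J ∩ I' i).card := by
    intro n
    induction n with
    | zero => exact fun _ => ⟨∅, by simp [IsIndep], by simp, by simp, by simp⟩
    | succ n ih =>
      intro hn1
      obtain ⟨J, hJind, hJcard, hJsafe, hJint⟩ := ih (by omega)
      set i0 : Fin m := ⟨n, by omega⟩ with hi0
      set A := (I' i0).filter fun v =>
        (∀ j : Fin m, ((I' j).filter (G.Adj v)).card < D) ∧ ∀ u ∈ J, ¬ G.Adj u v with hA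
      -- lower bound on A.card
      have hcover : I' i0 ⊆ A ∪ ((I' i0).filter fun v =>
          ¬ ∀ j : Fin m, ((I' j).filter (G.Adj v)).card < D)
          ∪ J.biUnion fun u => (I' i0).filter (G.Adj u) := by
        intro v hv
        by_cases h1 : ∀ j : Fin m, ((I' j).filter (G.Adj v)).card < D
        · by_cases h2 : ∀ u ∈ J, ¬ G.Adj u v
          · exact Finset.mem_union_left _ (Finset.mem_union_left _
              (Finset.mem_filter.mpr ⟨hv, h1, h2⟩))
          · push_neg at h2
            obtain ⟨u, hu, hadj⟩ := h2
            exact Finset.mem_union_right _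
              (Finset.mem_biUnion.mpr ⟨u, hu, Finset.mem_filter.mpr ⟨hv, hadj⟩⟩)
        · exact Finset.mem_union_left _ (Finset.mem_union_right _
            (Finset.mem_filter.mpr ⟨hv, h1⟩))
      have hbig : N ≤ A.card + ((I' i0).filter fun v =>
          ¬ ∀ j : Fin m, ((I' j).filter (G.Adj v)).card < D).card + J.card * D := by
        calc N = (I' i0).card := (hI'card i0).symm
          _ ≤ (A ∪ ((I' i0).filter fun v =>
              ¬ ∀ j : Fin m, ((I' j).filter (G.Adj v)).card < D)
              ∪ J.biUnion fun u => (I' i0).filter (G.Adj u)).card :=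
            Finset.card_le_card hcover
          _ ≤ (A ∪ ((I' i0).filter fun v =>
              ¬ ∀ j : Fin m, ((I' j).filter (G.Adj v)).card < D)).card
              + (J.biUnion fun u => (I' i0).filter (G.Adj u)).card := Finset.card_union_le _ _
          _ ≤ A.card + ((I' i0).filter fun v =>
              ¬ ∀ j : Fin m, ((I' j).filter (G.Adj v)).card < D).card
              + (J.biUnion fun u => (I' i0).filter (G.Adj u)).card := by
            have := Finset.card_union_le A ((I' i0).filter fun v =>
              ¬ ∀ j : Fin m, ((I' j).filter (G.Adj v)).card < D)
            omega
          _ ≤ A.card + ((I' i0).filter fun v =>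
              ¬ ∀ j : Fin m, ((I' j).filter (G.Adj v)).card < D).card + J.card * D := by
            have h1 : (J.biUnion fun u => (I' i0).filter (G.Adj u)).card ≤ J.card * D := by
              calc (J.biUnion fun u => (I' i0).filter (G.Adj u)).card
                  ≤ ∑ u ∈ J, ((I' i0).filter (G.Adj u)).card := Finset.card_biUnion_le
                _ ≤ ∑ _u ∈ J, D := Finset.sum_le_sum fun u hu => le_of_lt (hJsafe u hu i0)
                _ = J.card * D := by rw [Finset.sum_const, smul_eq_mul]
            omega
      have hAs : s ≤ A.card := by
        have h4u := hunsafe i0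
        have hJD : J.card * D ≤ m*s*D := by
          have : J.card ≤ m * s := le_trans hJcard (Nat.mul_le_mul_right s (by omega))
          calc J.card * D ≤ (m*s) * D := Nat.mul_le_mul_right _ this
            _ = m*s*D := rfl
        set u := ((I' i0).filter fun v =>
          ¬ ∀ j : Fin m, ((I' j).filter (G.Adj v)).card < D).card
        set a := A.card
        set jd := J.card * D
        set msd := m*s*D
        omega
      obtain ⟨S, hSsub, hScard⟩ := Finset.exists_subset_card_eq hAs
      have hSI : S ⊆ I' i0 := hSsub.trans (Finset.filter_subset _ _)
      have hSmem : ∀ v ∈ S, (∀ j : Fin m, ((I' j).filter (G.Adj v)).card < D)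
          ∧ ∀ u ∈ J, ¬ G.Adj u v := fun v hv => (Finset.mem_filter.mp (hSsub hv)).2
      refine ⟨J ∪ S, ?_, ?_, ?_, ?_⟩
      · -- independence
        intro x hx y hy hxy
        simp only [Finset.coe_union, Set.mem_union, Finset.mem_coe] at hx hy
        rcases hx with hx | hx <;> rcases hy with hy | hy
        · exact hJind (by exact_mod_cast hx) (by exact_mod_cast hy) hxy
        · exact fun h => (hSmem y hy).2 x hx h
        · exact fun h => (hSmem x hx).2 y hy (h.symm)
        · exact hI'ind i0 (by exact_mod_cast hSI hx) (by exact_mod_cast hSI hy) hxy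
      · calc (J ∪ S).card ≤ J.card + S.card := Finset.card_union_le _ _
          _ ≤ n * s + s := by omega
          _ = (n+1) * s := by ring
      · intro v hv
        rcases Finset.mem_union.mp hv with hv | hv
        · exact hJsafe v hv
        · exact (hSmem v hv).1
      · intro i hi
        rcases Nat.lt_or_ge (i : ℕ) n with h | h
        · calc s ≤ (J ∩ I' i).card := hJint i h
            _ ≤ ((J ∪ S) ∩ I' i).card := Finset.card_le_card
              (Finset.inter_subset_inter Finset.subset_union_left le_rfl)
        · have heq : (i : ℕ) = n := by omega
          have heq2 : i = i0 := Fin.ext (by rw [heq])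
          rw [heq2]
          have hsub2 : S ⊆ (J ∪ S) ∩ I' i0 := Finset.subset_inter Finset.subset_union_right hSI
          calc s = S.card := hScard.symm
            _ ≤ ((J ∪ S) ∩ I' i0).card := Finset.card_le_card hsub2
  obtain ⟨J, hJind, -, -, hJint⟩ := greedy m le_rfl
  refine ⟨J, hJind, fun i => ?_⟩
  calc s ≤ (J ∩ I' i).card := hJint i i.2
    _ ≤ (J ∩ I i).card := Finset.card_le_card
      (Finset.inter_subset_inter le_rfl (hI'sub i))
end
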